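/- arXiv:1707.06877 — 11 statements merged into one kernel-verified Lean document; each statement's English description precedes it below -/
import Mathlib

section
/- Let q be a prime power. Every element of F_q can be written as u + 1/u for some u in the algebraic closure of F_q satisfying u^{q-1} = 1 or u^{q+1} = 1. That is, F_q = ⟨μ_{q-1}⟩ ∪ ⟨μ_{q+1}⟩, where μ_d = {a in the algebraic closure : a^d = 1} and ⟨μ_d⟩ = {a + 1/a : a ∈ μ_d}. -/
open Polynomial

theorem stmt1 (F : Type*) [Field F] [Fintype F] :
    Set.range (algebraMap F (AlgebraicClosure F)) =
      {x : AlgebraicClosure F |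
        ∃ u : AlgebraicClosure F, u ^ (Fintype.card F - 1) = 1 ∧ x = u + u⁻¹} ∪
      {x : AlgebraicClosure F |
        ∃ u : AlgebraicClosure F, u ^ (Fintype.card F + 1) = 1 ∧ x = u + u⁻¹} := by
  set q := Fintype.card F with hq
  have hq1 : 1 < q := Fintype.one_lt_card
  set p := ringChar F with hpdef
  haveI hfp : Fact p.Prime := ⟨CharP.char_is_prime F p⟩
  obtain ⟨n, hprime, hcard0⟩ := FiniteField.card F p
  have hcard : q = p ^ (n : ℕ) := hcard0
  haveI : CharP (AlgebraicClosure F) p :=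
    charP_of_injective_algebraMap (algebraMap F (AlgebraicClosure F)).injective p
  classical
  -- Frobenius is additive
  have hadd : ∀ a b : AlgebraicClosure F, (a + b) ^ q = a ^ q + b ^ q := by
    intro a b
    rw [hcard]
    exact add_pow_char_pow a b p n
  -- elements of the image are fixed by x ↦ x^q
  have hfix : ∀ a : F, (algebraMap F (AlgebraicClosure F) a) ^ q = algebraMap F (AlgebraicClosure F) a := by
    intro a
    rw [← map_pow, FiniteField.pow_card]
  -- converse: fixed points are in the image
  have hfix' : ∀ x : AlgebraicClosure F, x ^ q = x → x ∈ Set.range (algebraMap F (AlgebraicClosure F)) := by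
    intro x hx
    by_contra hxr
    have hne : (X ^ q - X : (AlgebraicClosure F)[X]) ≠ 0 := by
      rw [hcard]
      exact FiniteField.X_pow_card_pow_sub_X_ne_zero _ (by exact_mod_cast n.ne_zero) hprime.one_lt
    have hdeg : (X ^ q - X : (AlgebraicClosure F)[X]).natDegree = q := by
      rw [hcard]
      exact FiniteField.X_pow_card_pow_sub_X_natDegree_eq _ (by exact_mod_cast n.ne_zero) hprime.one_lt
    have hroot : ∀ y : AlgebraicClosure F, y ^ q = y →
        y ∈ (X ^ q - X : (AlgebraicClosure F)[X]).roots := by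
      intro y hy
      rw [mem_roots hne]
      simp [IsRoot, hy]
    -- the finset of roots has card ≤ q, but contains x and the q images
    set s : Finset (AlgebraicClosure F) :=
      insert x (Finset.univ.image (algebraMap F (AlgebraicClosure F))) with hs
    have hsub : s ⊆ (X ^ q - X : (AlgebraicClosure F)[X]).roots.toFinset := by
      intro y hy
      rw [Multiset.mem_toFinset]
      rw [hs, Finset.mem_insert] at hy
      rcases hy with rfl | hy
      · exact hroot y hx
      · obtain ⟨a, _, rfl⟩ := Finset.mem_image.mp hy
        exact hroot _ (hfix a)
    have hcard_s : s.card = q + 1 := by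
      rw [hs, Finset.card_insert_of_notMem, Finset.card_image_of_injective _
        (algebraMap F (AlgebraicClosure F)).injective, Finset.card_univ]
      intro hmem
      obtain ⟨a, _, ha⟩ := Finset.mem_image.mp hmem
      exact hxr ⟨a, ha⟩
    have hle : s.card ≤ q := by
      calc s.card ≤ (X ^ q - X : (AlgebraicClosure F)[X]).roots.toFinset.card :=
            Finset.card_le_card hsub
        _ ≤ Multiset.card (X ^ q - X : (AlgebraicClosure F)[X]).roots :=
            Multiset.toFinset_card_le _
        _ ≤ (X ^ q - X : (AlgebraicClosure F)[X]).natDegree := card_roots' _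
        _ = q := hdeg
    omega
  ext x
  constructor
  · rintro ⟨a, rfl⟩
    set x := algebraMap F (AlgebraicClosure F) a with hx
    -- find a root u of Y^2 - x Y + 1
    have hdeg2 : (X ^ 2 - C x * X + 1 : (AlgebraicClosure F)[X]).degree = 2 := by
      compute_degree!
    obtain ⟨u, hu⟩ := IsAlgClosed.exists_root (X ^ 2 - C x * X + 1 : (AlgebraicClosure F)[X])
      (by rw [hdeg2]; norm_num)
    have hu' : u ^ 2 - x * u + 1 = 0 := by simpa [IsRoot] using hu
    have hu0 : u ≠ 0 := by
      rintro rfl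
      simp at hu'
    have hsum : u + u⁻¹ = x := by
      field_simp
      linear_combination hu'
    -- u^q is also a root of the quadratic, hence equals u or u⁻¹
    have hxq : x ^ q = x := hfix a
    have hvq : (u ^ q) ^ 2 - x * u ^ q + 1 = 0 := by
      have : (u ^ 2 - x * u + 1) ^ q = 0 := by rw [hu']; simp [zero_pow (by omega : q ≠ 0)]
      have hneg : ∀ y : AlgebraicClosure F, (-y) ^ q = -(y ^ q) := by
        intro y
        have h0 := hadd (-y) y
        rw [neg_add_cancel, zero_pow (by omega : q ≠ 0)] at h0
        exact eq_neg_of_add_eq_zero_left h0.symm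
      have h2 : (u ^ 2 - x * u + 1) ^ q = (u ^ q) ^ 2 - x ^ q * u ^ q + 1 := by
        have e1 : u ^ 2 - x * u + 1 = u ^ 2 + (-(x * u) + 1) := by ring
        rw [e1, hadd, hadd, hneg, mul_pow, one_pow, ← pow_mul, ← pow_mul,
          mul_comm 2 q, mul_comm q 2]
        ring
      rw [h2, hxq] at this
      exact this
    -- factor: (v - u)(v - u⁻¹) = 0 where v = u^q
    have hfac : (u ^ q - u) * (u * u ^ q - 1) = 0 := by
      linear_combination u * hvq - (u ^ q) * hu'
    rcases mul_eq_zero.mp hfac with h | h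
    · left
      refine ⟨u, ?_, hsum.symm⟩
      have h1 : u ^ (q - 1) * u = u := by
        rw [← pow_succ, Nat.sub_add_cancel (by omega)]
        exact sub_eq_zero.mp h
      exact mul_right_cancel₀ hu0 (by rw [h1, one_mul])
    · right
      refine ⟨u, ?_, hsum.symm⟩
      rw [pow_succ, mul_comm]
      exact sub_eq_zero.mp h
  · rintro (⟨u, hu, rfl⟩ | ⟨u, hu, rfl⟩)
    · have hu0 : u ≠ 0 := by rintro rfl; rw [zero_pow (by omega : q - 1 ≠ 0)] at hu; simp at hu
      have huq : u ^ q = u := by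
        calc u ^ q = u ^ (q - 1) * u := by rw [← pow_succ, Nat.sub_add_cancel (by omega)]
          _ = u := by rw [hu, one_mul]
      apply hfix'
      rw [hadd, huq, inv_pow, huq]
    · have hu0 : u ≠ 0 := by rintro rfl; rw [zero_pow (by omega : q + 1 ≠ 0)] at hu; simp at hu
      have huq : u ^ q = u⁻¹ := by
        field_simp
        rw [← pow_succ]; exact hu
      apply hfix'
      rw [hadd, huq, inv_pow, huq, inv_inv, add_comm]
end

section
/- Let q be an odd prime power. Then ⟨μ_{q-1}⟩ ∩ ⟨μ_{q+1}⟩ = {2, -2}, where μ_d is the group of d-th roots of unity in the algebraic closure of F_q and ⟨μ_d⟩ = {a + 1/a : a ∈ μ_d}. -/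
/-- `⟨μ_d⟩ = {u + 1/u : u^d = 1}` as a subset of a field `K`. -/
def delta (K : Type*) [Field K] (d : ℕ) : Set K :=
  {x : K | ∃ u : K, u ^ d = 1 ∧ x = u + u⁻¹}

theorem stmt2 (F : Type*) [Field F] [Fintype F] (hq : Odd (Fintype.card F)) :
    delta (AlgebraicClosure F) (Fintype.card F - 1) ∩
      delta (AlgebraicClosure F) (Fintype.card F + 1) =
    {(2 : AlgebraicClosure F), (-2 : AlgebraicClosure F)} := by
  set q := Fintype.card F with hqdef
  have hq1 : 1 < q := Fintype.one_lt_card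
  have hqm : Even (q - 1) := Nat.Odd.sub_odd hq odd_one
  have hqp : Even (q + 1) := hq.add_one
  ext x
  simp only [Set.mem_inter_iff, Set.mem_insert_iff, Set.mem_singleton_iff, delta,
    Set.mem_setOf_eq]
  constructor
  · rintro ⟨⟨u, hu, rfl⟩, ⟨v, hv, hvx⟩⟩
    have hu0 : u ≠ 0 := by
      rintro rfl
      rw [zero_pow (by omega : q - 1 ≠ 0)] at hu
      exact one_ne_zero hu.symm
    have hv0 : v ≠ 0 := by
      rintro rfl
      rw [zero_pow (by omega : q + 1 ≠ 0)] at hv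
      exact one_ne_zero hv.symm
    have h1 : u * u⁻¹ = 1 := mul_inv_cancel₀ hu0
    have h2 : v * v⁻¹ = 1 := mul_inv_cancel₀ hv0
    have h : (v - u) * (v - u⁻¹) = 0 := by
      calc (v - u) * (v - u⁻¹) = v * v - v * (u + u⁻¹) + u * u⁻¹ := by ring
        _ = v * v - v * (v + v⁻¹) + 1 := by rw [← hvx, h1]
        _ = -(v * v⁻¹) + 1 := by ring
        _ = 0 := by rw [h2]; ring
    have key : v = u ∨ v = u⁻¹ := by
      rcases mul_eq_zero.1 h with h' | h'
      · exact Or.inl (sub_eq_zero.1 h')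
      · exact Or.inr (sub_eq_zero.1 h')
    have hv1 : v ^ (q - 1) = 1 := by
      rcases key with rfl | rfl
      · exact hu
      · rw [inv_pow, hu, inv_one]
    have hv2 : v ^ 2 = 1 := by
      have hsplit : v ^ (q + 1) = v ^ (q - 1) * v ^ 2 := by
        rw [← pow_add]; congr 1; omega
      rw [hv, hv1, one_mul] at hsplit
      exact hsplit.symm
    have hfac : (v - 1) * (v + 1) = 0 := by
      linear_combination hv2
    rcases mul_eq_zero.1 hfac with h' | h'
    · have : v = 1 := by linear_combination h'
      rw [hvx, this]
      left; norm_num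
    · have : v = -1 := by linear_combination h'
      rw [hvx, this]
      right; norm_num
  · rintro (rfl | rfl)
    · exact ⟨⟨1, one_pow _, by norm_num⟩, ⟨1, one_pow _, by norm_num⟩⟩
    · exact ⟨⟨-1, hqm.neg_one_pow, by norm_num⟩, ⟨-1, hqp.neg_one_pow, by norm_num⟩⟩
end

section
/- Let d be a positive integer not divisible by the characteristic p, let k ≥ 1, and let g = gcd(d, k). Then the Dickson polynomial D_k maps ⟨μ_d⟩ onto ⟨μ_{d/g}⟩, where ⟨μ_d⟩ = {a + 1/a : a^d = 1} in the algebraic closure of F_p. In particular, D_k permutes ⟨μ_d⟩ if and only if gcd(d, k) = 1. -/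
open Polynomial

lemma add_inv_eq_cases {K : Type*} [Field K] {u v : K} (hu : u ≠ 0) (hv : v ≠ 0)
    (h : u + u⁻¹ = v + v⁻¹) : u = v ∨ u = v⁻¹ := by
  have key : (u - v) * (u * v - 1) = 0 := by
    field_simp at h
    linear_combination h
  rcases mul_eq_zero.mp key with h1 | h1
  · exact Or.inl (sub_eq_zero.mp h1)
  · refine Or.inr (eq_inv_of_mul_eq_one_right ?_)
    have h2 : u * v = 1 := by
      have := sub_eq_zero.mp h1; linear_combination this
    linear_combination h2

lemma pow_surj_lemma {K : Type*} [Field K] {d k : ℕ} (hd : 0 < d) (hk : 1 ≤ k)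
    {ζ : K} (hζ : IsPrimitiveRoot ζ d) {w : K} (hw : w ^ (d / Nat.gcd d k) = 1) :
    ∃ u : K, u ^ d = 1 ∧ u ^ k = w := by
  haveI : NeZero d := ⟨hd.ne'⟩
  set g := Nat.gcd d k with hg
  have hgd : g ∣ d := Nat.gcd_dvd_left d k
  have hgpos : 0 < g := Nat.gcd_pos_of_pos_left _ hd
  have hdg : d / g * g = d := Nat.div_mul_cancel hgd
  have hdgpos : 0 < d / g := Nat.div_pos (Nat.le_of_dvd hd hgd) hgpos
  have hwd : w ^ d = 1 := by rw [← hdg, pow_mul, hw, one_pow]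
  obtain ⟨c, hcd, hcw⟩ := hζ.eq_pow_of_pow_eq_one hwd
  have hζ0 : ζ ≠ 0 := fun h => by
    simpa [h, zero_pow hd.ne'] using hζ.pow_eq_one
  -- g ∣ c
  have hdvd : d ∣ c * (d / g) := by
    rw [← hζ.pow_eq_one_iff_dvd, pow_mul, hcw, hw]
  have hgdg : g * (d / g) = d := Nat.mul_div_cancel' hgd
  have hgc : g ∣ c := by
    have h3 : g * (d / g) ∣ c * (d / g) := by rwa [hgdg]
    exact (mul_dvd_mul_iff_right hdgpos.ne').mp h3
  obtain ⟨c', hc'⟩ := hgc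
  -- Bezout
  set A := Nat.gcdA d k
  set B := Nat.gcdB d k
  have hbez : (g : ℤ) = d * A + k * B := Nat.gcd_eq_gcd_ab d k
  set e : ℤ := (c' : ℤ) * B with he
  refine ⟨ζ ^ e, ?_, ?_⟩
  · rw [← zpow_natCast (ζ ^ e), ← zpow_mul, mul_comm, zpow_mul, zpow_natCast,
      hζ.pow_eq_one, one_zpow]
  · rw [← zpow_natCast (ζ ^ e), ← zpow_mul, ← hcw, ← zpow_natCast ζ c]
    have hdiv : (d : ℤ) ∣ e * k - c := by
      refine ⟨-((c' : ℤ) * A), ?_⟩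
      have hc : (c : ℤ) = g * c' := by exact_mod_cast hc'
      rw [he, hc]
      linear_combination (-(c' : ℤ)) * hbez
    have h1 : ζ ^ (e * k - (c : ℤ)) = 1 := (hζ.zpow_eq_one_iff_dvd _).mpr hdiv
    rw [zpow_sub₀ hζ0, div_eq_one_iff_eq (zpow_ne_zero _ hζ0)] at h1
    exact h1

theorem stmt3 (p : ℕ) [Fact p.Prime] (d k : ℕ) (hd : 0 < d) (hpd : ¬ p ∣ d) (hk : 1 ≤ k) :
    ((fun x => (dickson 1 (1 : AlgebraicClosure (ZMod p)) k).eval x) ''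
        delta (AlgebraicClosure (ZMod p)) d =
      delta (AlgebraicClosure (ZMod p)) (d / Nat.gcd d k)) ∧
    (Set.BijOn (fun x => (dickson 1 (1 : AlgebraicClosure (ZMod p)) k).eval x)
        (delta (AlgebraicClosure (ZMod p)) d) (delta (AlgebraicClosure (ZMod p)) d) ↔
      Nat.gcd d k = 1) := by
  classical
  set K := AlgebraicClosure (ZMod p)
  haveI : NeZero d := ⟨hd.ne'⟩
  haveI : NeZero (d : K) :=
    ⟨fun h => hpd ((CharP.cast_eq_zero_iff K p d).mp h)⟩
  obtain ⟨ζ, hζ⟩ := HasEnoughRootsOfUnity.exists_primitiveRoot K d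
  set g := Nat.gcd d k with hg
  have hgd : g ∣ d := Nat.gcd_dvd_left d k
  have hgk : g ∣ k := Nat.gcd_dvd_right d k
  have hgpos : 0 < g := Nat.gcd_pos_of_pos_left _ hd
  obtain ⟨k', hk'⟩ := hgk
  have hdg : d / g * g = d := Nat.div_mul_cancel hgd
  -- forward direction of the power map
  have hfwd : ∀ u : K, u ^ d = 1 → (u ^ k) ^ (d / g) = 1 := by
    intro u hu
    rw [← pow_mul]
    have hgdg : g * (d / g) = d := Nat.mul_div_cancel' hgd
    have heq : k * (d / g) = d * k' := by
      calc k * (d / g) = k' * (g * (d / g)) := by rw [hk']; ring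
      _ = d * k' := by rw [hgdg]; ring
    rw [heq, pow_mul, hu, one_pow]
  have hne : ∀ u : K, u ^ d = 1 → u ≠ 0 := fun u hu h => by
    simpa [h, zero_pow hd.ne'] using hu
  -- part 1: image equality
  have h1 : (fun x => (dickson 1 (1 : K) k).eval x) '' delta K d = delta K (d / g) := by
    ext x
    constructor
    · rintro ⟨y, ⟨u, hu, rfl⟩, rfl⟩
      have hu0 : u ≠ 0 := hne u hu
      refine ⟨u ^ k, hfwd u hu, ?_⟩
      show (dickson 1 (1 : K) k).eval (u + u⁻¹) = _
      rw [dickson_one_one_eval_add_inv u u⁻¹ (mul_inv_cancel₀ hu0), inv_pow]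
    · rintro ⟨w, hw, rfl⟩
      obtain ⟨u, hud, huk⟩ := pow_surj_lemma hd hk hζ hw
      have hu0 : u ≠ 0 := hne u hud
      refine ⟨u + u⁻¹, ⟨u, hud, rfl⟩, ?_⟩
      show (dickson 1 (1 : K) k).eval (u + u⁻¹) = _
      rw [dickson_one_one_eval_add_inv u u⁻¹ (mul_inv_cancel₀ hu0), inv_pow, huk]
  refine ⟨h1, ?_⟩
  -- finiteness of delta
  have hroots : {u : K | u ^ d = 1}.Finite := by
    refine Set.Finite.subset (Polynomial.nthRoots d (1 : K)).toFinset.finite_toSet ?_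
    intro u hu
    simp only [Multiset.mem_toFinset, Finset.mem_coe, Polynomial.mem_nthRoots hd]
    exact hu
  have hfin : (delta K d).Finite := by
    refine Set.Finite.subset (hroots.image (fun u => u + u⁻¹)) ?_
    rintro x ⟨u, hu, rfl⟩
    exact ⟨u, hu, rfl⟩
  constructor
  · -- bijective → gcd = 1
    intro hbij
    by_contra hg1
    have hglt : 1 < g := by omega
    have hdglt : d / g < d := Nat.div_lt_self hd (by omega)
    have heq : delta K (d / g) = delta K d := by rw [← h1, hbij.image_eq]
    have hζmem : ζ + ζ⁻¹ ∈ delta K (d / g) := by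
      rw [heq]; exact ⟨ζ, hζ.pow_eq_one, rfl⟩
    obtain ⟨u, hu, huζ⟩ := hζmem
    have hdgpos : 0 < d / g := Nat.div_pos (Nat.le_of_dvd hd hgd) hgpos
    have hu0 : u ≠ 0 := hne u (by rw [← hdg, pow_mul, hu, one_pow])
    have hζ0 : ζ ≠ 0 := hne ζ hζ.pow_eq_one
    have hζdg : ζ ^ (d / g) = 1 := by
      rcases add_inv_eq_cases hζ0 hu0 huζ with h | h
      · rw [h]; exact hu
      · rw [h, inv_pow, hu, inv_one]
    have := Nat.le_of_dvd hdgpos ((hζ.pow_eq_one_iff_dvd _).mp hζdg)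
    omega
  · -- gcd = 1 → bijective
    intro hg1
    have himg : (fun x => (dickson 1 (1 : K) k).eval x) '' delta K d = delta K d := by
      rw [h1, hg1, Nat.div_one]
    have hmaps : Set.MapsTo (fun x => (dickson 1 (1 : K) k).eval x) (delta K d) (delta K d) :=
      Set.mapsTo_iff_image_subset.mpr himg.le
    have hsurj : Set.SurjOn (fun x => (dickson 1 (1 : K) k).eval x) (delta K d) (delta K d) :=
      himg.ge
    exact (hfin.surjOn_iff_bijOn_of_mapsTo hmaps).mp hsurj
end

section
/- Let q be a prime power, k ≥ 1, r = gcd(k, q−1), and s = gcd(k, q+1). Then the image of F_q under the Dickson polynomial D_k equals ⟨μ_{(q−1)/r}⟩ ∪ ⟨μ_{(q+1)/s}⟩. -/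
open Polynomial

section aux

variable {K : Type*} [Field K]

lemma aux_eq_or_inv {a b : K} (ha : a ≠ 0) (hb : b ≠ 0)
    (h : a + a⁻¹ = b + b⁻¹) : a = b ∨ a = b⁻¹ := by
  have key : (a - b) * (a - b⁻¹) = 0 := by
    have expand : (a - b) * (a - b⁻¹) = a ^ 2 + b * b⁻¹ - a * (b + b⁻¹) := by ring
    rw [expand, mul_inv_cancel₀ hb, ← h, mul_add, mul_inv_cancel₀ ha]
    ring
  rcases mul_eq_zero.mp key with h' | h'
  · exact Or.inl (sub_eq_zero.mp h')
  · exact Or.inr (sub_eq_zero.mp h')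

lemma aux_pow_gcd_surj [IsAlgClosed K] {n k : ℕ} (hn : n ≠ 0) (hn' : (n : K) ≠ 0)
    {v : K} (hv : v ^ (n / Nat.gcd k n) = 1) : ∃ u : K, u ^ n = 1 ∧ u ^ k = v := by
  obtain ⟨ζ, hζ⟩ : ∃ ζ : K, IsPrimitiveRoot ζ n := by
    haveI : NeZero (n : K) := ⟨hn'⟩
    obtain ⟨z, hz⟩ := IsAlgClosed.exists_root _ (degree_cyclotomic_pos n K (Nat.pos_of_ne_zero hn)).ne.symm
    exact ⟨z, isRoot_cyclotomic_iff.mp hz⟩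
  set r := Nat.gcd k n with hr_def
  have hr_pos : 0 < r := Nat.gcd_pos_of_pos_right k (Nat.pos_of_ne_zero hn)
  have hr_dvd_n : r ∣ n := Nat.gcd_dvd_right k n
  have hvn : v ^ n = 1 := by
    rw [← Nat.div_mul_cancel hr_dvd_n, pow_mul, hv, one_pow]
  haveI : NeZero n := ⟨hn⟩
  obtain ⟨t, _, ht⟩ := hζ.eq_pow_of_pow_eq_one hvn
  have hr_dvd_t : r ∣ t := by
    have h1 : ζ ^ (t * (n / r)) = 1 := by rw [pow_mul, ht, hv]
    have h2 : n ∣ t * (n / r) := (hζ.pow_eq_one_iff_dvd _).mp h1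
    have hnr_pos : 0 < n / r := Nat.div_pos (Nat.le_of_dvd (Nat.pos_of_ne_zero hn) hr_dvd_n) hr_pos
    have h3 : r * (n / r) ∣ t * (n / r) := by rwa [Nat.mul_div_cancel' hr_dvd_n]
    exact (Nat.mul_dvd_mul_iff_right hnr_pos).mp h3
  obtain ⟨t', ht'⟩ := hr_dvd_t
  have hζ0 : ζ ≠ 0 := hζ.ne_zero hn
  set Z : Kˣ := Units.mk0 ζ hζ0 with hZ_def
  have hZn : Z ^ n = 1 := by
    ext
    simpa [hZ_def] using hζ.pow_eq_one
  have hZnz : Z ^ (n : ℤ) = 1 := by rw [zpow_natCast, hZn]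
  set a : ℤ := Nat.gcdA k n
  set b : ℤ := Nat.gcdB k n
  have hbez : (r : ℤ) = k * a + n * b := Nat.gcd_eq_gcd_ab k n
  set U : Kˣ := Z ^ (a * (t' : ℤ)) with hU_def
  have hUn : U ^ n = 1 := by
    have : U ^ (n : ℤ) = 1 := by
      rw [hU_def, ← zpow_mul, mul_comm, zpow_mul, hZnz, one_zpow]
    rwa [zpow_natCast] at this
  have hUk : U ^ k = Z ^ (t : ℤ) := by
    have hexp : a * (t' : ℤ) * k = (t : ℤ) + n * (-(b * t')) := by
      have ht'' : (t : ℤ) = (r : ℤ) * (t' : ℤ) := by exact_mod_cast ht'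
      rw [ht'', hbez]; ring
    calc U ^ k = U ^ (k : ℤ) := by rw [zpow_natCast]
      _ = Z ^ (a * (t' : ℤ) * k) := by rw [hU_def, ← zpow_mul]
      _ = Z ^ ((t : ℤ) + n * (-(b * t'))) := by rw [hexp]
      _ = Z ^ (t : ℤ) * (Z ^ (n : ℤ)) ^ (-(b * t')) := by rw [zpow_add, zpow_mul]
      _ = Z ^ (t : ℤ) := by rw [hZnz, one_zpow, mul_one]
  refine ⟨(U : K), ?_, ?_⟩
  · rw [← Units.val_pow_eq_pow_val, hUn, Units.val_one]
  · rw [← Units.val_pow_eq_pow_val, hUk, zpow_natCast, Units.val_pow_eq_pow_val]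
    simpa [hZ_def] using ht

lemma aux_mem_range {F : Type*} [Field F] [Fintype F] [Algebra F K] {u : K}
    (hu : u ^ (Fintype.card F) = u) : ∃ f : F, algebraMap F K f = u := by
  classical
  set q := Fintype.card F with hq_def
  have hq : 1 < q := Fintype.one_lt_card
  set P : K[X] := X ^ q - X with hP_def
  have hPc : P.coeff q = 1 := by
    simp [hP_def, coeff_X_pow, coeff_X, hq.ne', hq.ne]
  have hP : P ≠ 0 := fun h => by simp [h] at hPc
  have hroots_card : P.roots.toFinset.card ≤ q := by
    refine le_trans (Multiset.toFinset_card_le _) (le_trans (Polynomial.card_roots' P) ?_)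
    refine le_trans (natDegree_sub_le _ _) ?_
    simp [Nat.one_le_iff_ne_zero.mpr (by omega : q ≠ 0)]
  set S : Finset K := Finset.univ.image (algebraMap F K) with hS_def
  have hS_card : S.card = q := by
    rw [hS_def, Finset.card_image_of_injective _ (algebraMap F K).injective, Finset.card_univ]
  have hS_sub : S ⊆ P.roots.toFinset := by
    intro x hx
    obtain ⟨f, _, rfl⟩ := Finset.mem_image.mp hx
    rw [Multiset.mem_toFinset, mem_roots hP]
    show P.eval _ = 0
    simp only [hP_def, eval_sub, eval_pow, eval_X]
    rw [← map_pow, hq_def, FiniteField.pow_card, sub_self]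
  have heq : S = P.roots.toFinset :=
    Finset.eq_of_subset_of_card_le hS_sub (hroots_card.trans hS_card.ge)
  have hu_mem : u ∈ P.roots.toFinset := by
    rw [Multiset.mem_toFinset, mem_roots hP]
    show P.eval u = 0
    simp [hP_def, hu]
  rw [← heq] at hu_mem
  obtain ⟨f, _, hf⟩ := Finset.mem_image.mp hu_mem
  exact ⟨f, hf⟩

end aux

theorem stmt4 (F : Type*) [Field F] [Fintype F] (k : ℕ) (hk : 1 ≤ k) :
    Set.range (fun x : F => algebraMap F (AlgebraicClosure F) ((dickson 1 (1 : F) k).eval x)) =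
      delta (AlgebraicClosure F)
          ((Fintype.card F - 1) / Nat.gcd k (Fintype.card F - 1)) ∪
      delta (AlgebraicClosure F)
          ((Fintype.card F + 1) / Nat.gcd k (Fintype.card F + 1)) := by
  set K := AlgebraicClosure F with hK_def
  set q := Fintype.card F with hq_def
  have hq2 : 1 < q := Fintype.one_lt_card
  obtain ⟨p, hp_char⟩ := CharP.exists F
  haveI : CharP F p := hp_char
  obtain ⟨m, hp_prime, hq_eq⟩ := FiniteField.card F p
  haveI : Fact p.Prime := ⟨hp_prime⟩
  haveI hKchar : CharP K p := charP_of_injective_algebraMap (algebraMap F K).injective p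
  have hp_dvd_q : p ∣ q := by rw [hq_def, hq_eq]; exact dvd_pow_self p m.pos.ne'
  -- frobenius is additive
  have frob : ∀ a b : K, (a + b) ^ q = a ^ q + b ^ q := by
    intro a b
    rw [hq_def, hq_eq]
    exact add_pow_char_pow a b p m
  -- cast nonzero facts
  have hn1 : q - 1 ≠ 0 := by omega
  have hn2 : q + 1 ≠ 0 := by omega
  have hn1K : ((q - 1 : ℕ) : K) ≠ 0 := by
    intro h
    have hd : p ∣ q - 1 := (CharP.cast_eq_zero_iff K p _).mp h
    have : p ∣ q - (q - 1) := Nat.dvd_sub hp_dvd_q hd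
    rw [show q - (q - 1) = 1 by omega] at this
    exact hp_prime.one_lt.ne' (Nat.dvd_one.mp this)
  have hn2K : ((q + 1 : ℕ) : K) ≠ 0 := by
    intro h
    have hd : p ∣ q + 1 := (CharP.cast_eq_zero_iff K p _).mp h
    have : p ∣ (q + 1) - q := Nat.dvd_sub hd hp_dvd_q
    rw [show (q + 1) - q = 1 by omega] at this
    exact hp_prime.one_lt.ne' (Nat.dvd_one.mp this)
  -- evaluation of dickson via an element u with x = u + u⁻¹
  have dickson_eval : ∀ (f : F) (u : K), u ≠ 0 → algebraMap F K f = u + u⁻¹ →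
      algebraMap F K ((dickson 1 (1 : F) k).eval f) = u ^ k + (u ^ k)⁻¹ := by
    intro f u hu0 hfu
    have h1 : algebraMap F K ((dickson 1 (1 : F) k).eval f)
        = ((dickson 1 (1 : F) k).map (algebraMap F K)).eval (algebraMap F K f) := by
      rw [eval_map, eval₂_at_apply]
    rw [h1, map_dickson, map_one, hfu,
      dickson_one_one_eval_add_inv u u⁻¹ (mul_inv_cancel₀ hu0), inv_pow]
  ext x
  constructor
  · rintro ⟨f, rfl⟩
    set x0 : K := algebraMap F K f with hx0_def
    have hx0q : x0 ^ q = x0 := by rw [hx0_def, ← map_pow, hq_def, FiniteField.pow_card]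
    -- find u with x0 = u + u⁻¹
    obtain ⟨u, hu⟩ : ∃ u : K, (C 1 * X ^ 2 + C (-x0) * X + C 1).eval u = 0 := by
      have hdeg : (C (1:K) * X ^ 2 + C (-x0) * X + C 1).degree ≠ 0 := by
        rw [Polynomial.degree_quadratic one_ne_zero]; decide
      obtain ⟨u, hu⟩ := IsAlgClosed.exists_root _ hdeg
      exact ⟨u, hu⟩
    simp only [eval_add, eval_mul, eval_pow, eval_C, eval_X, one_mul] at hu
    have hu0 : u ≠ 0 := by
      intro h; rw [h] at hu; simp at hu
    have hx0u : x0 = u + u⁻¹ := by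
      apply mul_right_cancel₀ hu0
      rw [add_mul, inv_mul_cancel₀ hu0]
      linear_combination -hu
    have hquad : u ^ q + (u ^ q)⁻¹ = u + u⁻¹ := by
      have : x0 ^ q = u ^ q + (u ^ q)⁻¹ := by
        rw [hx0u, frob, inv_pow]
      rw [← this, hx0q, hx0u]
    have huq0 : u ^ q ≠ 0 := pow_ne_zero _ hu0
    rcases aux_eq_or_inv huq0 hu0 hquad with hcase | hcase
    · -- u^(q-1) = 1
      left
      have huq1 : u ^ (q - 1) = 1 := by
        have h1 : u ^ (q - 1) * u = u := by
          rw [← pow_succ, show q - 1 + 1 = q by omega, hcase]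
        exact mul_right_cancel₀ hu0 (h1.trans (one_mul u).symm)
      set r := Nat.gcd k (q - 1) with hr_def
      obtain ⟨c, hc⟩ := Nat.gcd_dvd_left k (q - 1)
      obtain ⟨e, he⟩ := Nat.gcd_dvd_right k (q - 1)
      rw [← hr_def] at hc he
      have hr_pos : 0 < r := Nat.gcd_pos_of_pos_left _ hk
      have hde : (q - 1) / r = e := by rw [he, Nat.mul_div_cancel_left _ hr_pos]
      refine ⟨u ^ k, ?_, ?_⟩
      · rw [hde, ← pow_mul, show k * e = (q - 1) * c by rw [hc, he]; ring, pow_mul, huq1, one_pow]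
      · exact dickson_eval f u hu0 hx0u
    · -- u^(q+1) = 1
      right
      have huq1 : u ^ (q + 1) = 1 := by
        rw [pow_succ, hcase, inv_mul_cancel₀ hu0]
      set r := Nat.gcd k (q + 1) with hr_def
      obtain ⟨c, hc⟩ := Nat.gcd_dvd_left k (q + 1)
      obtain ⟨e, he⟩ := Nat.gcd_dvd_right k (q + 1)
      rw [← hr_def] at hc he
      have hr_pos : 0 < r := Nat.gcd_pos_of_pos_left _ hk
      have hde : (q + 1) / r = e := by rw [he, Nat.mul_div_cancel_left _ hr_pos]
      refine ⟨u ^ k, ?_, ?_⟩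
      · rw [hde, ← pow_mul, show k * e = (q + 1) * c by rw [hc, he]; ring, pow_mul, huq1, one_pow]
      · exact dickson_eval f u hu0 hx0u
  · rintro (⟨v, hv, rfl⟩ | ⟨v, hv, rfl⟩)
    · -- v ∈ μ_{(q-1)/r}
      obtain ⟨u, hun, huk⟩ := aux_pow_gcd_surj (K := K) hn1 hn1K hv
      have hu0 : u ≠ 0 := by
        intro h
        rw [h, zero_pow hn1] at hun
        exact zero_ne_one hun
      have huq : u ^ q = u := by
        calc u ^ q = u ^ (q - 1) * u := by rw [← pow_succ, show q - 1 + 1 = q by omega]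
        _ = u := by rw [hun, one_mul]
      have hx0q : (u + u⁻¹) ^ q = u + u⁻¹ := by
        rw [frob, inv_pow, huq]
      obtain ⟨f, hf⟩ := aux_mem_range (K := K) hx0q
      refine ⟨f, ?_⟩
      show algebraMap F K ((dickson 1 (1 : F) k).eval f) = v + v⁻¹
      rw [dickson_eval f u hu0 hf, huk]
    · -- v ∈ μ_{(q+1)/s}
      obtain ⟨u, hun, huk⟩ := aux_pow_gcd_surj (K := K) hn2 hn2K hv
      have hu0 : u ≠ 0 := by
        intro h
        rw [h, zero_pow hn2] at hun
        exact zero_ne_one hun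
      have huq : u ^ q = u⁻¹ := by
        have h1 : u ^ q * u = 1 := by rw [← pow_succ, hun]
        exact eq_inv_of_mul_eq_one_left h1
      have hx0q : (u + u⁻¹) ^ q = u + u⁻¹ := by
        rw [frob, inv_pow, huq, inv_inv, add_comm]
      obtain ⟨f, hf⟩ := aux_mem_range (K := K) hx0q
      refine ⟨f, ?_⟩
      show algebraMap F K ((dickson 1 (1 : F) k).eval f) = v + v⁻¹
      rw [dickson_eval f u hu0 hf, huk]
end

section
/- Let q = 2^n with n ≥ 1. Then {a + 1/a : a ∈ F_q, a ≠ 0} = {b ∈ F_q, b ≠ 0 : Tr_{F_q/F_2}(1/b) = 0} ∪ {0}, i.e., ⟨μ_{q−1}⟩ equals the set of nonzero elements b with absolute trace of 1/b equal to 0, together with 0. -/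
section ArtinSchreierAux

variable {F : Type*} [Field F] [Fintype F] [Algebra (ZMod 2) F]

private lemma trace_sq_aux (x : F) :
    Algebra.trace (ZMod 2) F (x ^ 2) = Algebra.trace (ZMod 2) F x := by
  haveI := charP_of_injective_algebraMap (algebraMap (ZMod 2) F).injective 2
  haveI : PerfectRing F 2 := PerfectRing.ofFiniteOfIsReduced (p := 2) F
  let e : F ≃ₐ[ZMod 2] F := AlgEquiv.ofRingEquiv (f := frobeniusEquiv F 2)
    (fun c => by rw [frobeniusEquiv_def, ← map_pow, ZMod.pow_card c])
  have := Algebra.trace_eq_of_algEquiv e x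
  simpa [e, AlgEquiv.ofRingEquiv, frobeniusEquiv_def, frobenius_def] using this

private lemma artin_schreier_aux (x : F) :
    Algebra.trace (ZMod 2) F x = 0 ↔ ∃ y : F, y ^ 2 + y = x := by
  haveI := charP_of_injective_algebraMap (algebraMap (ZMod 2) F).injective 2
  classical
  let fm : F →+ F :=
    { toFun := fun y => y ^ 2 + y
      map_zero' := by simp
      map_add' := fun a b => by
        show (a + b) ^ 2 + (a + b) = (a ^ 2 + a) + (b ^ 2 + b)
        have h2 : (2 : F) = 0 := CharTwo.two_eq_zero
        linear_combination a * b * h2 }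
  let f : F →ₗ[ZMod 2] F := fm.toZModLinearMap 2
  let T : F →ₗ[ZMod 2] (ZMod 2) := Algebra.trace (ZMod 2) F
  have hle : LinearMap.range f ≤ LinearMap.ker T := by
    rintro _ ⟨y, rfl⟩
    show Algebra.trace (ZMod 2) F (y ^ 2 + y) = 0
    rw [map_add, trace_sq_aux]
    exact CharTwo.add_self_eq_zero _
  have hker : (LinearMap.ker f : Set F) = {0, 1} := by
    ext y
    have hfac : y ^ 2 + y = y * (y + 1) := by ring
    simp only [SetLike.mem_coe, LinearMap.mem_ker, Set.mem_insert_iff, Set.mem_singleton_iff]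
    show y ^ 2 + y = 0 ↔ _
    rw [hfac, mul_eq_zero]
    constructor
    · rintro (h | h)
      · exact Or.inl h
      · refine Or.inr ?_
        have := eq_neg_of_add_eq_zero_left h
        rwa [CharTwo.neg_eq] at this
    · rintro (rfl | rfl) <;> simp [CharTwo.add_self_eq_zero]
  have hkerfin : Module.finrank (ZMod 2) (LinearMap.ker f) = 1 := by
    have hc : Nat.card (LinearMap.ker f) = 2 := by
      have h0 : Nat.card (LinearMap.ker f) = Nat.card ((LinearMap.ker f : Set F)) := rfl
      rw [h0, hker, Nat.card_coe_set_eq, Set.ncard_pair (zero_ne_one)]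
    have := Module.card_eq_pow_finrank (K := ZMod 2) (V := LinearMap.ker f)
    rw [← Nat.card_eq_fintype_card, hc, ZMod.card] at this
    have h2 : (2:ℕ) ^ 1 = 2 ^ Module.finrank (ZMod 2) (LinearMap.ker f) := by
      simpa using this
    exact (Nat.pow_right_injective (le_refl 2) h2).symm
  have hTsurj : Function.Surjective T := Algebra.trace_surjective (ZMod 2) F
  have hTrange : Module.finrank (ZMod 2) (LinearMap.range T) = 1 := by
    rw [LinearMap.range_eq_top.mpr hTsurj, finrank_top, Module.finrank_self]
  have h1 := LinearMap.finrank_range_add_finrank_ker f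
  have h2 := LinearMap.finrank_range_add_finrank_ker T
  have heq : LinearMap.range f = LinearMap.ker T := by
    apply Submodule.eq_of_le_of_finrank_le hle
    omega
  constructor
  · intro h
    have hx : x ∈ LinearMap.range f := heq.symm ▸ (LinearMap.mem_ker.mpr h)
    obtain ⟨y, hy⟩ := hx
    exact ⟨y, hy⟩
  · rintro ⟨y, rfl⟩
    exact hle ⟨y, rfl⟩

end ArtinSchreierAux

theorem stmt5 (F : Type*) [Field F] [Fintype F] [Algebra (ZMod 2) F] (n : ℕ) (hn : 1 ≤ n)
    (hq : Fintype.card F = 2 ^ n) :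
    {x : F | ∃ a : F, a ≠ 0 ∧ x = a + a⁻¹} =
      {b : F | b ≠ 0 ∧ Algebra.trace (ZMod 2) F b⁻¹ = 0} ∪ {0} := by
  haveI := charP_of_injective_algebraMap (algebraMap (ZMod 2) F).injective 2
  have h2 : (2 : F) = 0 := CharTwo.two_eq_zero
  ext x
  simp only [Set.mem_setOf_eq, Set.mem_union, Set.mem_singleton_iff]
  constructor
  · rintro ⟨a, ha, rfl⟩
    by_cases h : a + a⁻¹ = 0
    · exact Or.inr h
    · left
      refine ⟨h, ?_⟩
      have ha1 : a + 1 ≠ 0 := by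
        intro hh
        have haa : a = 1 := by
          have := eq_neg_of_add_eq_zero_left hh
          rwa [CharTwo.neg_eq] at this
        apply h
        rw [haa, inv_one]
        linear_combination h2
      rw [artin_schreier_aux]
      refine ⟨a / (a + 1), ?_⟩
      rw [eq_comm, inv_eq_iff_eq_inv, eq_comm, inv_eq_of_mul_eq_one_right]
      field_simp
      ring_nf
      linear_combination a ^ 3 * h2
  · rintro (⟨hb, htr⟩ | rfl)
    · have htr2 : Algebra.trace (ZMod 2) F ((x⁻¹) ^ 2) = 0 := by rw [trace_sq_aux]; exact htr
      obtain ⟨c, hc⟩ := (artin_schreier_aux _).mp htr2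
      have hc0 : c ≠ 0 := by
        rintro rfl
        simp only [ne_eq, zero_pow, add_zero] at hc
        exact hb (by simpa using hc.symm)
      have hc' : x ^ 2 * (c ^ 2 + c) = 1 := by
        rw [hc]
        field_simp
      refine ⟨x * c, mul_ne_zero hb hc0, ?_⟩
      have hinv : (x * c)⁻¹ = x + x * c :=
        inv_eq_of_mul_eq_one_right (by linear_combination hc')
      rw [hinv]
      linear_combination -x * c * h2
    · exact ⟨1, one_ne_zero, by rw [inv_one]; linear_combination -h2⟩
end

section
/- Let q be an odd prime power and ε = (−1)^{(q−1)/2}. Define A₂^{ε₁,ε₂} = {a ∈ F_q : χ(a−2) = ε₁ and χ(a+2) = ε₂}, where χ is the quadratic character. Then A₂^{++} = ⟨μ_{(q−1)/2}⟩∖{2,−2}, A₂^{−+} = ⟨μ_{(q+1)/2}⟩∖{2,−2}, A₂^{−−} = (⟨μ_{q−1}⟩∖⟨μ_{(q−1)/2}⟩)∖{2,−2}, and A₂^{+−} = (⟨μ_{q+1}⟩∖⟨μ_{(q+1)/2}⟩)∖{2,−2}. Moreover |A₂^{++}| = ⌊(q−3)/4⌋, |A₂^{+−}| = ⌊(q+1)/4⌋,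 |A₂^{−+}| = ⌊(q−1)/4⌋, and |A₂^{−−}| = ⌊(q−1)/4⌋. -/
/-- `A₂^{ε₁,ε₂} = {a ∈ F_q : χ(a−2) = ε₁, χ(a+2) = ε₂}`. -/
def A (F : Type*) [Field F] [Fintype F] [DecidableEq F] (ε₁ ε₂ : ℤ) : Set F :=
  {a : F | quadraticChar F (a - 2) = ε₁ ∧ quadraticChar F (a + 2) = ε₂}

open Finset Polynomial
set_option linter.unusedSectionVars false

section Aux

variable {F : Type*} [Field F] [Fintype F] [DecidableEq F]

local notation "K" => AlgebraicClosure F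
local notation "φ" => algebraMap F (AlgebraicClosure F)
local notation "q" => Fintype.card F
local notation "χ" => quadraticChar F

private lemma frobK_add (x y : K) : (x + y) ^ q = x ^ q + y ^ q := by
  let p := ringChar F
  haveI : CharP F p := ringChar.charP F
  obtain ⟨n, hp, hn⟩ := FiniteField.card F p
  haveI : Fact p.Prime := ⟨hp⟩
  haveI : CharP K p := charP_of_injective_algebraMap (algebraMap F K).injective p
  rw [hn]
  exact add_pow_char_pow ..

private lemma phi_pow_card (a : F) : (φ a) ^ q = φ a := by
  rw [← map_pow, FiniteField.pow_card]

private lemma mem_range_of_frob_fixed {x : K} (hx : x ^ q = x) : ∃ a : F, φ a = x := by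
  classical
  by_contra h
  push_neg at h
  have hx' : x ∉ (Finset.univ.image (algebraMap F K)) := by
    simp only [Finset.mem_image, Finset.mem_univ, true_and]
    rintro ⟨a, ha⟩; exact h a ha
  set Z : Finset K := insert x (Finset.univ.image (algebraMap F K)) with hZ
  have hcard : Z.card = q + 1 := by
    rw [hZ, Finset.card_insert_of_notMem hx',
      Finset.card_image_of_injective _ (algebraMap F K).injective, Finset.card_univ]
  have hne : (X ^ q - X : K[X]) ≠ 0 :=
    FiniteField.X_pow_card_sub_X_ne_zero _ Fintype.one_lt_card
  have hsub : Z.val ⊆ (X ^ q - X : K[X]).roots := by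
    intro y hy
    rw [Polynomial.mem_roots hne]
    have hyq : y ^ q = y := by
      rcases Finset.mem_insert.mp (Finset.mem_val.mp hy) with rfl | hy'
      · exact hx
      · obtain ⟨a, -, rfl⟩ := Finset.mem_image.mp hy'
        exact phi_pow_card a
    simp [Polynomial.IsRoot, sub_eq_zero, hyq]
  have := Polynomial.card_le_degree_of_subset_roots hsub
  rw [FiniteField.X_pow_card_sub_X_natDegree_eq _ Fintype.one_lt_card, hcard] at this
  omega


private lemma char_ne_two (hq : Odd q) : ringChar F ≠ 2 := by
  rw [Ne, FiniteField.even_card_iff_char_two]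
  obtain ⟨k, hk⟩ := hq; omega

private lemma two_ne_zero_K (hq : Odd q) : (2 : K) ≠ 0 := by
  intro h
  apply Ring.two_ne_zero (char_ne_two hq)
  apply (algebraMap F K).injective
  rw [map_ofNat, map_zero, h]

private lemma four_ne_zero_K (hq : Odd q) : (4 : K) ≠ 0 := by
  intro h
  apply two_ne_zero_K hq
  have h' : (2:K)*2 = 4 := by norm_num
  rcases mul_eq_zero.mp (h'.trans h) with h'' | h'' <;> exact h''

private lemma neg_one_ne_one_K (hq : Odd q) : (-1 : K) ≠ 1 := by
  intro h
  apply two_ne_zero_K hq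
  linear_combination -h

private lemma sqrt_frob (hq : Odd q) {b : F} (hb : b ≠ 0) {w : K} (hw : w ^ 2 = φ b) :
    (χ b = 1 ∧ w ^ q = w) ∨ (χ b = -1 ∧ w ^ q = -w) := by
  have hw0 : w ≠ 0 := by
    intro h
    apply hb
    apply (algebraMap F K).injective
    rw [← hw, h]; simp
  have hsq : (w ^ q) ^ 2 = w ^ 2 := by
    rw [← pow_mul, mul_comm, pow_mul, hw, phi_pow_card]
  have h0 : (w ^ q - w) * (w ^ q + w) = 0 := by linear_combination hsq
  rcases mul_eq_zero.mp h0 with h | h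
  · have hwq : w ^ q = w := sub_eq_zero.mp h
    obtain ⟨c, hc⟩ := mem_range_of_frob_fixed hwq
    left
    refine ⟨?_, hwq⟩
    rw [quadraticChar_one_iff_isSquare hb]
    refine ⟨c, ?_⟩
    apply (algebraMap F K).injective
    rw [map_mul, hc, ← sq, hw]
  · have hwq : w ^ q = -w := by linear_combination h
    right
    refine ⟨?_, hwq⟩
    rw [quadraticChar_neg_one_iff_not_isSquare]
    rintro ⟨c, hc⟩
    have hfix : w ^ q = w := by
      have hcw : (w - φ c) * (w + φ c) = 0 := by
        have h5 : (φ c) ^ 2 = w ^ 2 := by rw [hw, ← map_pow, sq, ← hc]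
        linear_combination -h5
      rcases mul_eq_zero.mp hcw with h' | h'
      · have h6 : w = φ c := by linear_combination h'
        rw [h6, phi_pow_card]
      · have h6 : w = -φ c := by linear_combination h'
        rw [h6, hq.neg_pow, phi_pow_card]
    rw [hfix] at hwq
    apply hw0
    have h7 : (2 : K) * w = 0 := by linear_combination hwq
    rcases mul_eq_zero.mp h7 with h' | h'
    · exact absurd h' (two_ne_zero_K hq)
    · exact h'

private lemma root_unique {u u' : K} (hu : u ≠ 0) (hu' : u' ≠ 0)
    (h : u + u⁻¹ = u' + u'⁻¹) : u' = u ∨ u' = u⁻¹ := by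
  have h' : u * u' * (u + u⁻¹) = u * u' * (u' + u'⁻¹) := by rw [h]
  have hne : u * u' ≠ 0 := mul_ne_zero hu hu'
  have h'' : (u - u') * (u * u' - 1) = 0 := by
    have h3 : u * u' * ((u - u') * (u * u' - 1)) = 0 := by
      field_simp at h'
      linear_combination (u * u') * h'
    rcases mul_eq_zero.mp h3 with h4 | h4
    · exact absurd h4 hne
    · exact h4
  rcases mul_eq_zero.mp h'' with h3 | h3
  · left; linear_combination -h3
  · right
    field_simp
    linear_combination h3

private lemma exists_root (hq : Odd q) (a : F) : ∃ u : K, u ≠ 0 ∧ u + u⁻¹ = φ a := by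
  obtain ⟨r, hr⟩ := IsAlgClosed.exists_pow_nat_eq ((φ a) ^ 2 - 4) (n := 2) (by norm_num)
  have h2 : (2 : K) ≠ 0 := two_ne_zero_K hq
  have h4 : (4 : K) ≠ 0 := four_ne_zero_K hq
  obtain ⟨u, hquad⟩ : ∃ u : K, u ^ 2 - φ a * u + 1 = 0 := by
    refine ⟨(φ a + r) / 2, ?_⟩
    field_simp
    linear_combination hr
  have hu0 : u ≠ 0 := by
    intro h; rw [h] at hquad; simp at hquad
  refine ⟨u, hu0, ?_⟩
  have h5 : u * (u + u⁻¹) = u * φ a := by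
    field_simp
    linear_combination hquad
  exact mul_left_cancel₀ hu0 h5

private lemma pow_half_sub (hq : Odd q) {u : K} (h : u ^ ((q-1)/2) = 1) : u ^ (q-1) = 1 := by
  have h2 : u ^ (q-1) = (u ^ ((q-1)/2)) ^ 2 := by
    rw [← pow_mul]; congr 1; obtain ⟨k, hk⟩ := hq; omega
  rw [h2, h, one_pow]

private lemma master (hq : Odd q) {a : F} (ha1 : a ≠ 2) (ha2 : a ≠ -2) {u : K} (hu : u ≠ 0)
    (hux : u + u⁻¹ = φ a) :
    (χ (a-2) = 1 ∧ χ (a+2) = 1 ∧ u ^ ((q-1)/2) = 1 ∧ u ^ (q-1) = 1) ∨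
    (χ (a-2) = -1 ∧ χ (a+2) = -1 ∧ u ^ ((q-1)/2) = -1 ∧ u ^ (q-1) = 1) ∨
    (χ (a-2) = -1 ∧ χ (a+2) = 1 ∧ u ^ ((q+1)/2) = 1 ∧ u ^ (q+1) = 1) ∨
    (χ (a-2) = 1 ∧ χ (a+2) = -1 ∧ u ^ ((q+1)/2) = -1 ∧ u ^ (q+1) = 1) := by
  obtain ⟨v, hv⟩ := IsAlgClosed.exists_pow_nat_eq u (n := 2) (by norm_num)
  have hv0 : v ≠ 0 := by rintro rfl; rw [← hv] at hu; simp at hu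
  have h2K : (2:K) ≠ 0 := two_ne_zero_K hq
  have hqodd : q % 2 = 1 := Nat.odd_iff.mp hq
  have hq1 : 1 < q := Fintype.one_lt_card
  have hw2 : (v - v⁻¹) ^ 2 = φ (a - 2) := by
    rw [map_sub, map_ofNat, ← hux, ← hv]
    field_simp
    ring
  have hz2 : (v + v⁻¹) ^ 2 = φ (a + 2) := by
    rw [map_add, map_ofNat, ← hux, ← hv]
    field_simp
    ring
  have ha1' : a - 2 ≠ 0 := sub_ne_zero.mpr ha1
  have ha2' : a + 2 ≠ 0 := by
    intro h; apply ha2; linear_combination h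
  have hvq : 2 * v ^ q = (v - v⁻¹) ^ q + (v + v⁻¹) ^ q := by
    have h1 : (v - v⁻¹) + (v + v⁻¹) = 2 * v := by ring
    have h2 : ((v - v⁻¹) + (v + v⁻¹)) ^ q = (v - v⁻¹) ^ q + (v + v⁻¹) ^ q := frobK_add _ _
    have h3 : (2:K) ^ q = 2 := by
      have h4 : (2:K) = φ 2 := by rw [map_ofNat]
      rw [h4, phi_pow_card]
    calc 2 * v ^ q = (2:K) ^ q * v ^ q := by rw [h3]
    _ = (2*v) ^ q := (mul_pow 2 v q).symm
    _ = _ := by rw [← h1, h2]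
  have epow1 : u ^ ((q-1)/2) = v ^ (q-1) := by
    rw [← hv, ← pow_mul]; congr 1; omega
  have epow2 : u ^ ((q+1)/2) = v ^ (q+1) := by
    rw [← hv, ← pow_mul]; congr 1; omega
  have hvq1 : v ^ (q - 1) * v = v ^ q := by
    rw [← pow_succ]; congr 1; omega
  have hvq2 : v ^ (q + 1) = v ^ q * v := by rw [pow_succ]
  rcases sqrt_frob hq ha1' hw2 with ⟨hχ1, hw⟩ | ⟨hχ1, hw⟩ <;>
    rcases sqrt_frob hq ha2' hz2 with ⟨hχ2, hz⟩ | ⟨hχ2, hz⟩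
  · -- (+,+) : v ^ q = v
    left
    have hvv : v ^ q = v := by
      apply mul_left_cancel₀ h2K
      rw [hvq, hw, hz]; ring
    have e1 : u ^ ((q-1)/2) = 1 := by
      rw [epow1]
      apply mul_right_cancel₀ hv0
      rw [hvq1, hvv, one_mul]
    exact ⟨hχ1, hχ2, e1, pow_half_sub hq e1⟩
  · -- (+,-) : v ^ q = -v⁻¹
    right; right; right
    have hvv : v ^ q = -v⁻¹ := by
      apply mul_left_cancel₀ h2K
      rw [hvq, hw, hz]; ring
    have e1 : u ^ ((q+1)/2) = -1 := by
      rw [epow2, hvq2, hvv, neg_mul, inv_mul_cancel₀ hv0]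
    have e2 : u ^ (q+1) = 1 := by
      have h5 : u ^ (q+1) = (u ^ ((q+1)/2)) ^ 2 := by
        rw [← pow_mul]; congr 1; omega
      rw [h5, e1]; ring
    exact ⟨hχ1, hχ2, e1, e2⟩
  · -- (-,+) : v ^ q = v⁻¹
    right; right; left
    have hvv : v ^ q = v⁻¹ := by
      apply mul_left_cancel₀ h2K
      rw [hvq, hw, hz]; ring
    have e1 : u ^ ((q+1)/2) = 1 := by
      rw [epow2, hvq2, hvv, inv_mul_cancel₀ hv0]
    have e2 : u ^ (q+1) = 1 := by
      have h5 : u ^ (q+1) = (u ^ ((q+1)/2)) ^ 2 := by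
        rw [← pow_mul]; congr 1; omega
      rw [h5, e1]; ring
    exact ⟨hχ1, hχ2, e1, e2⟩
  · -- (-,-) : v ^ q = -v
    right; left
    have hvv : v ^ q = -v := by
      apply mul_left_cancel₀ h2K
      rw [hvq, hw, hz]; ring
    have e1 : u ^ ((q-1)/2) = -1 := by
      rw [epow1]
      apply mul_right_cancel₀ hv0
      rw [hvq1, hvv, neg_one_mul]
    have e2 : u ^ (q-1) = 1 := by
      have h5 : u ^ (q-1) = (u ^ ((q-1)/2)) ^ 2 := by
        rw [← pow_mul]; congr 1; omega
      rw [h5, e1]; ring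
    exact ⟨hχ1, hχ2, e1, e2⟩

private lemma pow_half_add (hq : Odd q) {u : K} (h : u ^ ((q+1)/2) = 1) : u ^ (q+1) = 1 := by
  have h2 : u ^ (q+1) = (u ^ ((q+1)/2)) ^ 2 := by
    rw [← pow_mul]; congr 1; obtain ⟨k, hk⟩ := hq; omega
  rw [h2, h, one_pow]

private lemma sum_eq_two {u : K} (h1 : u ^ (q-1) = 1) (h2 : u ^ (q+1) = 1) :
    u + u⁻¹ = 2 ∨ u + u⁻¹ = -2 := by
  have hq1 : 1 < q := Fintype.one_lt_card
  have hu2 : u ^ 2 = 1 := by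
    have h5 : u ^ (q+1) = u ^ (q-1) * u ^ 2 := by rw [← pow_add]; congr 1; omega
    rw [h2, h1, one_mul] at h5; exact h5.symm
  have h6 : (u - 1) * (u + 1) = 0 := by linear_combination hu2
  rcases mul_eq_zero.mp h6 with h' | h'
  · left
    have h7 : u = 1 := by linear_combination h'
    rw [h7]; norm_num
  · right
    have h7 : u = -1 := by linear_combination h'
    rw [h7]; norm_num

private lemma phi_notmem_pm {a : F} (ha1 : a ≠ 2) (ha2 : a ≠ -2) :
    φ a ∉ ({2,-2} : Set K) := by
  simp only [Set.mem_insert_iff, Set.mem_singleton_iff]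
  rintro (h | h)
  · apply ha1; apply (algebraMap F K).injective; rw [h, map_ofNat]
  · apply ha2; apply (algebraMap F K).injective; rw [h, map_neg, map_ofNat]

private lemma ne_of_notmem_pm {a : F} (h : φ a ∉ ({2,-2} : Set K)) : a ≠ 2 ∧ a ≠ -2 := by
  constructor
  · rintro rfl
    exact h (Or.inl (map_ofNat (algebraMap F K) 2))
  · rintro rfl
    refine h (Or.inr ?_)
    show φ (-2) = -2
    rw [map_neg, map_ofNat]

private lemma ne_two_of_char {a : F} {e : ℤ} (he : e ≠ 0) (h : χ (a - 2) = e) : a ≠ 2 := by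
  rintro rfl; rw [sub_self, quadraticChar_zero] at h; exact he h.symm

private lemma ne_neg_two_of_char {a : F} {e : ℤ} (he : e ≠ 0) (h : χ (a + 2) = e) : a ≠ -2 := by
  rintro rfl; rw [neg_add_cancel, quadraticChar_zero] at h; exact he h.symm

private lemma chi_clash {b : F} {e e' : ℤ} (h : χ b = e) (h' : χ b = e') (hee : e ≠ e') : False :=
  hee (h.symm.trans h')

-- `x` in the image iff ... : the four set equalities
private lemma setEq_pp (hq : Odd q) :
    φ '' A F 1 1 = delta (AlgebraicClosure F) ((q-1)/2) \ {2,-2} := by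
  have hq1 : 1 < q := Fintype.one_lt_card
  have hqodd : q % 2 = 1 := Nat.odd_iff.mp hq
  ext x
  constructor
  · rintro ⟨a, ⟨h1, h2⟩, rfl⟩
    have ha1 : a ≠ 2 := ne_two_of_char one_ne_zero h1
    have ha2 : a ≠ -2 := ne_neg_two_of_char one_ne_zero h2
    obtain ⟨u, hu0, hux⟩ := exists_root hq a
    rcases master hq ha1 ha2 hu0 hux with ⟨-,-,e1,-⟩ | ⟨hc,-,-,-⟩ | ⟨hc,-,-,-⟩ | ⟨-,hc,-,-⟩
    · exact ⟨⟨u, e1, hux.symm⟩, phi_notmem_pm ha1 ha2⟩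
    · exact absurd (chi_clash h1 hc (by norm_num)) not_false
    · exact absurd (chi_clash h1 hc (by norm_num)) not_false
    · exact absurd (chi_clash h2 hc (by norm_num)) not_false
  · rintro ⟨⟨u, hud, hxu⟩, hx2⟩
    have hu0 : u ≠ 0 := by
      rintro rfl; rw [zero_pow (by omega : (q-1)/2 ≠ 0)] at hud; exact zero_ne_one hud
    have huq : u ^ (q-1) = 1 := pow_half_sub hq hud
    have huqq : u ^ q = u := by
      have h5 : u ^ (q-1) * u = u ^ q := by rw [← pow_succ]; congr 1; omega
      rw [← h5, huq, one_mul]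
    obtain ⟨t, ht⟩ := mem_range_of_frob_fixed huqq
    have hxa : φ (t + t⁻¹) = x := by rw [map_add, map_inv₀, ht, hxu]
    obtain ⟨ha1, ha2⟩ := ne_of_notmem_pm (hxa ▸ hx2)
    have hux' : u + u⁻¹ = φ (t + t⁻¹) := by rw [hxa, hxu]
    rcases master hq ha1 ha2 hu0 hux' with ⟨h1,h2,-,-⟩ | ⟨-,-,e,-⟩ | ⟨-,-,-,e⟩ | ⟨-,-,-,e⟩
    · exact ⟨t + t⁻¹, ⟨h1, h2⟩, hxa⟩
    · rw [hud] at e; exact absurd e.symm (neg_one_ne_one_K hq)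
    · exact absurd (hxu ▸ (sum_eq_two huq e)) (by
        rintro (h | h) <;> exact hx2 (by rw [h]; simp))
    · exact absurd (hxu ▸ (sum_eq_two huq e)) (by
        rintro (h | h) <;> exact hx2 (by rw [h]; simp))

private lemma frob_fixed_of_qp1 (hq : Odd q) {u : K} (hu0 : u ≠ 0) (huq : u ^ (q+1) = 1) :
    (u + u⁻¹) ^ q = u + u⁻¹ := by
  have huq' : u ^ q = u⁻¹ := by
    have h5 : u ^ (q+1) = u ^ q * u := pow_succ u q
    rw [huq] at h5
    field_simp
    exact h5.symm
  rw [frobK_add u u⁻¹, inv_pow, huq', inv_inv, add_comm]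

private lemma setEq_mp (hq : Odd q) :
    φ '' A F (-1) 1 = delta (AlgebraicClosure F) ((q+1)/2) \ {2,-2} := by
  have hq1 : 1 < q := Fintype.one_lt_card
  have hqodd : q % 2 = 1 := Nat.odd_iff.mp hq
  ext x
  constructor
  · rintro ⟨a, ⟨h1, h2⟩, rfl⟩
    have ha1 : a ≠ 2 := ne_two_of_char (by norm_num) h1
    have ha2 : a ≠ -2 := ne_neg_two_of_char one_ne_zero h2
    obtain ⟨u, hu0, hux⟩ := exists_root hq a
    rcases master hq ha1 ha2 hu0 hux with ⟨hc,-,-,-⟩ | ⟨-,hc,-,-⟩ | ⟨-,-,e1,-⟩ | ⟨hc,-,-,-⟩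
    · exact absurd (chi_clash h1 hc (by norm_num)) not_false
    · exact absurd (chi_clash h2 hc (by norm_num)) not_false
    · exact ⟨⟨u, e1, hux.symm⟩, phi_notmem_pm ha1 ha2⟩
    · exact absurd (chi_clash h1 hc (by norm_num)) not_false
  · rintro ⟨⟨u, hud, hxu⟩, hx2⟩
    have hu0 : u ≠ 0 := by
      rintro rfl; rw [zero_pow (by omega : (q+1)/2 ≠ 0)] at hud; exact zero_ne_one hud
    have huq : u ^ (q+1) = 1 := pow_half_add hq hud
    have hxq : x ^ q = x := by rw [hxu]; exact frob_fixed_of_qp1 hq hu0 huq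
    obtain ⟨t, ht⟩ := mem_range_of_frob_fixed hxq
    obtain ⟨ha1, ha2⟩ := ne_of_notmem_pm (ht ▸ hx2)
    have hux' : u + u⁻¹ = φ t := by rw [ht, ← hxu]
    rcases master hq ha1 ha2 hu0 hux' with ⟨-,-,-,e⟩ | ⟨-,-,-,e⟩ | ⟨h1,h2,-,-⟩ | ⟨-,-,e,-⟩
    · exact absurd (hxu ▸ (sum_eq_two e huq)) (by
        rintro (h | h) <;> exact hx2 (by rw [h]; simp))
    · exact absurd (hxu ▸ (sum_eq_two e huq)) (by
        rintro (h | h) <;> exact hx2 (by rw [h]; simp))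
    · exact ⟨t, ⟨h1, h2⟩, ht⟩
    · rw [hud] at e; exact absurd e.symm (neg_one_ne_one_K hq)

private lemma setEq_mm (hq : Odd q) :
    φ '' A F (-1) (-1) =
      (delta (AlgebraicClosure F) (q-1) \ delta (AlgebraicClosure F) ((q-1)/2)) \ {2,-2} := by
  have hq1 : 1 < q := Fintype.one_lt_card
  have hqodd : q % 2 = 1 := Nat.odd_iff.mp hq
  ext x
  constructor
  · rintro ⟨a, ⟨h1, h2⟩, rfl⟩
    have ha1 : a ≠ 2 := ne_two_of_char (by norm_num) h1
    have ha2 : a ≠ -2 := ne_neg_two_of_char (by norm_num) h2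
    obtain ⟨u, hu0, hux⟩ := exists_root hq a
    rcases master hq ha1 ha2 hu0 hux with ⟨hc,-,-,-⟩ | ⟨-,-,e1,e2⟩ | ⟨-,hc,-,-⟩ | ⟨hc,-,-,-⟩
    · exact absurd (chi_clash h1 hc (by norm_num)) not_false
    · refine ⟨⟨⟨u, e2, hux.symm⟩, ?_⟩, phi_notmem_pm ha1 ha2⟩
      rintro ⟨u', hd', hx'⟩
      have hu'0 : u' ≠ 0 := by
        rintro rfl; rw [zero_pow (by omega : (q-1)/2 ≠ 0)] at hd'; exact zero_ne_one hd'
      rcases root_unique hu0 hu'0 (hux.trans hx') with h | h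
      · rw [h] at hd'
        exact neg_one_ne_one_K hq (e1.symm.trans hd')
      · rw [h, inv_pow, e1, inv_neg, inv_one] at hd'
        exact neg_one_ne_one_K hq hd'
    · exact absurd (chi_clash h2 hc (by norm_num)) not_false
    · exact absurd (chi_clash h1 hc (by norm_num)) not_false
  · rintro ⟨⟨⟨u, hud, hxu⟩, hnd⟩, hx2⟩
    have hu0 : u ≠ 0 := by
      rintro rfl; rw [zero_pow (by omega : q-1 ≠ 0)] at hud; exact zero_ne_one hud
    have huqq : u ^ q = u := by
      have h5 : u ^ (q-1) * u = u ^ q := by rw [← pow_succ]; congr 1; omega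
      rw [← h5, hud, one_mul]
    obtain ⟨t, ht⟩ := mem_range_of_frob_fixed huqq
    have hxa : φ (t + t⁻¹) = x := by rw [map_add, map_inv₀, ht, hxu]
    obtain ⟨ha1, ha2⟩ := ne_of_notmem_pm (hxa ▸ hx2)
    have hux' : u + u⁻¹ = φ (t + t⁻¹) := by rw [hxa, hxu]
    rcases master hq ha1 ha2 hu0 hux' with ⟨-,-,e,-⟩ | ⟨h1,h2,-,-⟩ | ⟨-,-,-,e⟩ | ⟨-,-,-,e⟩
    · exact absurd ⟨u, e, hxu⟩ hnd
    · exact ⟨t + t⁻¹, ⟨h1, h2⟩, hxa⟩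
    · exact absurd (hxu ▸ (sum_eq_two hud e)) (by
        rintro (h | h) <;> exact hx2 (by rw [h]; simp))
    · exact absurd (hxu ▸ (sum_eq_two hud e)) (by
        rintro (h | h) <;> exact hx2 (by rw [h]; simp))

private lemma setEq_pm (hq : Odd q) :
    φ '' A F 1 (-1) =
      (delta (AlgebraicClosure F) (q+1) \ delta (AlgebraicClosure F) ((q+1)/2)) \ {2,-2} := by
  have hq1 : 1 < q := Fintype.one_lt_card
  have hqodd : q % 2 = 1 := Nat.odd_iff.mp hq
  ext x
  constructor
  · rintro ⟨a, ⟨h1, h2⟩, rfl⟩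
    have ha1 : a ≠ 2 := ne_two_of_char one_ne_zero h1
    have ha2 : a ≠ -2 := ne_neg_two_of_char (by norm_num) h2
    obtain ⟨u, hu0, hux⟩ := exists_root hq a
    rcases master hq ha1 ha2 hu0 hux with ⟨-,hc,-,-⟩ | ⟨hc,-,-,-⟩ | ⟨hc,-,-,-⟩ | ⟨-,-,e1,e2⟩
    · exact absurd (chi_clash h2 hc (by norm_num)) not_false
    · exact absurd (chi_clash h1 hc (by norm_num)) not_false
    · exact absurd (chi_clash h1 hc (by norm_num)) not_false
    · refine ⟨⟨⟨u, e2, hux.symm⟩, ?_⟩, phi_notmem_pm ha1 ha2⟩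
      rintro ⟨u', hd', hx'⟩
      have hu'0 : u' ≠ 0 := by
        rintro rfl; rw [zero_pow (by omega : (q+1)/2 ≠ 0)] at hd'; exact zero_ne_one hd'
      rcases root_unique hu0 hu'0 (hux.trans hx') with h | h
      · rw [h] at hd'
        exact neg_one_ne_one_K hq (e1.symm.trans hd')
      · rw [h, inv_pow, e1, inv_neg, inv_one] at hd'
        exact neg_one_ne_one_K hq hd'
  · rintro ⟨⟨⟨u, hud, hxu⟩, hnd⟩, hx2⟩
    have hu0 : u ≠ 0 := by
      rintro rfl; rw [zero_pow (by omega : q+1 ≠ 0)] at hud; exact zero_ne_one hud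
    have hxq : x ^ q = x := by rw [hxu]; exact frob_fixed_of_qp1 hq hu0 hud
    obtain ⟨t, ht⟩ := mem_range_of_frob_fixed hxq
    obtain ⟨ha1, ha2⟩ := ne_of_notmem_pm (ht ▸ hx2)
    have hux' : u + u⁻¹ = φ t := by rw [ht, ← hxu]
    rcases master hq ha1 ha2 hu0 hux' with ⟨-,-,-,e⟩ | ⟨-,-,-,e⟩ | ⟨-,-,e,-⟩ | ⟨h1,h2,-,-⟩
    · exact absurd (hxu ▸ (sum_eq_two e hud)) (by
        rintro (h | h) <;> exact hx2 (by rw [h]; simp))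
    · exact absurd (hxu ▸ (sum_eq_two e hud)) (by
        rintro (h | h) <;> exact hx2 (by rw [h]; simp))
    · exact absurd ⟨u, e, hxu⟩ hnd
    · exact ⟨t, ⟨h1, h2⟩, ht⟩

private lemma sum_shift_left (hq : Odd q) : ∑ a : F, χ (a - 2) = 0 := by
  calc ∑ a : F, χ (a - 2) = ∑ a : F, χ a :=
        Fintype.sum_equiv (Equiv.subRight (2:F)) _ _ (fun a => rfl)
  _ = 0 := quadraticChar_sum_zero (char_ne_two hq)

private lemma sum_shift_right (hq : Odd q) : ∑ a : F, χ (a + 2) = 0 := by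
  calc ∑ a : F, χ (a + 2) = ∑ a : F, χ a :=
        Fintype.sum_equiv (Equiv.addRight (2:F)) _ _ (fun a => rfl)
  _ = 0 := quadraticChar_sum_zero (char_ne_two hq)

private lemma four_ne_zero_F (hq : Odd q) : (4:F) ≠ 0 := by
  have h2F : (2:F) ≠ 0 := Ring.two_ne_zero (char_ne_two hq)
  intro h
  have h' : (2:F) * 2 = 4 := by norm_num
  rcases mul_eq_zero.mp (h'.trans h) with h'' | h'' <;> exact h2F h''

private lemma sum_prod (hq : Odd q) : ∑ a : F, χ (a - 2) * χ (a + 2) = -1 := by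
  have h2 := char_ne_two hq
  have h2F : (2:F) ≠ 0 := Ring.two_ne_zero h2
  have h4 : (4:F) ≠ 0 := four_ne_zero_F hq
  have hjac : jacobiSum (quadraticChar F) (quadraticChar F) = - χ (-1) := by
    have hinv : (quadraticChar F)⁻¹ = quadraticChar F := (quadraticChar_isQuadratic F).inv
    calc jacobiSum (quadraticChar F) (quadraticChar F)
        = jacobiSum (quadraticChar F) (quadraticChar F)⁻¹ := by rw [hinv]
    _ = - χ (-1) := jacobiSum_nontrivial_inv (quadraticChar_ne_one h2)
  let e : F ≃ F := {
    toFun := fun x => 2 - 4*x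
    invFun := fun a => (2 - a)/4
    left_inv := fun x => by field_simp; ring
    right_inv := fun a => by field_simp; ring }
  have h1 : ∑ a : F, χ (a-2) * χ (a+2)
      = ∑ x : F, χ ((2 - 4*x) - 2) * χ ((2 - 4*x) + 2) :=
    (Fintype.sum_equiv e (fun x => χ ((2 - 4*x) - 2) * χ ((2 - 4*x) + 2))
      (fun a => χ (a-2) * χ (a+2)) (fun x => rfl)).symm
  have h5 : ∀ x : F, χ ((2-4*x)-2) * χ ((2-4*x)+2) = (χ (-4) * χ 4) * (χ x * χ (1-x)) := by
    intro x
    have e1 : (2-4*x)-2 = (-4) * x := by ring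
    have e2 : (2-4*x)+2 = 4 * (1-x) := by ring
    rw [e1, e2, map_mul, map_mul]
    ring
  have h6 : ∑ x : F, χ x * χ (1-x) = jacobiSum (quadraticChar F) (quadraticChar F) := rfl
  rw [h1]
  simp_rw [h5]
  rw [← Finset.mul_sum, h6, hjac]
  have hm4 : χ (-4) = χ (-1) * χ 4 := by rw [← map_mul]; norm_num
  have a1 : χ (-1) * χ (-1) = 1 := by
    have h7 := quadraticChar_sq_one (neg_ne_zero.mpr (one_ne_zero (α := F)))
    rwa [sq] at h7
  have a2 : χ (4:F) * χ 4 = 1 := by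
    have h7 := quadraticChar_sq_one h4
    rwa [sq] at h7
  rw [hm4]
  linear_combination (-(χ (4:F) * χ 4)) * a1 - a2

private lemma count_eq (hq : Odd q) (ε₁ ε₂ : ℤ) (h₁ : ε₁ = 1 ∨ ε₁ = -1)
    (h₂ : ε₂ = 1 ∨ ε₂ = -1) :
    4 * (((Finset.univ : Finset F).filter
        (fun a => χ (a-2) = ε₁ ∧ χ (a+2) = ε₂)).card : ℤ)
      = (q : ℤ) - ε₁*ε₂ - 2 - ε₂ - ε₁ * χ (-1) := by
  classical
  have h2 := char_ne_two hq
  have h2F : (2:F) ≠ 0 := Ring.two_ne_zero h2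
  have h4 : (4:F) ≠ 0 := four_ne_zero_F hq
  have hε₁0 : ε₁ ≠ 0 := by rcases h₁ with rfl | rfl <;> norm_num
  have hε₂0 : ε₂ ≠ 0 := by rcases h₂ with rfl | rfl <;> norm_num
  have hχ4 : χ (4:F) = 1 := by
    rw [show (4:F) = 2^2 by norm_num, quadraticChar_sq_one' h2F]
  have hχm4 : χ (-4:F) = χ (-1) := by
    rw [show (-4:F) = (-1)*(2^2) by norm_num, map_mul, quadraticChar_sq_one' h2F, mul_one]
  set f : F → ℤ := fun a => (1 + ε₁ * χ (a-2)) * (1 + ε₂ * χ (a+2)) with hf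
  have hTval : ∑ a : F, f a = (q:ℤ) - ε₁ * ε₂ := by
    have expand : ∀ a : F, f a
        = 1 + ε₁ * χ (a-2) + ε₂ * χ (a+2) + (ε₁*ε₂) * (χ (a-2) * χ (a+2)) := fun a => by
      rw [hf]; ring
    rw [Finset.sum_congr rfl (fun a _ => expand a)]
    rw [Finset.sum_add_distrib, Finset.sum_add_distrib, Finset.sum_add_distrib,
      ← Finset.mul_sum, ← Finset.mul_sum, ← Finset.mul_sum,
      sum_shift_left hq, sum_shift_right hq, sum_prod hq]
    simp [Finset.card_univ]
    ring
  have hne : (-2 : F) ≠ 2 := by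
    intro h; apply h4; linear_combination -h
  have hsplit : ∑ a : F, f a = f 2 + (f (-2) +
      ∑ a ∈ ((Finset.univ.erase (2:F)).erase (-2:F)), f a) := by
    rw [Finset.add_sum_erase _ _ (Finset.mem_erase.mpr ⟨hne, Finset.mem_univ _⟩),
      Finset.add_sum_erase _ _ (Finset.mem_univ (2:F))]
  have hf2 : f 2 = 1 + ε₂ := by
    rw [hf]
    show (1 + ε₁ * χ ((2:F)-2)) * (1 + ε₂ * χ ((2:F)+2)) = 1 + ε₂
    rw [show (2:F)-2 = 0 by ring, show (2:F)+2 = 4 by norm_num, quadraticChar_zero, hχ4]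
    ring
  have hfm2 : f (-2) = 1 + ε₁ * χ (-1) := by
    rw [hf]
    show (1 + ε₁ * χ ((-2:F)-2)) * (1 + ε₂ * χ ((-2:F)+2)) = 1 + ε₁ * χ (-1)
    rw [show (-2:F)-2 = -4 by norm_num, show (-2:F)+2 = 0 by ring, quadraticChar_zero, hχm4]
    ring
  have hsum4 : ∑ a ∈ ((Finset.univ.erase (2:F)).erase (-2:F)), f a
      = 4 * (((Finset.univ : Finset F).filter
        (fun a => χ (a-2) = ε₁ ∧ χ (a+2) = ε₂)).card : ℤ) := by
    have step : ∀ a ∈ ((Finset.univ.erase (2:F)).erase (-2:F)),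
        f a = if (χ (a-2) = ε₁ ∧ χ (a+2) = ε₂) then (4:ℤ) else 0 := by
      intro a ha
      have ha2 : a ≠ -2 := (Finset.mem_erase.mp ha).1
      have ha1 : a ≠ 2 := (Finset.mem_erase.mp (Finset.mem_erase.mp ha).2).1
      have hb1 : a - 2 ≠ 0 := sub_ne_zero.mpr ha1
      have hb2 : a + 2 ≠ 0 := fun h => ha2 (by linear_combination h)
      show (1 + ε₁ * χ (a-2)) * (1 + ε₂ * χ (a+2))
          = if (χ (a-2) = ε₁ ∧ χ (a+2) = ε₂) then (4:ℤ) else 0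
      rcases quadraticChar_dichotomy hb1 with hs | hs <;>
        rcases quadraticChar_dichotomy hb2 with ht | ht <;>
          rcases h₁ with rfl | rfl <;> rcases h₂ with rfl | rfl <;>
            norm_num [hs, ht]
    rw [Finset.sum_congr rfl step, ← Finset.sum_filter]
    have hEf : ((Finset.univ.erase (2:F)).erase (-2:F)).filter
        (fun a => χ (a-2) = ε₁ ∧ χ (a+2) = ε₂)
        = (Finset.univ : Finset F).filter (fun a => χ (a-2) = ε₁ ∧ χ (a+2) = ε₂) := by
      ext a
      simp only [Finset.mem_filter, Finset.mem_erase, Finset.mem_univ, true_and, and_true]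
      constructor
      · rintro ⟨-, hPa⟩; exact hPa
      · intro hPa
        refine ⟨⟨?_, ?_⟩, hPa⟩
        · rintro rfl
          have h9 := hPa.2
          rw [show (-2:F)+2 = 0 by ring, quadraticChar_zero] at h9
          exact hε₂0 h9.symm
        · rintro rfl
          have h9 := hPa.1
          rw [show (2:F)-2 = 0 by ring, quadraticChar_zero] at h9
          exact hε₁0 h9.symm
    rw [hEf, Finset.sum_const, nsmul_eq_mul]
    ring
  have hfinal : f 2 + (f (-2) + 4 * (((Finset.univ : Finset F).filter
      (fun a => χ (a-2) = ε₁ ∧ χ (a+2) = ε₂)).card : ℤ)) = (q:ℤ) - ε₁*ε₂ := by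
    rw [← hsum4, ← hsplit]; exact hTval
  rw [hf2, hfm2] at hfinal
  linarith [hfinal]

private lemma Acard (ε₁ ε₂ : ℤ) : (A F ε₁ ε₂).ncard
    = ((Finset.univ : Finset F).filter
        (fun a => χ (a-2) = ε₁ ∧ χ (a+2) = ε₂)).card := by
  rw [show A F ε₁ ε₂ = ↑((Finset.univ : Finset F).filter
      (fun a => χ (a-2) = ε₁ ∧ χ (a+2) = ε₂)) from by
    ext a; simp [A], Set.ncard_coe_finset]

end Aux

theorem stmt10 (F : Type*) [Field F] [Fintype F] [DecidableEq F]
    (hq : Odd (Fintype.card F)) :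
    (algebraMap F (AlgebraicClosure F) '' A F 1 1 =
      delta (AlgebraicClosure F) ((Fintype.card F - 1) / 2) \ {2, -2}) ∧
    (algebraMap F (AlgebraicClosure F) '' A F (-1) 1 =
      delta (AlgebraicClosure F) ((Fintype.card F + 1) / 2) \ {2, -2}) ∧
    (algebraMap F (AlgebraicClosure F) '' A F (-1) (-1) =
      (delta (AlgebraicClosure F) (Fintype.card F - 1) \
        delta (AlgebraicClosure F) ((Fintype.card F - 1) / 2)) \ {2, -2}) ∧
    (algebraMap F (AlgebraicClosure F) '' A F 1 (-1) =
      (delta (AlgebraicClosure F) (Fintype.card F + 1) \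
        delta (AlgebraicClosure F) ((Fintype.card F + 1) / 2)) \ {2, -2}) ∧
    (A F 1 1).ncard = (Fintype.card F - 3) / 4 ∧
    (A F 1 (-1)).ncard = (Fintype.card F + 1) / 4 ∧
    (A F (-1) 1).ncard = (Fintype.card F - 1) / 4 ∧
    (A F (-1) (-1)).ncard = (Fintype.card F - 1) / 4 := by
  classical
  have hq1 : 1 < Fintype.card F := Fintype.one_lt_card
  have hqodd : Fintype.card F % 2 = 1 := Nat.odd_iff.mp hq
  have hχm1 := quadraticChar_neg_one (char_ne_two hq)
  have hcases : (quadraticChar F (-1) = 1 ∧ Fintype.card F % 4 = 1) ∨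
      (quadraticChar F (-1) = -1 ∧ Fintype.card F % 4 = 3) := by
    have h14 : Fintype.card F % 4 = 1 ∨ Fintype.card F % 4 = 3 := by omega
    rw [ZMod.χ₄_nat_eq_if_mod_four] at hχm1
    rcases h14 with h | h
    · left; exact ⟨by rw [hχm1, if_neg (by omega), if_pos h], h⟩
    · right; exact ⟨by rw [hχm1, if_neg (by omega), if_neg (by omega)], h⟩
  refine ⟨setEq_pp hq, setEq_mp hq, setEq_mm hq, setEq_pm hq, ?_, ?_, ?_, ?_⟩
  · rw [Acard]
    have hc := count_eq hq 1 1 (Or.inl rfl) (Or.inl rfl)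
    rcases hcases with ⟨hm, h4⟩ | ⟨hm, h4⟩ <;> rw [hm] at hc <;> omega
  · rw [Acard]
    have hc := count_eq hq 1 (-1) (Or.inl rfl) (Or.inr rfl)
    rcases hcases with ⟨hm, h4⟩ | ⟨hm, h4⟩ <;> rw [hm] at hc <;> omega
  · rw [Acard]
    have hc := count_eq hq (-1) 1 (Or.inr rfl) (Or.inl rfl)
    rcases hcases with ⟨hm, h4⟩ | ⟨hm, h4⟩ <;> rw [hm] at hc <;> omega
  · rw [Acard]
    have hc := count_eq hq (-1) (-1) (Or.inr rfl) (Or.inr rfl)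
    rcases hcases with ⟨hm, h4⟩ | ⟨hm, h4⟩ <;> rw [hm] at hc <;> omega
end

section
/- Let q be an odd prime power and k an odd positive integer. Let ε = (−1)^{(q−1)/2}. If a ∈ F_q satisfies χ(a−2) = −ε and χ(a+2) = −1 (χ the quadratic character), then D_k(a) also satisfies χ(D_k(a)−2) = −ε and χ(D_k(a)+2) = −1. -/
open Polynomial

section Aux

variable {F : Type*} [Field F] [Fintype F] [DecidableEq F]

lemma aux_char_ne_two (m : ℕ) (hm : Fintype.card F = 2 * m + 1) : ringChar F ≠ 2 := by
  intro h
  have := FiniteField.even_card_of_char_two (F := F) h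
  omega

lemma aux_chi_one (m : ℕ) (hm : Fintype.card F = 2 * m + 1) {x : F}
    (hx : quadraticChar F x = 1) : x ≠ 0 ∧ x ^ m = 1 := by
  have hchar := aux_char_ne_two m hm
  have hx0 : x ≠ 0 := by rintro rfl; rw [quadraticChar_zero] at hx; norm_num at hx
  refine ⟨hx0, ?_⟩
  have := (FiniteField.isSquare_iff hchar hx0).mp ((quadraticChar_one_iff_isSquare hx0).mp hx)
  have h2 : Fintype.card F / 2 = m := by omega
  rwa [h2] at this

lemma aux_chi_neg_one (m : ℕ) (hm : Fintype.card F = 2 * m + 1) {x : F}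
    (hx : quadraticChar F x = -1) : x ≠ 0 ∧ x ^ m = -1 := by
  have hchar := aux_char_ne_two m hm
  have hx0 : x ≠ 0 := by rintro rfl; rw [quadraticChar_zero] at hx; norm_num at hx
  refine ⟨hx0, ?_⟩
  have h2 : Fintype.card F / 2 = m := by omega
  rcases FiniteField.pow_dichotomy hchar hx0 with h | h
  · exfalso
    have := (quadraticChar_one_iff_isSquare hx0).mpr ((FiniteField.isSquare_iff hchar hx0).mpr h)
    omega
  · rwa [h2] at h

lemma aux_chi_one' (m : ℕ) (hm : Fintype.card F = 2 * m + 1) {x : F}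
    (hx0 : x ≠ 0) (hx : x ^ m = 1) : quadraticChar F x = 1 := by
  have hchar := aux_char_ne_two m hm
  have h2 : Fintype.card F / 2 = m := by omega
  exact (quadraticChar_one_iff_isSquare hx0).mpr
    ((FiniteField.isSquare_iff hchar hx0).mpr (by rwa [h2]))

lemma aux_chi_neg_one' (m : ℕ) (hm : Fintype.card F = 2 * m + 1) {x : F}
    (hx0 : x ≠ 0) (hx : x ^ m = -1) : quadraticChar F x = -1 := by
  have hchar := aux_char_ne_two m hm
  have h2 : Fintype.card F / 2 = m := by omega
  rw [quadraticChar_neg_one_iff_not_isSquare]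
  intro hs
  have := (FiniteField.isSquare_iff hchar hx0).mp hs
  rw [h2, hx] at this
  exact Ring.neg_one_ne_one_of_char_ne_two hchar this

/-- The case `q ≡ 1 (mod 4)`. -/
lemma aux_case_even (m : ℕ) (hm : Fintype.card F = 2 * m + 1) (hme : Even m)
    (k : ℕ) (hk : Odd k) (a : F)
    (h1 : quadraticChar F (a - 2) = -1) (h2 : quadraticChar F (a + 2) = -1) :
    quadraticChar F ((dickson 1 (1 : F) k).eval a - 2) = -1 ∧
    quadraticChar F ((dickson 1 (1 : F) k).eval a + 2) = -1 := by
  have hchar := aux_char_ne_two m hm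
  have h2F : (2 : F) ≠ 0 := Ring.two_ne_zero hchar
  have ha2 : a - 2 ≠ 0 := (aux_chi_neg_one m hm h1).1
  have hprod : quadraticChar F ((a - 2) * (a + 2)) = 1 := by
    rw [map_mul, h1, h2]; ring
  have hc0 : (a - 2) * (a + 2) ≠ 0 :=
    mul_ne_zero ha2 (aux_chi_neg_one m hm h2).1
  obtain ⟨s, hs⟩ := (quadraticChar_one_iff_isSquare hc0).mp hprod
  set y : F := (a + s) / 2 with hydef
  have hyy : y * ((a - s) / 2) = 1 := by
    field_simp [hydef]
    linear_combination hs / 2 + 2 * mul_inv_cancel₀ h2F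
  have hy0 : y ≠ 0 := left_ne_zero_of_mul_eq_one hyy
  have hyinv : (a - s) / 2 = y⁻¹ := eq_inv_of_mul_eq_one_left (by rw [mul_comm]; exact hyy)
  have hya : y + y⁻¹ = a := by rw [← hyinv, hydef]; field_simp; ring
  have hyi : y * y⁻¹ = 1 := mul_inv_cancel₀ hy0
  have hkey : y * (a - 2) = (y - 1) ^ 2 := by
    have : y * a = y ^ 2 + 1 := by rw [← hya]; field_simp
    linear_combination this
  have hy1 : y ≠ 1 := by
    intro h
    rw [h] at hkey
    simp at hkey
    exact ha2 hkey
  have hχy : quadraticChar F y = -1 := by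
    have h := quadraticChar_sq_one' (F := F) (sub_ne_zero.mpr hy1)
    rw [← hkey, map_mul, h1] at h
    omega
  set u : F := y ^ k with hudef
  have hu0 : u ≠ 0 := pow_ne_zero _ hy0
  have hχu : quadraticChar F u = -1 := by
    rw [hudef, map_pow, hχy, Odd.neg_one_pow hk]
  have hui : u * u⁻¹ = 1 := mul_inv_cancel₀ hu0
  have hD : (dickson 1 (1 : F) k).eval a = u + u⁻¹ := by
    rw [← hya, dickson_one_one_eval_add_inv y y⁻¹ hyi, ← inv_pow]
  have hu1 : u ≠ 1 := by
    intro h; rw [h, map_one] at hχu; norm_num at hχu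
  have hun1 : u ≠ -1 := by
    intro h
    have hsq : IsSquare (-1 : F) := by
      rw [FiniteField.isSquare_neg_one_iff, hm]
      obtain ⟨t, ht⟩ := hme
      omega
    have := (quadraticChar_one_iff_isSquare (by norm_num : (-1 : F) ≠ 0)).mpr hsq
    rw [h, this] at hχu
    norm_num at hχu
  constructor
  · have hkey2 : u * ((dickson 1 (1 : F) k).eval a - 2) = (u - 1) ^ 2 := by
      rw [hD]; linear_combination hui
    have h := quadraticChar_sq_one' (F := F) (sub_ne_zero.mpr hu1)
    rw [← hkey2, map_mul, hχu] at h
    omega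
  · have hkey2 : u * ((dickson 1 (1 : F) k).eval a + 2) = (u + 1) ^ 2 := by
      rw [hD]; linear_combination hui
    have hun1' : u + 1 ≠ 0 := by
      intro h; apply hun1; linear_combination h
    have h := quadraticChar_sq_one' (F := F) hun1'
    rw [← hkey2, map_mul, hχu] at h
    omega

/-- The case `q ≡ 3 (mod 4)`, argued in a quadratic extension `K` of `F`. -/
lemma aux_case_odd {K : Type*} [Field K] [Fintype K] [Algebra F K]
    (m : ℕ) (hm : Fintype.card F = 2 * m + 1) (hmo : Odd m)
    (hcardK : Fintype.card K = Fintype.card F ^ 2)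
    (k : ℕ) (hk : Odd k) (a : F) (s : K)
    (hs : s ^ 2 = algebraMap F K (a ^ 2 - 4))
    (h1 : quadraticChar F (a - 2) = 1) (h2 : quadraticChar F (a + 2) = -1) :
    quadraticChar F ((dickson 1 (1 : F) k).eval a - 2) = 1 ∧
    quadraticChar F ((dickson 1 (1 : F) k).eval a + 2) = -1 := by
  have hchar := aux_char_ne_two m hm
  set q := Fintype.card F with hqdef
  set A := algebraMap F K with hAdef
  have hAinj : Function.Injective A := (algebraMap F K).injective
  obtain ⟨ha2, ha2m⟩ := aux_chi_one m hm h1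
  obtain ⟨hb2, hb2m⟩ := aux_chi_neg_one m hm h2
  have hmne : m ≠ 0 := by rintro rfl; norm_num at hmo
  -- characteristic and Frobenius facts
  set p := ringChar F with hpdef
  haveI hCF : CharP F p := ringChar.charP F
  have hp : p.Prime := CharP.char_is_prime F p
  haveI := Fact.mk hp
  haveI hCK : CharP K p := charP_of_injective_algebraMap hAinj p
  have hcharK2 : ringChar K ≠ 2 := by
    rw [ringChar.eq K p]; exact hchar
  obtain ⟨n, -, hqn⟩ := FiniteField.card F p
  have hfrob : ∀ x z : K, (x + z) ^ q = x ^ q + z ^ q := by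
    intro x z
    rw [hqdef, hqn]
    exact add_pow_char_pow x z p ↑n
  have hqodd : Odd q := ⟨m, by omega⟩
  have hsub : ∀ x z : K, (x - z) ^ q = x ^ q - z ^ q := by
    intro x z
    rw [sub_eq_add_neg, hfrob, Odd.neg_pow hqodd, sub_eq_add_neg]
  have hxq : ∀ x : F, (A x) ^ q = A x := by
    intro x; rw [hqdef, ← map_pow, FiniteField.pow_card]
  have hcm : (a ^ 2 - 4) ^ m = -1 := by
    have h : a ^ 2 - 4 = (a - 2) * (a + 2) := by ring
    rw [h, mul_pow, ha2m, hb2m, one_mul]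
  -- the element y with y + y⁻¹ = a
  have hsq : s ^ q = -s := by
    calc s ^ q = s ^ (2 * m + 1) := by rw [hm]
    _ = (s ^ 2) ^ m * s := by rw [pow_succ, pow_mul]
    _ = A ((a ^ 2 - 4) ^ m) * s := by rw [hs, map_pow]
    _ = -s := by rw [hcm, map_neg, map_one, neg_one_mul]
  have h2K : (2 : K) ≠ 0 := Ring.two_ne_zero hcharK2
  set y : K := (A a + s) / 2 with hydef
  have hy4 : (A a) ^ 2 - s ^ 2 = 4 := by
    rw [hs, ← map_pow, ← map_sub]
    have h : a ^ 2 - (a ^ 2 - 4) = 4 := by ring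
    rw [h, map_ofNat]
  have hyy : y * ((A a - s) / 2) = 1 := by
    field_simp [hydef]
    linear_combination hy4 / 2 + 2 * mul_inv_cancel₀ h2K
  have hy0 : y ≠ 0 := left_ne_zero_of_mul_eq_one hyy
  have hyinv : (A a - s) / 2 = y⁻¹ := eq_inv_of_mul_eq_one_left (by rw [mul_comm]; exact hyy)
  have hya : y + y⁻¹ = A a := by rw [← hyinv, hydef]; field_simp; ring
  have hyi : y * y⁻¹ = 1 := mul_inv_cancel₀ hy0
  have hyq : y ^ q = y⁻¹ := by
    have h2q : (2 : K) ^ q = 2 := by have := hxq 2; rwa [map_ofNat] at this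
    rw [← hyinv, hydef, div_pow, hfrob, hxq, hsq, h2q, sub_eq_add_neg]
  have hyq1 : y ^ (q + 1) = 1 := by rw [pow_succ, hyq, inv_mul_cancel₀ hy0]
  have hyM : y ^ ((q + 1) * m) = 1 := by rw [pow_mul, hyq1, one_pow]
  -- key norm computations
  have hy1q : (y - 1) ^ (q + 1) = -(A (a - 2)) := by
    have h1' : (y - 1) ^ q = y⁻¹ - 1 := by rw [hsub, hyq, one_pow]
    rw [pow_succ, h1', map_sub, map_ofNat, ← hya]
    linear_combination hyi
  have hy1M : (y - 1) ^ ((q + 1) * m) = -1 := by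
    rw [pow_mul, hy1q, neg_pow, Odd.neg_one_pow hmo, ← map_pow, ha2m, map_one, mul_one]
  have hy2q : (y + 1) ^ (q + 1) = A (a + 2) := by
    have h1' : (y + 1) ^ q = y⁻¹ + 1 := by rw [hfrob, hyq, one_pow]
    rw [pow_succ, h1', map_add, map_ofNat, ← hya]
    linear_combination hyi
  -- squares in K
  have hcardK2' : Fintype.card K / 2 = (q + 1) * m := by
    have h : q ^ 2 = 2 * ((q + 1) * m) + 1 := by rw [hm]; ring
    rw [hcardK]
    omega
  have hsqK : ∀ x : K, x ≠ 0 → x ^ ((q + 1) * m) = 1 → ∃ v : K, v * v = x := by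
    intro x hx0 hx
    obtain ⟨v, hv⟩ := (FiniteField.isSquare_iff hcharK2 hx0).mpr (by rwa [hcardK2'])
    exact ⟨v, hv.symm⟩
  have hqq : ∀ v : K, v ^ (q + 1) * v ^ (q + 1) = 1 → (v ^ q) ^ q = v := by
    intro v hv
    have h : q * q = (q + 1) * (2 * m) + 1 := by rw [hm]; ring
    rw [← pow_mul, h, pow_succ]
    have h' : v ^ ((q + 1) * (2 * m)) = 1 := by
      have e : (q + 1) * (2 * m) = ((q + 1) + (q + 1)) * m := by ring
      rw [e, pow_mul, pow_add, hv, one_pow]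
    rw [h', one_mul]
  have hexp : (q + 1) * m = (q - 1) * (m + 1) := by
    have h' : q - 1 = 2 * m := by omega
    rw [h', hm]; ring
  -- y ^ (m+1) = -1
  set δ : K := y ^ (m + 1) with hδdef
  have hδ2 : δ * δ = 1 := by
    rw [hδdef, ← pow_add, show m + 1 + (m + 1) = q + 1 by omega, hyq1]
  have hδ : δ = -1 := by
    rcases mul_self_eq_one_iff.mp hδ2 with h | h
    · exfalso
      obtain ⟨v, hv⟩ := hsqK y hy0 hyM
      have hv0 : v ≠ 0 := by
        rintro rfl; rw [mul_zero] at hv; exact hy0 hv.symm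
      have hvq1 : v ^ (q + 1) = 1 := by
        have h' : v ^ (q + 1) = (v * v) ^ (m + 1) := by
          rw [show q + 1 = 2 * (m + 1) by omega, pow_mul, pow_two]
        rw [h', hv, ← hδdef, h]
      set w := v - v ^ q with hwdef
      have hw0 : w ≠ 0 := by
        intro hw
        have hvq : v ^ q = v := ((sub_eq_zero.mp hw).symm)
        have hy1 : y = 1 := by
          rw [← hv, ← hvq1, pow_succ, hvq]
        have ha : a = 2 := by
          apply hAinj
          rw [map_ofNat, ← hya, hy1]
          norm_num
        exact ha2 (by rw [ha, sub_self])
      have hwq : w ^ q = -w := by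
        rw [hwdef, hsub, hqq v (by rw [hvq1, one_mul])]
        ring
      have hwq1 : w ^ (q - 1) = -1 := by
        have h' : w ^ (q - 1) * w = -w := by
          rw [← pow_succ, show q - 1 + 1 = q by omega, hwq]
        exact mul_right_cancel₀ hw0 (by rw [h']; ring)
      have hwM : w ^ ((q + 1) * m) = 1 := by
        rw [hexp, pow_mul, hwq1, Even.neg_one_pow (Odd.add_one hmo)]
      have hyv : y - 1 = v * w := by
        have hvv : v * v ^ q = v ^ (q + 1) := by rw [pow_succ]; ring
        rw [hwdef, mul_sub, hvv, hvq1, hv]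
      have hcontra : (y - 1) ^ ((q + 1) * m) = 1 := by
        rw [hyv, mul_pow, hwM, pow_mul, hvq1, one_pow, mul_one]
      exact Ring.neg_one_ne_one_of_char_ne_two hcharK2 (by rw [← hy1M, hcontra])
    · exact h
  -- the element u = y ^ k
  set u : K := y ^ k with hudef
  have hu0 : u ≠ 0 := pow_ne_zero _ hy0
  have hui : u * u⁻¹ = 1 := mul_inv_cancel₀ hu0
  have huq : u ^ q = u⁻¹ := by
    rw [hudef, ← pow_mul, mul_comm, pow_mul, hyq, inv_pow]
  have huq1 : u ^ (q + 1) = 1 := by rw [pow_succ, huq, inv_mul_cancel₀ hu0]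
  have huj : u ^ (m + 1) = -1 := by
    rw [hudef, ← pow_mul, mul_comm, pow_mul, ← hδdef, hδ, Odd.neg_one_pow hk]
  have hu1 : u ≠ 1 := by
    intro h
    rw [h, one_pow] at huj
    exact Ring.neg_one_ne_one_of_char_ne_two hcharK2 huj.symm
  have hun : u ≠ -1 := by
    intro h
    rw [h, Even.neg_one_pow (Odd.add_one hmo)] at huj
    exact Ring.neg_one_ne_one_of_char_ne_two hcharK2 huj.symm
  have huM : u ^ ((q + 1) * m) = 1 := by rw [pow_mul, huq1, one_pow]
  obtain ⟨V, hV⟩ := hsqK u hu0 huM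
  have hV0 : V ≠ 0 := by
    rintro rfl; rw [mul_zero] at hV; exact hu0 hV.symm
  have hVq1 : V ^ (q + 1) = -1 := by
    have h' : V ^ (q + 1) = (V * V) ^ (m + 1) := by
      rw [show q + 1 = 2 * (m + 1) by omega, pow_mul, pow_two]
    rw [h', hV, huj]
  have hVqq : (V ^ q) ^ q = V := hqq V (by rw [hVq1]; ring)
  have hVM : V ^ ((q + 1) * m) = -1 := by rw [pow_mul, hVq1, Odd.neg_one_pow hmo]
  have hvv : V * V ^ q = V ^ (q + 1) := by rw [pow_succ]; ring
  -- W1 = V + V^q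
  set W1 := V + V ^ q with hW1def
  have hW10 : W1 ≠ 0 := by
    intro h
    have hVq : V ^ q = -V := eq_neg_of_add_eq_zero_right h
    have h' : V ^ (q + 1) = -u := by rw [pow_succ, hVq, ← hV]; ring
    rw [hVq1] at h'
    exact hu1 (neg_inj.mp h').symm
  have hW1q : W1 ^ q = W1 := by rw [hW1def, hfrob, hVqq, add_comm]
  have hW1q1 : W1 ^ (q - 1) = 1 := by
    have h' : W1 ^ (q - 1) * W1 = W1 := by
      rw [← pow_succ, show q - 1 + 1 = q by omega, hW1q]
    exact mul_right_cancel₀ hW10 (by rw [h', one_mul])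
  have hW1M : W1 ^ ((q + 1) * m) = 1 := by rw [hexp, pow_mul, hW1q1, one_pow]
  have hu1V : u - 1 = V * W1 := by
    rw [hW1def, mul_add, hvv, hVq1, hV]; ring
  have hu1M : (u - 1) ^ ((q + 1) * m) = -1 := by
    rw [hu1V, mul_pow, hVM, hW1M, mul_one]
  -- W2 = V - V^q
  set W2 := V - V ^ q with hW2def
  have hW20 : W2 ≠ 0 := by
    intro h
    have hVq : V ^ q = V := (sub_eq_zero.mp h).symm
    apply hun
    have h' : V ^ (q + 1) = u := by rw [pow_succ, hVq, hV]
    rw [hVq1] at h'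
    exact h'.symm
  have hW2q : W2 ^ q = -W2 := by rw [hW2def, hsub, hVqq]; ring
  have hW2q1 : W2 ^ (q - 1) = -1 := by
    have h' : W2 ^ (q - 1) * W2 = -W2 := by
      rw [← pow_succ, show q - 1 + 1 = q by omega, hW2q]
    exact mul_right_cancel₀ hW20 (by rw [h']; ring)
  have hW2M : W2 ^ ((q + 1) * m) = 1 := by
    rw [hexp, pow_mul, hW2q1, Even.neg_one_pow (Odd.add_one hmo)]
  have hu2V : u + 1 = V * W2 := by
    rw [hW2def, mul_sub, hvv, hVq1, hV]; ring
  have hu2M : (u + 1) ^ ((q + 1) * m) = -1 := by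
    rw [hu2V, mul_pow, hVM, hW2M, mul_one]
  -- the Dickson value
  have hAD : A ((dickson 1 (1 : F) k).eval a) = u + u⁻¹ := by
    have h' : A ((dickson 1 (1 : F) k).eval a) = ((dickson 1 (1 : F) k).map A).eval (A a) := by
      rw [eval_map, eval₂_hom]
    rw [h', map_dickson, map_one, ← hya, dickson_one_one_eval_add_inv y y⁻¹ hyi, inv_pow, ← hudef]
  have hD2 : A ((dickson 1 (1 : F) k).eval a - 2) = -((u - 1) ^ (q + 1)) := by
    have h1' : (u - 1) ^ (q + 1) = 2 - (u + u⁻¹) := by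
      have h2' : (u - 1) ^ q = u⁻¹ - 1 := by rw [hsub, huq, one_pow]
      rw [pow_succ, h2']
      linear_combination hui
    rw [map_sub, map_ofNat, hAD, h1']
    ring
  have hD2m : ((dickson 1 (1 : F) k).eval a - 2) ^ m = 1 := by
    apply hAinj
    rw [map_pow, map_one, hD2, neg_pow, Odd.neg_one_pow hmo, ← pow_mul, hu1M]
    ring
  have hD2ne : (dickson 1 (1 : F) k).eval a - 2 ≠ 0 := by
    intro h
    have h0 := hD2
    rw [h, map_zero] at h0
    have h' : (u - 1) ^ (q + 1) = 0 := by rwa [eq_comm, neg_eq_zero] at h0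
    exact hu1 (sub_eq_zero.mp ((pow_eq_zero_iff (by omega : q + 1 ≠ 0)).mp h'))
  refine ⟨aux_chi_one' m hm hD2ne hD2m, ?_⟩
  have hD3 : A ((dickson 1 (1 : F) k).eval a + 2) = (u + 1) ^ (q + 1) := by
    have h1' : (u + 1) ^ (q + 1) = 2 + (u + u⁻¹) := by
      have h2' : (u + 1) ^ q = u⁻¹ + 1 := by rw [hfrob, huq, one_pow]
      rw [pow_succ, h2']
      linear_combination hui
    rw [map_add, map_ofNat, hAD, h1']
    ring
  have hD3m : ((dickson 1 (1 : F) k).eval a + 2) ^ m = -1 := by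
    apply hAinj
    rw [map_pow, map_neg, map_one, hD3, ← pow_mul, hu2M]
  have hD3ne : (dickson 1 (1 : F) k).eval a + 2 ≠ 0 := by
    intro h
    have h0 := hD3
    rw [h, map_zero] at h0
    exact hun (eq_neg_of_add_eq_zero_left ((pow_eq_zero_iff (by omega : q + 1 ≠ 0)).mp h0.symm))
  exact aux_chi_neg_one' m hm hD3ne hD3m

end Aux

theorem stmt11 (F : Type*) [Field F] [Fintype F] [DecidableEq F]
    (hq : Odd (Fintype.card F)) (k : ℕ) (hk : Odd k) (hk1 : 1 ≤ k) (a : F)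
    (h1 : quadraticChar F (a - 2) = -((-1 : ℤ) ^ ((Fintype.card F - 1) / 2)))
    (h2 : quadraticChar F (a + 2) = -1) :
    quadraticChar F ((dickson 1 (1 : F) k).eval a - 2) =
      -((-1 : ℤ) ^ ((Fintype.card F - 1) / 2)) ∧
    quadraticChar F ((dickson 1 (1 : F) k).eval a + 2) = -1 := by
  classical
  obtain ⟨m, hm⟩ := hq
  have hm' : Fintype.card F = 2 * m + 1 := by omega
  have hm2 : (Fintype.card F - 1) / 2 = m := by omega
  rw [hm2] at h1 ⊢
  rcases Nat.even_or_odd m with hme | hmo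
  · rw [Even.neg_one_pow hme] at h1 ⊢
    exact aux_case_even m hm' hme k hk a h1 h2
  · rw [Odd.neg_one_pow hmo, neg_neg] at h1 ⊢
    -- build the quadratic extension
    have hchar := aux_char_ne_two m hm'
    have ha2m := (aux_chi_one m hm' h1).2
    have hb2m := (aux_chi_neg_one m hm' h2).2
    have hcm : (a ^ 2 - 4) ^ m = -1 := by
      have h : a ^ 2 - 4 = (a - 2) * (a + 2) := by ring
      rw [h, mul_pow, ha2m, hb2m, one_mul]
    have hc0 : a ^ 2 - 4 ≠ 0 := by
      intro h
      rw [h, zero_pow (by rintro rfl; norm_num at hmo)] at hcm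
      exact (by norm_num : (0 : F) ≠ -1) hcm
    have hnsq : ∀ b : F, b ^ 2 ≠ a ^ 2 - 4 := by
      intro b hb
      have hb0 : b ≠ 0 := by rintro rfl; rw [zero_pow (by norm_num)] at hb; exact hc0 hb.symm
      have h1' : b ^ (Fintype.card F - 1) = 1 := FiniteField.pow_card_sub_one_eq_one b hb0
      have h2' : Fintype.card F - 1 = 2 * m := by omega
      rw [h2', pow_mul, hb, hcm] at h1'
      exact Ring.neg_one_ne_one_of_char_ne_two hchar h1'
    have hirr : Irreducible (X ^ 2 - C (a ^ 2 - 4) : F[X]) :=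
      X_pow_sub_C_irreducible_of_prime Nat.prime_two hnsq
    haveI := Fact.mk hirr
    have hf0 : (X ^ 2 - C (a ^ 2 - 4) : F[X]) ≠ 0 := hirr.ne_zero
    letI : Fintype (AdjoinRoot (X ^ 2 - C (a ^ 2 - 4) : F[X])) :=
      Module.fintypeOfFintype (AdjoinRoot.powerBasis hf0).basis
    have hcardK : Fintype.card (AdjoinRoot (X ^ 2 - C (a ^ 2 - 4) : F[X])) =
        Fintype.card F ^ 2 := by
      rw [Module.card_eq_pow_finrank (K := F), (AdjoinRoot.powerBasis hf0).finrank,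
        AdjoinRoot.powerBasis_dim]
      congr 1
      rw [natDegree_X_pow_sub_C]
    have hs : (AdjoinRoot.root (X ^ 2 - C (a ^ 2 - 4) : F[X])) ^ 2 =
        algebraMap F (AdjoinRoot (X ^ 2 - C (a ^ 2 - 4) : F[X])) (a ^ 2 - 4) := by
      have h := AdjoinRoot.eval₂_root (X ^ 2 - C (a ^ 2 - 4) : F[X])
      rw [eval₂_sub, eval₂_pow, eval₂_X, eval₂_C, sub_eq_zero] at h
      rw [h, AdjoinRoot.algebraMap_eq]
    exact aux_case_odd m hm' hmo hcardK k hk a _ hs h1 h2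
end

section
/- Let q = p^n be an odd prime power, with p not dividing k, k ≥ 1. Then in the algebraic closure of F_p, D_k(x) = ∏_{a ∈ ⟨μ_{4k}⟩∖⟨μ_{2k}⟩} (x − a), where ⟨μ_d⟩ = {u + 1/u : u^d = 1}. -/
open Polynomial

section Aux

variable {K : Type*} [Field K]

lemma dickson_deg :
    ∀ n : ℕ, (dickson 1 (1 : K) n).natDegree ≤ n ∧
      (dickson 1 (1 : K) (n + 1)).Monic ∧ (dickson 1 (1 : K) (n + 1)).natDegree = n + 1
  | 0 => by
    refine ⟨?_, by simpa using monic_X, by simp⟩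
    rw [dickson_zero]
    norm_num
  | n + 1 => by
    obtain ⟨hle, hm, hd⟩ := dickson_deg n
    refine ⟨hd.le, ?_⟩
    rw [dickson_add_two, map_one, one_mul]
    have hmX : (X * dickson 1 (1 : K) (n + 1)).Monic := monic_X.mul hm
    have hdX : (X * dickson 1 (1 : K) (n + 1)).natDegree = n + 2 := by
      rw [natDegree_mul X_ne_zero hm.ne_zero, natDegree_X, hd]; omega
    have hlt : (dickson 1 (1 : K) n).degree < (X * dickson 1 (1 : K) (n + 1)).degree := by
      rw [degree_eq_natDegree hmX.ne_zero, hdX]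
      calc (dickson 1 (1 : K) n).degree
          ≤ ((dickson 1 (1 : K) n).natDegree : WithBot ℕ) := degree_le_natDegree
        _ ≤ (n : WithBot ℕ) := by exact_mod_cast hle
        _ < ((n + 2 : ℕ) : WithBot ℕ) := by exact_mod_cast (by omega : n < n + 2)
    have hnlt : (dickson 1 (1 : K) n).natDegree < (X * dickson 1 (1 : K) (n + 1)).natDegree := by
      rw [hdX]; omega
    exact ⟨hmX.sub_of_left hlt, by rw [natDegree_sub_eq_left_of_natDegree_lt hnlt, hdX]⟩

lemma two_rep {u v : K} (hu : u ≠ 0) (hv : v ≠ 0) (e : v + v⁻¹ = u + u⁻¹) :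
    v = u ∨ v = u⁻¹ := by
  have hu1 : u * u⁻¹ = 1 := mul_inv_cancel₀ hu
  have hv1 : v * v⁻¹ = 1 := mul_inv_cancel₀ hv
  have h : (v - u) * (v - u⁻¹) = 0 := by
    linear_combination v * e + hu1 - hv1
  rcases mul_eq_zero.mp h with h | h
  · exact Or.inl (sub_eq_zero.mp h)
  · exact Or.inr (sub_eq_zero.mp h)

end Aux

theorem stmt13 (p : ℕ) [Fact p.Prime] (hp : p ≠ 2) (k : ℕ) (hk : 1 ≤ k) (hpk : ¬ p ∣ k) :
    dickson 1 (1 : AlgebraicClosure (ZMod p)) k =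
      ∏ᶠ a ∈ (delta (AlgebraicClosure (ZMod p)) (4 * k) \
        delta (AlgebraicClosure (ZMod p)) (2 * k)), (X - C a) := by
  classical
  set K := AlgebraicClosure (ZMod p) with hK
  have hpp : p.Prime := Fact.out
  haveI : CharP K p := inferInstanceAs (CharP (AlgebraicClosure (ZMod p)) p)
  have h2 : (2 : K) ≠ 0 := by
    intro h
    have h' : ((2 : ℕ) : K) = 0 := by exact_mod_cast h
    exact hp ((Nat.prime_dvd_prime_iff_eq hpp Nat.prime_two).mp
      ((CharP.cast_eq_zero_iff K p 2).mp h'))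
  have hneg1 : (-1 : K) ≠ 1 := by
    intro h
    apply h2
    linear_combination -h
  have h2k0 : 2 * k ≠ 0 := by positivity
  have h2kK : ((2 * k : ℕ) : K) ≠ 0 := by
    intro h0
    have hdvd := (CharP.cast_eq_zero_iff K p (2 * k)).mp h0
    rcases (Nat.Prime.dvd_mul hpp).mp hdvd with h | h
    · exact hp ((Nat.prime_dvd_prime_iff_eq hpp Nat.prime_two).mp h)
    · exact hpk h
  -- the polynomial X^(2k) + 1 and its roots
  set P : K[X] := X ^ (2 * k) - C (-1 : K) with hP
  have hPmonic : P.Monic := monic_X_pow_sub_C _ h2k0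
  have hPdeg : P.natDegree = 2 * k := natDegree_X_pow_sub_C
  have hPsep : P.Separable := separable_X_pow_sub_C (-1) h2kK (by norm_num)
  have hProots : Multiset.card P.roots = 2 * k := by
    rw [splits_iff_card_roots.mp (IsAlgClosed.splits P), hPdeg]
  set T : Finset K := P.roots.toFinset with hT
  have hTmem : ∀ u : K, u ∈ T ↔ u ^ (2 * k) = -1 := by
    intro u
    rw [hT, Multiset.mem_toFinset, mem_roots hPmonic.ne_zero]
    simp only [hP, IsRoot, eval_sub, eval_pow, eval_X, eval_C, sub_eq_zero]
  have hTcard : T.card = 2 * k := by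
    rw [hT, Multiset.toFinset_card_of_nodup (nodup_roots hPsep), hProots]
  -- basic facts about elements u with u^(2k) = -1
  have hune : ∀ u : K, u ^ (2 * k) = -1 → u ≠ 0 := by
    intro u hu h0
    rw [h0, zero_pow h2k0] at hu
    exact one_ne_zero (by linear_combination hu : (1 : K) = 0)
  have huinv : ∀ u : K, u ^ (2 * k) = -1 → (u⁻¹) ^ (2 * k) = -1 := by
    intro u hu
    rw [inv_pow, hu]
    norm_num
  have husq : ∀ u : K, u ^ (2 * k) = -1 → u ≠ u⁻¹ := by
    intro u hu h
    have hu0 := hune u hu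
    have : u ^ 2 = 1 := by
      rw [sq]
      nth_rewrite 2 [h]
      exact mul_inv_cancel₀ hu0
    rw [show 2 * k = 2 * k from rfl, pow_mul, this, one_pow] at hu
    exact hneg1 hu.symm
  -- the set Δ(4k) \ Δ(2k)
  have hSet : delta K (4 * k) \ delta K (2 * k) =
      {a : K | ∃ u : K, u ^ (2 * k) = -1 ∧ a = u + u⁻¹} := by
    ext a
    constructor
    · rintro ⟨⟨u, hu4, rfl⟩, hnot⟩
      have hu0 : u ≠ 0 := by
        intro h0
        rw [h0, zero_pow (by positivity)] at hu4
        exact one_ne_zero hu4.symm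
      have : u ^ (2 * k) * u ^ (2 * k) = 1 := by
        rw [← pow_add]
        rw [show 2 * k + 2 * k = 4 * k by ring]
        exact hu4
      rcases mul_self_eq_one_iff.mp this with h | h
      · exact absurd ⟨u, h, rfl⟩ hnot
      · exact ⟨u, h, rfl⟩
    · rintro ⟨u, hu, rfl⟩
      have hu0 := hune u hu
      refine ⟨⟨u, ?_, rfl⟩, ?_⟩
      · rw [show 4 * k = 2 * k * 2 by ring, pow_mul, hu]
        norm_num
      · rintro ⟨v, hv, hve⟩
        have hv0 : v ≠ 0 := by
          intro h0
          rw [h0, zero_pow h2k0] at hv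
          exact one_ne_zero hv.symm
        rcases two_rep hu0 hv0 hve.symm with rfl | rfl
        · rw [hu] at hv; exact hneg1 hv
        · rw [huinv u hu] at hv; exact hneg1 hv
  -- root characterization of dickson 1 1 k
  have hroot : ∀ a : K, (dickson 1 (1 : K) k).eval a = 0 ↔
      ∃ u : K, u ^ (2 * k) = -1 ∧ a = u + u⁻¹ := by
    intro a
    constructor
    · intro ha
      -- find u with u + u⁻¹ = a
      obtain ⟨u, hu⟩ := IsAlgClosed.exists_root (X ^ 2 - C a * X + C 1 : K[X]) (by
        have hnd : (X ^ 2 - C a * X + C 1 : K[X]).natDegree = 2 := by compute_degree!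
        have hne : (X ^ 2 - C a * X + C 1 : K[X]) ≠ 0 := fun h0 => by rw [h0] at hnd; simp at hnd
        rw [degree_eq_natDegree hne, hnd]
        simp)
      have hu' : u ^ 2 - a * u + 1 = 0 := by
        simpa [IsRoot] using hu
      have hu0 : u ≠ 0 := by
        intro h0
        rw [h0] at hu'
        simp at hu'
      have hae : a = u + u⁻¹ := by
        have hinv : u⁻¹ = a - u := inv_eq_of_mul_eq_one_right (by linear_combination -hu')
        rw [hinv]; ring
      refine ⟨u, ?_, hae⟩
      rw [hae, dickson_one_one_eval_add_inv u u⁻¹ (mul_inv_cancel₀ hu0)] at ha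
      have hk' : u ^ k * u ^ k = -1 := by
        have := congrArg (· * u ^ k) ha
        simp only [add_mul, zero_mul] at this
        rw [inv_pow, inv_mul_cancel₀ (pow_ne_zero k hu0)] at this
        linear_combination this
      rw [two_mul, pow_add]
      exact hk'
    · rintro ⟨u, hu, rfl⟩
      have hu0 := hune u hu
      rw [dickson_one_one_eval_add_inv u u⁻¹ (mul_inv_cancel₀ hu0)]
      have hk' : u ^ k * u ^ k = -1 := by
        rw [← pow_add, ← two_mul]
        exact hu
      have : (u ^ k)⁻¹ = -u ^ k := by
        refine inv_eq_of_mul_eq_one_right ?_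
        linear_combination -hk'
      rw [inv_pow, this]
      ring
  -- the finset S
  set S : Finset K := T.image (fun u => u + u⁻¹) with hS
  have hSmem : ∀ a : K, a ∈ S ↔ ∃ u : K, u ^ (2 * k) = -1 ∧ a = u + u⁻¹ := by
    intro a
    rw [hS, Finset.mem_image]
    constructor
    · rintro ⟨u, hu, rfl⟩
      exact ⟨u, (hTmem u).mp hu, rfl⟩
    · rintro ⟨u, hu, rfl⟩
      exact ⟨u, (hTmem u).mpr hu, rfl⟩
  have hScard : S.card = k := by
    have hfib : T.card = ∑ b ∈ S, (T.filter fun u => u + u⁻¹ = b).card :=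
      Finset.card_eq_sum_card_fiberwise (fun u hu => Finset.mem_image_of_mem _ hu)
    have hfib2 : ∀ b ∈ S, (T.filter fun u => u + u⁻¹ = b).card = 2 := by
      intro b hb
      obtain ⟨u, hu, rfl⟩ := (hSmem b).mp hb
      have hu0 := hune u hu
      have : (T.filter fun v => v + v⁻¹ = u + u⁻¹) = {u, u⁻¹} := by
        ext v
        simp only [Finset.mem_filter, Finset.mem_insert, Finset.mem_singleton]
        constructor
        · rintro ⟨hvT, hve⟩
          exact two_rep hu0 (hune v ((hTmem v).mp hvT)) hve
        · rintro (rfl | rfl)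
          · exact ⟨(hTmem v).mpr hu, rfl⟩
          · exact ⟨(hTmem _).mpr (huinv u hu), by rw [inv_inv, add_comm]⟩
      rw [this, Finset.card_insert_of_notMem (by simpa using husq u hu),
        Finset.card_singleton]
    rw [hTcard, Finset.sum_congr rfl hfib2, Finset.sum_const, smul_eq_mul] at hfib
    omega
  -- dickson is monic of natDegree k
  obtain ⟨k', rfl⟩ : ∃ k', k = k' + 1 := ⟨k - 1, (Nat.succ_pred_eq_of_pos hk).symm⟩
  obtain ⟨-, hmonic, hdeg⟩ := dickson_deg (K := K) k'
  set D : K[X] := dickson 1 (1 : K) (k' + 1) with hD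
  have hDroots : Multiset.card D.roots = k' + 1 := by
    rw [splits_iff_card_roots.mp (IsAlgClosed.splits D), hdeg]
  have hDfin : D.roots.toFinset = S := by
    ext a
    rw [Multiset.mem_toFinset, mem_roots hmonic.ne_zero, hSmem]
    exact hroot a
  have hnodup : D.roots.Nodup := by
    have hle : D.roots.dedup ≤ D.roots := D.roots.dedup_le
    have hcard : Multiset.card D.roots ≤ Multiset.card D.roots.dedup := by
      have : Multiset.card D.roots.dedup = k' + 1 := by
        have := congrArg Finset.card hDfin
        rw [hScard] at this
        exact this
      rw [this, hDroots]
    have := Multiset.eq_of_le_of_card_le hle hcard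
    rw [← this]
    exact D.roots.nodup_dedup
  have hprod : D = ∏ a ∈ S, (X - C a) := by
    have hval : S.val = D.roots := by
      rw [← hDfin, Multiset.toFinset_val]
      exact Multiset.dedup_eq_self.mpr hnodup
    have heq : ∏ a ∈ S, (X - C a) = (D.roots.map fun a => X - C a).prod := by
      rw [Finset.prod_eq_multiset_prod, hval]
    rw [heq]
    exact (IsAlgClosed.splits D).eq_prod_roots_of_monic hmonic
  -- conclusion
  rw [show (4 * (k' + 1)) = 4 * (k' + 1) from rfl]
  have hcoe : (↑S : Set K) = delta K (4 * (k' + 1)) \ delta K (2 * (k' + 1)) := by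
    rw [hSet]
    ext a
    simp only [Finset.coe_image, Set.mem_image, Set.mem_setOf_eq]
    rw [← hSmem a, hS, Finset.mem_coe, Finset.mem_image]
  rw [← hcoe, finprod_mem_coe_finset]
  exact hprod
end

section
/- Let q be an odd prime power. Then E_{(q−3)/2}(x) = ∏_{a ∈ S_q} (x − a) and E_{(q−1)/2}(x) = ∏_{a ∈ N_q} (x − a) in F_q[x], where S_q = {a ∈ F_q : a²−4 is a nonzero square} and N_q = {a ∈ F_q : a²−4 is a nonsquare}. -/
open Polynomial


private lemma dicksonE_monic_natDegree' {R : Type*} [CommRing R] [Nontrivial R] (a : R) :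
    ∀ n, (dickson 2 a n).Monic ∧ (dickson 2 a n).natDegree = n
  | 0 => by
    have h : dickson 2 a 0 = 1 := by
      rw [dickson_zero]; norm_num
    rw [h]; exact ⟨monic_one, natDegree_one⟩
  | 1 => by rw [dickson_one]; exact ⟨monic_X, natDegree_X⟩
  | n + 2 => by
    obtain ⟨h1m, h1d⟩ := dicksonE_monic_natDegree' a (n + 1)
    obtain ⟨h0m, h0d⟩ := dicksonE_monic_natDegree' a n
    rw [dickson_add_two]
    have hxm : (X * dickson 2 a (n + 1)).Monic := monic_X.mul h1m
    have hxd : (X * dickson 2 a (n + 1)).natDegree = n + 2 := by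
      rw [monic_X.natDegree_mul h1m, natDegree_X, h1d]; omega
    have hlt : (C a * dickson 2 a n).degree < (X * dickson 2 a (n + 1)).degree := by
      have h2 : (C a * dickson 2 a n).degree ≤ (n : WithBot ℕ) := by
        refine (degree_mul_le _ _).trans ?_
        have : (dickson 2 a n).degree = (n : WithBot ℕ) := by
          rw [degree_eq_natDegree h0m.ne_zero, h0d]
        rw [this]
        calc (C a).degree + (n : WithBot ℕ) ≤ 0 + (n : WithBot ℕ) :=
              add_le_add degree_C_le le_rfl
          _ = (n : WithBot ℕ) := zero_add _
      have h3 : (X * dickson 2 a (n + 1)).degree = ((n + 2 : ℕ) : WithBot ℕ) := by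
        rw [degree_eq_natDegree hxm.ne_zero, hxd]
      rw [h3]
      exact lt_of_le_of_lt h2 (by exact_mod_cast Nat.lt_add_of_pos_right (by norm_num))
    refine ⟨hxm.sub_of_left hlt, ?_⟩
    rw [natDegree_sub_eq_left_of_natDegree_lt, hxd]
    rw [hxd]
    calc (C a * dickson 2 a n).natDegree ≤ (C a).natDegree + (dickson 2 a n).natDegree :=
          natDegree_mul_le
      _ ≤ n := by rw [natDegree_C, h0d]; omega
      _ < n + 2 := by omega

private lemma dicksonE_eval' {R : Type*} [CommRing R] {x y : R} (h : x * y = 1) :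
    ∀ n, (x - y) * (dickson 2 (1 : R) n).eval (x + y) = x ^ (n + 1) - y ^ (n + 1)
  | 0 => by
    have h0 : dickson 2 (1 : R) 0 = 1 := by rw [dickson_zero]; norm_num
    rw [h0]; simp
  | 1 => by rw [dickson_one]; simp; ring
  | n + 2 => by
    have e1 := dicksonE_eval' h (n + 1)
    have e0 := dicksonE_eval' h n
    simp only [dickson_add_two, C_1, eval_sub, eval_mul, eval_X, one_mul]
    linear_combination (x + y) * e1 - e0 + (x ^ (n + 1) - y ^ (n + 1)) * h

private lemma dickson_keyC (n : ℕ) :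
    (X ^ 2 - C 4) * (dickson 2 (1 : ℂ) n * dickson 2 1 (n + 1)) =
      dickson 1 (1 : ℂ) (2 * n + 3) - X := by
  apply Polynomial.funext
  intro x
  have hdeg : (X ^ 2 - C x * X + 1 : ℂ[X]).degree = 2 := by compute_degree!
  obtain ⟨y, hy⟩ := IsAlgClosed.exists_root (X ^ 2 - C x * X + 1 : ℂ[X]) (by rw [hdeg]; norm_num)
  replace hy : y ^ 2 - x * y + 1 = 0 := by simpa using hy
  have hy0 : y ≠ 0 := by rintro rfl; simp at hy
  obtain ⟨z, hzdef⟩ : ∃ z, z = x - y := ⟨_, rfl⟩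
  have hx : x = y + z := by rw [hzdef]; ring
  subst hx
  have hyz : y * z = 1 := by linear_combination -hy
  have e1 := dicksonE_eval' hyz n
  have e2 := dicksonE_eval' hyz (n + 1)
  have eD := dickson_one_one_eval_add_inv y z hyz (2 * n + 3)
  have hzn : (y * z) ^ (n + 1) = 1 := by rw [hyz]; exact one_pow _
  simp only [eval_mul, eval_sub, eval_pow, eval_X, eval_C, eval_one]
  rw [eD]
  have e12 : ((y - z) * (dickson 2 (1 : ℂ) n).eval (y + z)) *
      ((y - z) * (dickson 2 (1 : ℂ) (n + 1)).eval (y + z)) =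
      (y ^ (n + 1) - z ^ (n + 1)) * (y ^ (n + 2) - z ^ (n + 2)) := by rw [e1, e2]
  linear_combination e12 +
    (4 * (dickson 2 (1 : ℂ) n).eval (y + z) * (dickson 2 (1 : ℂ) (n + 1)).eval (y + z)) * hyz -
    (y + z) * hzn

private lemma dickson_key' (R : Type*) [CommRing R] (n : ℕ) :
    (X ^ 2 - C 4) * (dickson 2 (1 : R) n * dickson 2 1 (n + 1)) =
      dickson 1 (1 : R) (2 * n + 3) - X := by
  have hZ : (X ^ 2 - C 4) * (dickson 2 (1 : ℤ) n * dickson 2 1 (n + 1)) =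
      dickson 1 (1 : ℤ) (2 * n + 3) - X := by
    apply map_injective (Int.castRingHom ℂ) Int.cast_injective
    simp only [Polynomial.map_mul, Polynomial.map_sub, Polynomial.map_pow, map_X, map_C,
      map_dickson]
    have h1 : (Int.castRingHom ℂ) 1 = 1 := map_one _
    have h4 : ((4 : ℤ) : ℂ) = 4 := by norm_num
    rw [h1]
    simp only [eq_intCast, h4]
    exact dickson_keyC n
  have := congrArg (map (Int.castRingHom R)) hZ
  simp only [Polynomial.map_mul, Polynomial.map_sub, Polynomial.map_pow, map_X, map_C,
    map_dickson, map_one, eq_intCast, Int.cast_one, Int.cast_ofNat] at this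
  convert this using 4
  simp [map_ofNat]

private lemma dickson_D_card' (F : Type*) [Field F] [Fintype F] :
    dickson 1 (1 : F) (Fintype.card F) = X ^ (Fintype.card F) := by
  obtain ⟨p, hchar⟩ := CharP.exists F
  obtain ⟨f, hp, hcard⟩ := FiniteField.card F p
  haveI : Fact p.Prime := ⟨hp⟩
  rw [hcard]
  induction (f : ℕ) with
  | zero => simp
  | succ k ih =>
      rw [pow_succ, dickson_one_one_mul, ih, dickson_one_one_charP, pow_comp, X_comp, ← pow_mul,
        mul_comm]

private lemma prod_lin' (F : Type*) [Field F] [Fintype F] :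
    ∏ b : F, (X - C b) = X ^ (Fintype.card F) - X := by
  classical
  have hmonic : (X ^ (Fintype.card F) - X : F[X]).Monic := by
    apply (monic_X_pow _).sub_of_left
    rw [degree_X_pow, degree_X]
    exact_mod_cast Fintype.one_lt_card
  have hd : (X ^ (Fintype.card F) - X : F[X]).natDegree = Fintype.card F :=
    FiniteField.X_pow_card_sub_X_natDegree_eq F Fintype.one_lt_card
  have hroots := FiniteField.roots_X_pow_card_sub_X F
  have := prod_multiset_X_sub_C_of_monic_of_roots_card_eq hmonic
    (by rw [hroots, hd]; rfl)
  rw [hroots] at this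
  rw [← this]
  rfl

private lemma two_ne_zero'' (F : Type*) [Field F] [Fintype F] (hq : Odd (Fintype.card F)) :
    (2 : F) ≠ 0 := by
  intro h
  obtain ⟨p, hchar⟩ := CharP.exists F
  obtain ⟨f, hp, hcard⟩ := FiniteField.card F p
  have hdvd : p ∣ 2 := (CharP.cast_eq_zero_iff F p 2).mp (by exact_mod_cast h)
  have hp2 : p = 2 := (Nat.prime_dvd_prime_iff_eq hp Nat.prime_two).mp hdvd
  obtain ⟨k, hk⟩ := hq
  have h2 : (2 : ℕ) ∣ Fintype.card F := by
    rw [hcard, hp2]; exact dvd_pow_self 2 f.pos.ne'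
  omega

private lemma root_S' {F : Type*} [Field F] [Fintype F] {m : ℕ}
    (hm : Fintype.card F = 2 * m + 3) (h2 : (2 : F) ≠ 0) {a : F}
    (ha : a ^ 2 - 4 ≠ 0) (hsq : IsSquare (a ^ 2 - 4)) :
    (dickson 2 (1 : F) m).eval a = 0 := by
  obtain ⟨s, hs⟩ := hsq
  have hs0 : s ≠ 0 := by rintro rfl; rw [mul_zero] at hs; exact ha hs
  obtain ⟨y, hy⟩ : ∃ y : F, y = (a + s) / 2 := ⟨_, rfl⟩
  obtain ⟨z, hz⟩ : ∃ z : F, z = (a - s) / 2 := ⟨_, rfl⟩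
  have hyz : y * z = 1 := by
    rw [hy, hz]; field_simp; linear_combination hs
  have hx : y + z = a := by rw [hy, hz]; field_simp; ring
  have hyzs : y - z = s := by rw [hy, hz]; field_simp; ring
  have hy0 : y ≠ 0 := by rintro rfl; rw [zero_mul] at hyz; exact zero_ne_one hyz
  have hcard : y ^ (Fintype.card F - 1) = 1 := FiniteField.pow_card_sub_one_eq_one y hy0
  have hu : y ^ (m + 1) * y ^ (m + 1) = 1 := by
    rw [← pow_add, show m + 1 + (m + 1) = Fintype.card F - 1 by omega]; exact hcard
  have hzy : z ^ (m + 1) = y ^ (m + 1) := by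
    have hzinv : z = y⁻¹ := by
      rw [← one_mul z, ← inv_mul_cancel₀ hy0, mul_assoc, hyz, mul_one]
    rw [hzinv, inv_pow]
    exact inv_eq_of_mul_eq_one_right hu
  have e := dicksonE_eval' hyz m
  rw [hx, hzy, sub_self] at e
  rcases mul_eq_zero.mp e with h | h
  · exact (hs0 (by rw [← hyzs, h])).elim
  · exact h

private lemma root_N' {F : Type*} [Field F] [Fintype F] {m : ℕ}
    (hm : Fintype.card F = 2 * m + 3) {a : F} (hsq : ¬ IsSquare (a ^ 2 - 4)) :
    (dickson 2 (1 : F) (m + 1)).eval a = 0 := by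
  classical
  have ha0 : a ^ 2 - 4 ≠ 0 := by
    intro h; exact hsq (by rw [h]; exact ⟨0, by ring⟩)
  let K := AlgebraicClosure F
  let i : F →+* K := algebraMap F K
  have hi : Function.Injective i := i.injective
  obtain ⟨p, hchar⟩ := CharP.exists F
  obtain ⟨f, hp, hcard⟩ := FiniteField.card F p
  haveI : Fact p.Prime := ⟨hp⟩
  haveI hKchar : CharP K p := charP_of_injective_algebraMap (algebraMap F K).injective p
  haveI : ExpChar K p := ExpChar.prime hp
  suffices h : (dickson 2 (1 : K) (m + 1)).eval (i a) = 0 by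
    apply hi
    rw [map_zero, ← eval₂_at_apply, ← eval_map, map_dickson, map_one, h]
  have hdeg : (X ^ 2 - C (i a) * X + 1 : K[X]).degree = 2 := by compute_degree!
  obtain ⟨y, hy⟩ := IsAlgClosed.exists_root (X ^ 2 - C (i a) * X + 1 : K[X])
    (by rw [hdeg]; norm_num)
  replace hy : y ^ 2 - i a * y + 1 = 0 := by simpa using hy
  have hy0 : y ≠ 0 := by rintro rfl; simp at hy
  obtain ⟨z, hzdef⟩ : ∃ z : K, z = i a - y := ⟨_, rfl⟩
  have hyz : y * z = 1 := by rw [hzdef]; linear_combination -hy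
  have hx : y + z = i a := by rw [hzdef]; ring
  -- y^q is a root of the same quadratic
  have hroot : (y ^ Fintype.card F) ^ 2 - i a * (y ^ Fintype.card F) + 1 = 0 := by
    have hfrob := congrArg (iterateFrobenius K p f) hy
    simp only [map_add, map_sub, map_mul, map_one, map_pow, map_zero, iterateFrobenius_def] at hfrob
    rw [← hcard] at hfrob
    rwa [show (i a) ^ Fintype.card F = i a by rw [← map_pow, FiniteField.pow_card]] at hfrob
  have hfactor : (y ^ Fintype.card F - y) * (y ^ Fintype.card F - z) = 0 := by
    linear_combination hroot - y ^ Fintype.card F * hx + hyz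
  have hq : y ^ Fintype.card F = z := by
    rcases mul_eq_zero.mp hfactor with h | h
    · exfalso
      have hyr : y ^ Fintype.card F = y := by linear_combination h
      -- y is a root of ∏ (X - C b) mapped to K
      have : ∃ b : F, i b = y := by
        have hev : eval y (map i (∏ b : F, (X - C b))) = 0 := by
          rw [prod_lin']
          simp [hyr]
        rw [Polynomial.map_prod] at hev
        simp only [Polynomial.map_sub, map_X, map_C, eval_prod, eval_sub, eval_X, eval_C] at hev
        obtain ⟨b, _, hb⟩ := Finset.prod_eq_zero_iff.mp hev
        exact ⟨b, (sub_eq_zero.mp hb).symm⟩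
      obtain ⟨b, hb⟩ := this
      apply hsq
      have hbeq : b ^ 2 - a * b + 1 = 0 := by
        apply hi
        rw [map_zero, map_add, map_sub, map_pow, map_mul, map_one, hb]
        exact hy
      exact ⟨2 * b - a, by linear_combination (-4 : F) * hbeq⟩
    · exact sub_eq_zero.mp h
  have h1 : y ^ Fintype.card F * y = 1 := by rw [hq, mul_comm]; exact hyz
  have hu : y ^ (m + 2) * y ^ (m + 2) = 1 := by
    rw [← pow_add, show m + 2 + (m + 2) = Fintype.card F + 1 by omega, pow_succ]
    exact h1
  have hzy : z ^ (m + 2) = y ^ (m + 2) := by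
    have hzinv : z = y⁻¹ := by
      rw [← one_mul z, ← inv_mul_cancel₀ hy0, mul_assoc, hyz, mul_one]
    rw [hzinv, inv_pow]
    exact inv_eq_of_mul_eq_one_right hu
  have hyzne : y - z ≠ 0 := by
    intro h
    have hz' : z = y := (sub_eq_zero.mp h).symm
    apply ha0
    apply hi
    rw [map_zero, map_sub, map_pow]
    have : i 4 = 4 := map_ofNat i 4
    rw [this, ← hx, hz']
    linear_combination (4 : K) * (hz' ▸ hyz : y * y = 1)
  have e := dicksonE_eval' hyz (m + 1)
  rw [hx, show m + 1 + 1 = m + 2 from rfl, hzy, sub_self] at e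
  rcases mul_eq_zero.mp e with h | h
  · exact (hyzne h).elim
  · exact h

theorem stmt14 (F : Type*) [Field F] [Fintype F] (hq : Odd (Fintype.card F)) :
    (dickson 2 (1 : F) ((Fintype.card F - 3) / 2) =
      ∏ᶠ a ∈ {a : F | a ^ 2 - 4 ≠ 0 ∧ IsSquare (a ^ 2 - 4)}, (X - C a)) ∧
    (dickson 2 (1 : F) ((Fintype.card F - 1) / 2) =
      ∏ᶠ a ∈ {a : F | ¬ IsSquare (a ^ 2 - 4)}, (X - C a)) := by
  classical
  have hc2 : 1 < Fintype.card F := Fintype.one_lt_card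
  obtain ⟨k, hk⟩ := id hq
  set m := (Fintype.card F - 3) / 2 with hmdef
  have hm : Fintype.card F = 2 * m + 3 := by omega
  have hm1 : (Fintype.card F - 1) / 2 = m + 1 := by omega
  have h2 : (2 : F) ≠ 0 := two_ne_zero'' F hq
  obtain ⟨hE1m, hE1d⟩ := dicksonE_monic_natDegree' (1 : F) m
  obtain ⟨hE2m, hE2d⟩ := dicksonE_monic_natDegree' (1 : F) (m + 1)
  have hE1ne : dickson 2 (1 : F) m ≠ 0 := hE1m.ne_zero
  have hE2ne : dickson 2 (1 : F) (m + 1) ≠ 0 := hE2m.ne_zero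
  have key : (X - C 2) * ((X - C (-2)) * (dickson 2 (1 : F) m * dickson 2 (1 : F) (m + 1))) =
      ∏ b : F, (X - C b) := by
    have hXX : (X - C (2 : F)) * (X - C (-2)) = X ^ 2 - C 4 := by
      rw [map_neg, sub_neg_eq_add]
      have h4 : (C (4 : F)) = C 2 * C 2 := by rw [← map_mul]; norm_num
      rw [h4]; ring
    rw [← mul_assoc, hXX, prod_lin', dickson_key' F m, ← hm, dickson_D_card']
  have hprodne : (∏ b : F, (X - C b)) ≠ 0 :=
    Finset.prod_ne_zero_iff.mpr fun b _ => X_sub_C_ne_zero b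
  have h0 : (X - C (2:F)) * ((X - C (-2)) * (dickson 2 (1 : F) m * dickson 2 (1 : F) (m + 1))) ≠ 0 := by
    rw [key]; exact hprodne
  have h0a : ((X - C (-2)) * (dickson 2 (1 : F) m * dickson 2 (1 : F) (m + 1))) ≠ 0 :=
    (mul_ne_zero_iff.mp h0).2
  have h0b : (dickson 2 (1 : F) m * dickson 2 (1 : F) (m + 1)) ≠ 0 :=
    (mul_ne_zero_iff.mp h0a).2
  have huniv := roots_prod_X_sub_C (Finset.univ : Finset F)
  rw [← key, roots_mul h0, roots_mul h0a, roots_mul h0b, roots_X_sub_C, roots_X_sub_C] at huniv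
  have hnodup : ({(2:F)} + ({(-2:F)} + ((dickson 2 (1 : F) m).roots + (dickson 2 (1 : F) (m + 1)).roots))).Nodup := by
    rw [huniv]; exact Finset.univ.nodup
  rw [Multiset.nodup_add] at hnodup
  obtain ⟨-, hnodup, hdisj2⟩ := hnodup
  rw [Multiset.nodup_add] at hnodup
  obtain ⟨-, hnodup, hdisjneg2⟩ := hnodup
  rw [Multiset.nodup_add] at hnodup
  obtain ⟨hd1, hd2, hdisj⟩ := hnodup
  have h2notin : (2 : F) ∉ (dickson 2 (1 : F) m).roots + (dickson 2 (1 : F) (m + 1)).roots := by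
    have := Multiset.singleton_disjoint.mp hdisj2
    intro hmem
    exact this (Multiset.mem_add.mpr (Or.inr hmem))
  have hneg2notin : (-2 : F) ∉ (dickson 2 (1 : F) m).roots + (dickson 2 (1 : F) (m + 1)).roots :=
    Multiset.singleton_disjoint.mp hdisjneg2
  have hne2 : ∀ b : F, b ∈ (dickson 2 (1 : F) m).roots + (dickson 2 (1 : F) (m + 1)).roots →
      b ^ 2 - 4 ≠ 0 := by
    intro b hb hb0
    have : (b - 2) * (b + 2) = 0 := by linear_combination hb0
    rcases mul_eq_zero.mp this with h | h
    · rw [sub_eq_zero.mp h] at hb; exact h2notin hb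
    · have : b = -2 := by linear_combination h
      rw [this] at hb; exact hneg2notin hb
  have hmem1 : ∀ b : F, b ∈ (dickson 2 (1 : F) m).roots ↔
      (b ^ 2 - 4 ≠ 0 ∧ IsSquare (b ^ 2 - 4)) := by
    intro b
    constructor
    · intro hb
      have hb4 := hne2 b (Multiset.mem_add.mpr (Or.inl hb))
      refine ⟨hb4, ?_⟩
      by_contra hns
      have : b ∈ (dickson 2 (1 : F) (m + 1)).roots :=
        (mem_roots hE2ne).mpr (root_N' hm hns)
      exact Multiset.disjoint_left.mp hdisj hb this
    · rintro ⟨hb4, hbsq⟩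
      exact (mem_roots hE1ne).mpr (root_S' hm h2 hb4 hbsq)
  have hmem2 : ∀ b : F, b ∈ (dickson 2 (1 : F) (m + 1)).roots ↔ ¬ IsSquare (b ^ 2 - 4) := by
    intro b
    constructor
    · intro hb hbsq
      have hb4 := hne2 b (Multiset.mem_add.mpr (Or.inr hb))
      have : b ∈ (dickson 2 (1 : F) m).roots :=
        (mem_roots hE1ne).mpr (root_S' hm h2 hb4 hbsq)
      exact Multiset.disjoint_left.mp hdisj this hb
    · intro hns
      exact (mem_roots hE2ne).mpr (root_N' hm hns)
  have hcard1 : Multiset.card (dickson 2 (1 : F) m).roots = m ∧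
      Multiset.card (dickson 2 (1 : F) (m + 1)).roots = m + 1 := by
    have hle1 : Multiset.card (dickson 2 (1 : F) m).roots ≤ m := (card_roots' _).trans_eq hE1d
    have hle2 : Multiset.card (dickson 2 (1 : F) (m + 1)).roots ≤ m + 1 := (card_roots' _).trans_eq hE2d
    have hc := congrArg Multiset.card huniv
    simp only [Multiset.card_add, Multiset.card_singleton] at hc
    have : Multiset.card (Finset.univ : Finset F).val = Fintype.card F := rfl
    rw [this] at hc
    omega
  constructor
  · have hSset : {a : F | a ^ 2 - 4 ≠ 0 ∧ IsSquare (a ^ 2 - 4)} =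
        ↑(dickson 2 (1 : F) m).roots.toFinset := by
      ext b
      simp only [Set.mem_setOf_eq, Finset.coe_sort_coe, Multiset.mem_toFinset, Finset.mem_coe]
      exact (hmem1 b).symm
    rw [hSset, finprod_mem_coe_finset]
    have hprod := prod_multiset_X_sub_C_of_monic_of_roots_card_eq hE1m (by rw [hcard1.1, hE1d])
    have hval : (dickson 2 (1 : F) m).roots.toFinset.val = (dickson 2 (1 : F) m).roots := by
      rw [Multiset.toFinset_val, Multiset.dedup_eq_self.mpr hd1]
    rw [Finset.prod_eq_multiset_prod, hval, hprod]
  · rw [hm1]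
    have hNset : {a : F | ¬ IsSquare (a ^ 2 - 4)} =
        ↑(dickson 2 (1 : F) (m + 1)).roots.toFinset := by
      ext b
      simp only [Set.mem_setOf_eq, Finset.coe_sort_coe, Multiset.mem_toFinset, Finset.mem_coe]
      exact (hmem2 b).symm
    rw [hNset, finprod_mem_coe_finset]
    have hprod := prod_multiset_X_sub_C_of_monic_of_roots_card_eq hE2m (by rw [hcard1.2, hE2d])
    have hval : (dickson 2 (1 : F) (m + 1)).roots.toFinset.val = (dickson 2 (1 : F) (m + 1)).roots := by
      rw [Multiset.toFinset_val, Multiset.dedup_eq_self.mpr hd2]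
    rw [Finset.prod_eq_multiset_prod, hval, hprod]
end

section
/- Let q be an odd prime power, ε = (−1)^{(q−1)/2}, and m = (q−ε)/4 (an integer). Then D_m(x) = ∏_{b ∈ B} (x − b) in F_q[x], where B = {b ∈ F_q : both 2−b and 2+b are nonsquares in F_q}. -/
open Polynomial


lemma stmt15_dickson_deg (R : Type*) [Field R] :
    ∀ n : ℕ, (dickson 1 (1:R) (n+1)).Monic ∧ (dickson 1 (1:R) (n+1)).degree = (n+1 : ℕ)
  | 0 => by simp [dickson_one, monic_X]
  | 1 => by
    rw [show (1+1:ℕ) = 0 + 2 from rfl, dickson_add_two, dickson_one, dickson_zero]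
    have hd : degree (C (1:R) * ((3:R[X]) - ((1:ℕ):R[X]))) < degree ((X:R[X]) * X) := by
      refine lt_of_le_of_lt (degree_mul_le _ _) ?_
      rw [degree_mul, degree_X]
      refine lt_of_le_of_lt (add_le_add degree_C_le
        ((degree_sub_le _ _).trans (max_le (by exact_mod_cast degree_natCast_le 3)
          (degree_natCast_le 1)))) ?_
      norm_num
    refine ⟨(monic_X.mul monic_X).sub_of_left hd, ?_⟩
    rw [degree_sub_eq_left_of_degree_lt hd, degree_mul, degree_X]
    rfl
  | (n+2) => by
    obtain ⟨m1, d1⟩ := stmt15_dickson_deg R n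
    obtain ⟨m2, d2⟩ := stmt15_dickson_deg R (n+1)
    rw [dickson_add_two]
    have hm : (X * dickson 1 (1:R) (n+2)).Monic := monic_X.mul m2
    have hdeg : (X * dickson 1 (1:R) (n+2)).degree = ((n+3 : ℕ) : WithBot ℕ) := by
      rw [degree_mul, degree_X, d2]
      push_cast; ring
    have hlt : degree (C (1:R) * dickson 1 (1:R) (n+1)) < (X * dickson 1 (1:R) (n+2)).degree := by
      rw [hdeg, C_1, one_mul, d1]
      exact_mod_cast Nat.lt_succ_of_lt (Nat.lt_succ_self _)
    exact ⟨hm.sub_of_left hlt, by rw [degree_sub_eq_left_of_degree_lt hlt, hdeg]⟩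

lemma stmt15_J (F : Type*) [Field F] [Fintype F] [DecidableEq F] (hF : ringChar F ≠ 2)
    (c : F) (hc : c ≠ 0) :
    ∑ x : F, quadraticChar F x * quadraticChar F (x + c) = -1 := by
  have h1 : ∑ x : F, quadraticChar F x * quadraticChar F (x + c)
      = ∑ x ∈ Finset.univ.erase 0, quadraticChar F (1 + c * x⁻¹) := by
    have h0 : quadraticChar F 0 * quadraticChar F (0 + c) = 0 := by simp
    rw [← Finset.sum_erase (f := fun x => quadraticChar F x * quadraticChar F (x + c))
      Finset.univ h0]
    refine Finset.sum_congr rfl fun x hx => ?_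
    have hx0 : x ≠ 0 := Finset.ne_of_mem_erase hx
    have hxc : x + c = x * (1 + c * x⁻¹) := by field_simp
    rw [hxc, map_mul, ← mul_assoc, ← map_mul, ← sq, quadraticChar_sq_one' hx0, one_mul]
  have h2 : ∑ x ∈ Finset.univ.erase 0, quadraticChar F (1 + c * x⁻¹)
      = ∑ t ∈ Finset.univ.erase 1, quadraticChar F t := by
    refine Finset.sum_nbij' (fun x => 1 + c * x⁻¹) (fun t => c / (t - 1)) ?_ ?_ ?_ ?_ ?_
    · intro x hx
      have hx0 : x ≠ 0 := Finset.ne_of_mem_erase hx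
      simp only [Finset.mem_erase, Finset.mem_univ, and_true]
      intro h
      have : c * x⁻¹ = 0 := by linear_combination h
      exact hc (by field_simp at this; simpa using this)
    · intro t ht
      have ht1 : t ≠ 1 := Finset.ne_of_mem_erase ht
      simp only [Finset.mem_erase, Finset.mem_univ, and_true]
      exact div_ne_zero hc (sub_ne_zero.mpr ht1)
    · intro x hx
      have hx0 : x ≠ 0 := Finset.ne_of_mem_erase hx
      field_simp
      simp [hc]
    · intro t ht
      have ht1 : (t:F) - 1 ≠ 0 := sub_ne_zero.mpr (Finset.ne_of_mem_erase ht)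
      field_simp
      ring
    · intro x _; rfl
  have h3 : ∑ t ∈ Finset.univ.erase 1, quadraticChar F t
      = (∑ t : F, quadraticChar F t) - quadraticChar F 1 := by
    rw [← Finset.sum_erase_add Finset.univ _ (Finset.mem_univ (1:F))]
    ring
  rw [h1, h2, h3, quadraticChar_sum_zero hF, map_one]
  norm_num

lemma stmt15_card (F : Type*) [Field F] [Fintype F] [DecidableEq F]
    [DecidablePred fun b : F => ¬ IsSquare (2 - b) ∧ ¬ IsSquare (2 + b)]
    (hq : Odd (Fintype.card F)) (ε : ℤ)
    (hε : ε = (-1 : ℤ) ^ ((Fintype.card F - 1) / 2)) (m : ℕ)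
    (hm : 4 * (m : ℤ) = (Fintype.card F : ℤ) - ε) :
    (Finset.univ.filter fun b : F => ¬ IsSquare (2 - b) ∧ ¬ IsSquare (2 + b)).card = m := by
  have hodd : Fintype.card F % 2 = 1 := Nat.odd_iff.mp hq
  have hchar : ringChar F ≠ 2 := fun h =>
    by rw [FiniteField.even_card_of_char_two h] at hodd; exact one_ne_zero hodd.symm
  have htwo : (2 : F) ≠ 0 := Ring.two_ne_zero hchar
  -- pointwise identity
  have key : ∀ b : F, (1 - quadraticChar F (2 - b)) * (1 - quadraticChar F (2 + b))
      = if (¬ IsSquare (2 - b) ∧ ¬ IsSquare (2 + b)) then 4 else 0 := by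
    intro b
    by_cases h1 : IsSquare ((2:F) - b)
    · rw [if_neg (fun h => h.1 h1)]
      by_cases h0 : (2:F) - b = 0
      · have hb : (2:F) + b = 2^2 := by rw [sub_eq_zero] at h0; rw [← h0]; ring
        rw [hb, quadraticChar_sq_one' htwo, sub_self, mul_zero]
      · rw [(quadraticChar_one_iff_isSquare h0).mpr h1, sub_self, zero_mul]
    · by_cases h2 : IsSquare ((2:F) + b)
      · rw [if_neg (fun h => h.2 h2)]
        by_cases h0 : (2:F) + b = 0
        · have hb : (2:F) - b = 2^2 := by
            have : b = -2 := by linear_combination h0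
            rw [this]; ring
          rw [hb, quadraticChar_sq_one' htwo, sub_self, zero_mul]
        · rw [(quadraticChar_one_iff_isSquare h0).mpr h2, sub_self, mul_zero]
      · rw [if_pos ⟨h1, h2⟩, quadraticChar_neg_one_iff_not_isSquare.mpr h1,
          quadraticChar_neg_one_iff_not_isSquare.mpr h2]
        norm_num
  -- the three sums
  have s1 : ∑ b : F, quadraticChar F (2 - b) = 0 := by
    exact (Fintype.sum_equiv (Equiv.subLeft (2:F)) _ _ (fun b => by simp)).trans
      (quadraticChar_sum_zero hchar)
  have s2 : ∑ b : F, quadraticChar F (2 + b) = 0 := by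
    exact (Fintype.sum_equiv (Equiv.addLeft (2:F)) _ _ (fun b => by simp)).trans
      (quadraticChar_sum_zero hchar)
  have hm1 : quadraticChar F (-1) = ε := by
    rw [quadraticChar_neg_one hchar, ZMod.χ₄_eq_neg_one_pow hodd, hε]
    congr 1
    omega
  have s3 : ∑ b : F, quadraticChar F (2 - b) * quadraticChar F (2 + b) = -ε := by
    have e1 : ∑ b : F, quadraticChar F (2 - b) * quadraticChar F (2 + b)
        = ∑ x : F, quadraticChar F x * quadraticChar F (4 - x) := by
      exact Fintype.sum_equiv (Equiv.subLeft (2:F)) _ _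
        (fun b => by rw [Equiv.subLeft_apply, show (4:F)-(2-b) = 2+b from by ring])
    have e2 : ∀ x : F, quadraticChar F (4 - x) = quadraticChar F (-1) * quadraticChar F (x + (-4)) := by
      intro x
      rw [← map_mul]
      congr 1
      ring
    rw [e1]
    simp_rw [e2]
    have e3 : ∑ x : F, quadraticChar F x * (quadraticChar F (-1) * quadraticChar F (x + -4))
        = quadraticChar F (-1) * ∑ x : F, quadraticChar F x * quadraticChar F (x + -4) := by
      rw [Finset.mul_sum]
      exact Finset.sum_congr rfl fun x _ => by ring
    rw [e3, stmt15_J F hchar (-4)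
      (by intro h; apply pow_ne_zero 2 htwo; rw [show (2:F)^2 = 4 from by norm_num]; linear_combination -h), hm1]
    ring
  -- combine
  have total : ∑ b : F, (1 - quadraticChar F (2 - b)) * (1 - quadraticChar F (2 + b))
      = (Fintype.card F : ℤ) - ε := by
    have expand : ∀ b : F, (1 - quadraticChar F (2 - b)) * (1 - quadraticChar F (2 + b))
        = 1 - quadraticChar F (2 - b) - quadraticChar F (2 + b)
          + quadraticChar F (2 - b) * quadraticChar F (2 + b) := fun b => by ring
    simp_rw [expand]
    rw [Finset.sum_add_distrib, Finset.sum_sub_distrib, Finset.sum_sub_distrib, s1, s2, s3,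
      Finset.sum_const, Finset.card_univ]
    push_cast
    ring
  have total2 : ∑ b : F, (1 - quadraticChar F (2 - b)) * (1 - quadraticChar F (2 + b))
      = 4 * ((Finset.univ.filter fun b : F => ¬ IsSquare (2 - b) ∧ ¬ IsSquare (2 + b)).card : ℤ) := by
    simp_rw [key]
    rw [Finset.sum_ite, Finset.sum_const, Finset.sum_const_zero, add_zero, nsmul_eq_mul]
    ring
  have : 4 * ((Finset.univ.filter fun b : F => ¬ IsSquare (2 - b) ∧ ¬ IsSquare (2 + b)).card : ℤ)
      = 4 * (m : ℤ) := by rw [← total2, total, hm]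
  exact_mod_cast mul_left_cancel₀ (by norm_num : (4:ℤ) ≠ 0) this

lemma stmt15_root (F : Type*) [Field F] [Fintype F]
    (hq : Odd (Fintype.card F)) (ε : ℤ)
    (hε : ε = (-1 : ℤ) ^ ((Fintype.card F - 1) / 2)) (m : ℕ)
    (hm : 4 * (m : ℤ) = (Fintype.card F : ℤ) - ε) (b : F)
    (h1 : ¬ IsSquare ((2:F) - b)) (h2 : ¬ IsSquare ((2:F) + b)) :
    (dickson 1 (1:F) m).eval b = 0 := by
  classical
  set q := Fintype.card F with hqdef
  obtain ⟨e, he⟩ := hq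
  have hodd : q % 2 = 1 := by omega
  have hdive : (q - 1) / 2 = e := by omega
  have hdiv2 : q / 2 = e := by omega
  have hchar2 : ringChar F ≠ 2 := fun h =>
    by rw [FiniteField.even_card_of_char_two h] at hodd; exact one_ne_zero hodd.symm
  have htwoF : (2 : F) ≠ 0 := Ring.two_ne_zero hchar2
  have h2b : (2:F) - b ≠ 0 := fun h => h1 (by rw [h]; exact ⟨0, by ring⟩)
  have h2b' : (2:F) + b ≠ 0 := fun h => h2 (by rw [h]; exact ⟨0, by ring⟩)
  have hA : ((2:F) + b) ^ e = -1 := by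
    rw [← hdiv2]
    exact (FiniteField.pow_dichotomy hchar2 h2b').resolve_left
      (fun h => h2 ((FiniteField.isSquare_iff hchar2 h2b').mpr h))
  have hB : ((2:F) - b) ^ e = -1 := by
    rw [← hdiv2]
    exact (FiniteField.pow_dichotomy hchar2 h2b).resolve_left
      (fun h => h1 ((FiniteField.isSquare_iff hchar2 h2b).mpr h))
  -- pass to the algebraic closure
  set K := AlgebraicClosure F
  set φ : F →+* K := algebraMap F K with hφdef
  have hφ : Function.Injective φ := φ.injective
  set p := ringChar F with hpdef
  haveI : CharP F p := ringChar.charP F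
  obtain ⟨n, hp, hcard⟩ := FiniteField.card F p
  haveI hpfact : Fact p.Prime := ⟨hp⟩
  haveI : CharP K p := charP_of_injective_algebraMap hφ p
  have frob : ∀ x y : K, (x + y) ^ q = x ^ q + y ^ q := by
    intro x y; rw [show q = p ^ (n:ℕ) from hcard]; exact add_pow_char_pow x y p n
  have hfix : ∀ a : F, (φ a) ^ q = φ a := fun a => by
    rw [← map_pow, FiniteField.pow_card]
  have hqm1 : (-1 : K) ^ q = -1 := Odd.neg_one_pow ⟨e, by omega⟩
  -- construct y
  obtain ⟨z, hz⟩ := IsAlgClosed.exists_pow_nat_eq (k := K) (φ b ^ 2 - 4) (zero_lt_two)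
  have htwoK : (2 : K) ≠ 0 := by
    have : φ (2:F) = (2:K) := by push_cast [map_ofNat]; rfl
    rw [← this]; exact fun h => htwoF (hφ (by rw [h, map_zero]))
  set y : K := (φ b + z) / 2 with hy
  have hquad : y * y = φ b * y - 1 := by
    have h2y : 2 * y = φ b + z := by rw [hy, mul_comm]; exact div_mul_cancel₀ _ htwoK
    have h4 : ((2:K) * 2) * (y * y - (φ b * y - 1)) = 0 := by
      linear_combination (2 * y - φ b + z) * h2y + hz
    have h5 := (mul_eq_zero.mp h4).resolve_left (mul_ne_zero htwoK htwoK)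
    linear_combination h5
  have hy0 : y ≠ 0 := by
    intro h; rw [h] at hquad; simp at hquad
  have hinv : y * (φ b - y) = 1 := by linear_combination -hquad
  have key1 : (y + 1) ^ 2 = φ ((2:F) + b) * y := by
    rw [map_add, map_ofNat]
    linear_combination hquad
  have key2 : (y - 1) ^ 2 = -φ ((2:F) - b) * y := by
    rw [map_sub, map_ofNat]
    linear_combination hquad
  have hφ2b : φ ((2:F) + b) ≠ 0 := fun h => h2b' (hφ (by rw [h, map_zero]))
  have hφ2b' : φ ((2:F) - b) ≠ 0 := fun h => h2b (hφ (by rw [h, map_zero]))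
  have hy1 : y + 1 ≠ 0 := by
    intro h
    apply hφ2b
    have := key1
    rw [h] at this
    simpa [hy0] using this.symm
  have hym1 : y - 1 ≠ 0 := by
    intro h
    apply hφ2b'
    have := key2
    rw [h] at this
    have : -φ ((2:F) - b) * y = 0 := by rw [← this]; ring
    rcases mul_eq_zero.mp this with h' | h'
    · exact neg_eq_zero.mp h'
    · exact absurd h' hy0
  have hneK : (-1:K) ≠ 1 := fun h => htwoK (by linear_combination -h)
  -- y^q satisfies the same quadratic
  have ht2 : y ^ q * y ^ q = φ b * y ^ q - 1 := by
    have h3 : (φ b * y + (-1)) ^ q = (φ b * y) ^ q + (-1) ^ q := frob _ _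
    calc y ^ q * y ^ q = (y * y) ^ q := by rw [mul_pow]
      _ = (φ b * y + (-1)) ^ q := by rw [hquad, sub_eq_add_neg]
      _ = (φ b * y) ^ q + (-1) ^ q := h3
      _ = φ b * y ^ q - 1 := by rw [mul_pow, hfix b, hqm1, ← sub_eq_add_neg]
  have hdich : (y ^ q - y) * (y ^ q - (φ b - y)) = 0 := by
    linear_combination ht2 + hinv
  have main : y ^ (2 * m) = -1 := by
    rcases mul_eq_zero.mp hdich with hcase | hcase
    · -- y^q = y
      have hyq : y ^ q = y := by linear_combination hcase
      have hq1 : (y + 1) ^ (q - 1) = 1 := by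
        have h3 : (y + 1) ^ q = y + 1 := by rw [frob y 1, hyq, one_pow]
        have h4 : (y + 1) ^ (q - 1) * (y + 1) = 1 * (y + 1) := by
          rw [one_mul, ← pow_succ, show q - 1 + 1 = q by omega, h3]
        exact mul_right_cancel₀ hy1 h4
      have hq2 : (y - 1) ^ (q - 1) = 1 := by
        have h3 : (y - 1) ^ q = y - 1 := by
          rw [sub_eq_add_neg, frob y (-1), hyq, hqm1, ← sub_eq_add_neg]
        have h4 : (y - 1) ^ (q - 1) * (y - 1) = 1 * (y - 1) := by
          rw [one_mul, ← pow_succ, show q - 1 + 1 = q by omega, h3]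
        exact mul_right_cancel₀ hym1 h4
      have hye : y ^ e = -1 := by
        have h5 : ((y + 1) ^ 2) ^ e = φ ((2:F) + b) ^ e * y ^ e := by
          rw [key1, mul_pow]
        rw [← pow_mul, show 2 * e = q - 1 by omega, hq1, ← map_pow, hA, map_neg, map_one] at h5
        linear_combination h5
      have hsign : (-1:K) ^ e = 1 := by
        have h5 : ((y - 1) ^ 2) ^ e = (-φ ((2:F) - b)) ^ e * y ^ e := by
          rw [key2, mul_pow]
        rw [← pow_mul, show 2 * e = q - 1 by omega, hq2, neg_pow, ← map_pow, hB, map_neg,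
          map_one, hye] at h5
        linear_combination -h5
      have heven : Even e := (neg_one_pow_eq_one_iff_even hneK).mp hsign
      have heps : ε = 1 := by rw [hε, hdive]; exact Even.neg_one_pow heven
      have h2m : 2 * m = e := by
        rw [heps] at hm
        omega
      rw [h2m]; exact hye
    · -- y^q = φ b - y
      have hyq : y ^ q = φ b - y := by linear_combination hcase
      have h2f : 2 * (e + 1) = q + 1 := by omega
      have hyp1 : (y + 1) ^ (q + 1) = φ ((2:F) + b) := by
        have h3 : (y + 1) ^ q = (φ b - y) + 1 := by rw [frob y 1, hyq, one_pow]
        calc (y + 1) ^ (q + 1) = (y + 1) ^ q * (y + 1) := by rw [pow_succ]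
          _ = ((φ b - y) + 1) * (y + 1) := by rw [h3]
          _ = φ ((2:F) + b) := by rw [map_add, map_ofNat]; linear_combination -hquad
      have hyp2 : (y - 1) ^ (q + 1) = φ ((2:F) - b) := by
        have h3 : (y - 1) ^ q = (φ b - y) - 1 := by
          rw [sub_eq_add_neg, frob y (-1), hyq, hqm1, ← sub_eq_add_neg]
        calc (y - 1) ^ (q + 1) = (y - 1) ^ q * (y - 1) := by rw [pow_succ]
          _ = ((φ b - y) - 1) * (y - 1) := by rw [h3]
          _ = φ ((2:F) - b) := by rw [map_sub, map_ofNat]; linear_combination -hquad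
      have hAf : ((2:F) + b) ^ (e + 1) = -((2:F) + b) := by rw [pow_succ, hA]; ring
      have hBf : ((2:F) - b) ^ (e + 1) = -((2:F) - b) := by rw [pow_succ, hB]; ring
      have hyf : y ^ (e + 1) = -1 := by
        have h5 : ((y + 1) ^ 2) ^ (e + 1) = φ ((2:F) + b) ^ (e + 1) * y ^ (e + 1) := by
          rw [key1, mul_pow]
        rw [← pow_mul, h2f, hyp1, ← map_pow, hAf, map_neg] at h5
        -- h5 : φ (2+b) = -(φ (2+b)) * y^(e+1)
        have h6 : φ ((2:F) + b) * (-(y ^ (e + 1))) = φ ((2:F) + b) * 1 := by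
          linear_combination -h5
        have := mul_left_cancel₀ hφ2b h6
        linear_combination -this
      have hsign : (-1:K) ^ (e + 1) = 1 := by
        have h5 : ((y - 1) ^ 2) ^ (e + 1) = (-φ ((2:F) - b)) ^ (e + 1) * y ^ (e + 1) := by
          rw [key2, mul_pow]
        rw [← pow_mul, h2f, hyp2, neg_pow, ← map_pow, hBf, map_neg, hyf] at h5
        -- h5 : φ (2-b) = (-1)^(e+1) * (-(φ (2-b))) * (-1)
        have h6 : φ ((2:F) - b) * (-1:K) ^ (e + 1) = φ ((2:F) - b) * 1 := by
          linear_combination -h5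
        exact mul_left_cancel₀ hφ2b' h6
      have heven : Even (e + 1) := (neg_one_pow_eq_one_iff_even hneK).mp hsign
      have heps : ε = -1 := by
        rw [hε, hdive]
        exact Odd.neg_one_pow (Nat.Even.sub_odd (by omega) heven odd_one)
      have h2m : 2 * m = e + 1 := by
        rw [heps] at hm
        omega
      rw [h2m]; exact hyf
  -- conclude
  have hfin : y ^ m + (φ b - y) ^ m = 0 := by
    have h7 : y ^ m * (y ^ m + (φ b - y) ^ m) = y ^ (2 * m) + (y * (φ b - y)) ^ m := by
      rw [mul_add, ← pow_add, ← two_mul, mul_pow]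
    rw [main, hinv, one_pow] at h7
    have h8 : y ^ m * (y ^ m + (φ b - y) ^ m) = 0 := by rw [h7]; ring
    exact (mul_eq_zero.mp h8).resolve_left (pow_ne_zero m hy0)
  have heval : φ ((dickson 1 (1:F) m).eval b) = 0 := by
    rw [← eval₂_at_apply, eval₂_eq_eval_map, map_dickson, map_one]
    rw [show φ b = y + (φ b - y) by ring, dickson_one_one_eval_add_inv y (φ b - y) hinv, hfin]
  exact hφ (by rw [heval, map_zero])

theorem stmt15 (F : Type*) [Field F] [Fintype F] (hq : Odd (Fintype.card F)) (ε : ℤ)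
    (hε : ε = (-1 : ℤ) ^ ((Fintype.card F - 1) / 2)) (m : ℕ)
    (hm : 4 * (m : ℤ) = (Fintype.card F : ℤ) - ε) :
    dickson 1 (1 : F) m =
      ∏ᶠ b ∈ {b : F | ¬ IsSquare (2 - b) ∧ ¬ IsSquare (2 + b)}, (X - C b) := by
  classical
  set s : Finset F := Finset.univ.filter
    (fun b : F => ¬ IsSquare (2 - b) ∧ ¬ IsSquare (2 + b)) with hs
  have hset : {b : F | ¬ IsSquare (2 - b) ∧ ¬ IsSquare (2 + b)} = ↑s := by
    ext b; simp [hs]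
  rw [hset, finprod_mem_coe_finset]
  have hcard : s.card = m := stmt15_card F hq ε hε m hm
  have hm1 : 1 ≤ m := by
    have hq3 : 3 ≤ Fintype.card F := by
      have h2 := Fintype.one_lt_card (α := F)
      have hodd := Nat.odd_iff.mp hq
      omega
    have hε' : ε = 1 ∨ ε = -1 := by
      rw [hε]
      rcases Nat.even_or_odd ((Fintype.card F - 1) / 2) with h | h
      exacts [Or.inl (Even.neg_one_pow h), Or.inr (Odd.neg_one_pow h)]
    rcases hε' with h | h <;> rw [h] at hm <;> omega
  obtain ⟨m', rfl⟩ : ∃ m', m = m' + 1 := ⟨m - 1, by omega⟩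
  obtain ⟨hmon, hdeg⟩ := stmt15_dickson_deg F m'
  have hD0 : dickson 1 (1:F) (m'+1) ≠ 0 := hmon.ne_zero
  have hroot : ∀ b ∈ s, (dickson 1 (1:F) (m'+1)).IsRoot b := by
    intro b hb
    rw [hs, Finset.mem_filter] at hb
    exact stmt15_root F hq ε hε (m'+1) hm b hb.2.1 hb.2.2
  have hdvd : (∏ b ∈ s, (X - C b)) ∣ dickson 1 (1:F) (m'+1) := by
    have h1 : (∏ b ∈ s, (X - C b)) = (Multiset.map (fun a => X - C a) s.val).prod := rfl
    rw [h1, Multiset.prod_X_sub_C_dvd_iff_le_roots hD0]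
    refine Multiset.le_iff_count.mpr fun b => ?_
    by_cases hb : b ∈ s
    · have hc : s.val.count b = 1 := Multiset.count_eq_one_of_mem s.nodup hb
      rw [hc, Polynomial.count_roots]
      exact (Polynomial.rootMultiplicity_pos hD0).mpr (hroot b hb)
    · rw [Multiset.count_eq_zero_of_notMem hb]
      exact Nat.zero_le _
  have hPmon : (∏ b ∈ s, (X - C b)).Monic := monic_prod_of_monic _ _ fun b _ => monic_X_sub_C b
  have hPdeg : (∏ b ∈ s, (X - C b)).natDegree = m' + 1 := by
    rw [Polynomial.natDegree_prod _ _ fun b _ => X_sub_C_ne_zero b]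
    simp [hcard]
  have hDdeg : (dickson 1 (1:F) (m'+1)).natDegree = m' + 1 :=
    natDegree_eq_of_degree_eq_some hdeg
  refine (Polynomial.eq_of_dvd_of_natDegree_le_of_leadingCoeff hdvd ?_ ?_).symm
  · rw [hPdeg, hDdeg]
  · rw [hPmon.leadingCoeff, hmon.leadingCoeff]
end

section
/- Let q be an odd prime power. Then the product of all a ∈ F_q^× such that both a and 4−a are nonsquares in F_q equals 2. -/
open Finset Polynomial

set_option linter.unusedSectionVars false
set_option maxHeartbeats 1000000

section Aux

variable {F : Type*} [Field F] [Fintype F] [DecidableEq F] {m : ℕ}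

lemma aux_pow_sq (h2m : 2 * m + 1 = Fintype.card F) (x : F) (hx : x ≠ 0) :
    (x ^ m) ^ 2 = 1 := by
  rw [← pow_mul]
  have : m * 2 = Fintype.card F - 1 := by omega
  rw [this]
  exact FiniteField.pow_card_sub_one_eq_one x hx

lemma aux_two_mul (h2m : 2 * m + 1 = Fintype.card F) : (2 : F) * (m : F) = -1 := by
  have h0 : ((2 * m + 1 : ℕ) : F) = 0 := by
    rw [h2m]; exact FiniteField.cast_card_eq_zero F
  push_cast at h0
  linear_combination h0

lemma aux_two_ne (h2m : 2 * m + 1 = Fintype.card F) : (2 : F) ≠ 0 := by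
  intro h
  have := aux_two_mul h2m
  rw [h, zero_mul] at this
  exact neg_ne_zero.mpr (one_ne_zero) this.symm

lemma aux_neg_one_ne (h2m : 2 * m + 1 = Fintype.card F) : (-1 : F) ≠ 1 := by
  intro h
  apply aux_two_ne h2m
  linear_combination -h

lemma aux_char (h2m : 2 * m + 1 = Fintype.card F) : ringChar F ≠ 2 := by
  intro h
  apply aux_two_ne h2m
  have := CharP.cast_eq_zero F (ringChar F)
  rwa [h] at this

lemma aux_m_ne (h2m : 2 * m + 1 = Fintype.card F) : m ≠ 0 := by
  have := Fintype.one_lt_card (α := F)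
  omega

lemma aux_dich (h2m : 2 * m + 1 = Fintype.card F) (x : F) (hx : x ≠ 0) :
    x ^ m = 1 ∨ x ^ m = -1 := by
  have h := aux_pow_sq h2m x hx
  rw [sq] at h
  exact mul_self_eq_one_iff.mp h

lemma aux_ne_zero_of_pow_neg_one (h2m : 2 * m + 1 = Fintype.card F) {x : F}
    (hx : x ^ m = -1) : x ≠ 0 := by
  intro h
  rw [h, zero_pow (aux_m_ne h2m)] at hx
  exact neg_ne_zero.mpr (one_ne_zero) hx.symm

lemma aux_nonsquare_iff (h2m : 2 * m + 1 = Fintype.card F) {a : F} (ha : a ≠ 0) :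
    ¬ IsSquare a ↔ a ^ m = -1 := by
  have hcard : Fintype.card F / 2 = m := by omega
  rw [FiniteField.isSquare_iff (aux_char h2m) ha, hcard]
  constructor
  · intro h
    rcases aux_dich h2m a ha with h1 | h1
    · exact absurd h1 h
    · exact h1
  · intro h h1
    rw [h] at h1
    exact aux_neg_one_ne h2m h1

lemma aux_four_pow (h2m : 2 * m + 1 = Fintype.card F) : (4 : F) ^ m = 1 := by
  have h4 : (4 : F) = 2 ^ 2 := by norm_num
  rw [h4, pow_right_comm]
  exact aux_pow_sq h2m 2 (aux_two_ne h2m)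

lemma aux_main_poly (h2m : 2 * m + 1 = Fintype.card F) :
    (univ.filter fun t : F => t ^ m = -1).card = m ∧
    (X : F[X]) ^ m + C 1 = ∏ t ∈ univ.filter (fun t : F => t ^ m = -1), (X - C t) := by
  have hm0 := aux_m_ne h2m
  set T := univ.filter fun t : F => t ^ m = -1 with hTdef
  set Q := univ.filter fun t : F => t ^ m = 1 with hQdef
  have hPm : ((X : F[X]) ^ m + C 1).Monic := monic_X_pow_add_C (1:F) hm0
  have hP : ((X : F[X]) ^ m + C 1) ≠ 0 := hPm.ne_zero
  have hQpoly : ((X : F[X]) ^ m - C 1) ≠ 0 := (monic_X_pow_sub_C (1:F) hm0).ne_zero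
  have hTle : T.val ≤ ((X : F[X]) ^ m + C 1).roots := by
    rw [Multiset.le_iff_subset T.nodup]
    intro t ht
    rw [Finset.mem_val, hTdef, mem_filter] at ht
    rw [mem_roots hP]
    simp [IsRoot, ht.2]
  have hQle : Q.val ≤ ((X : F[X]) ^ m - C 1).roots := by
    rw [Multiset.le_iff_subset Q.nodup]
    intro t ht
    rw [Finset.mem_val, hQdef, mem_filter] at ht
    rw [mem_roots hQpoly]
    simp [IsRoot, ht.2]
  have hTcard : T.card ≤ m := by
    have h1 := Multiset.card_le_card hTle
    have h2 := ((X : F[X]) ^ m + C 1).card_roots'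
    rw [natDegree_X_pow_add_C] at h2
    simpa using le_trans h1 h2
  have hQcard : Q.card ≤ m := by
    have h1 := Multiset.card_le_card hQle
    have h2 := ((X : F[X]) ^ m - C 1).card_roots'
    rw [natDegree_X_pow_sub_C] at h2
    simpa using le_trans h1 h2
  have hdisj : Disjoint T Q := by
    rw [Finset.disjoint_left]
    intro t htT htQ
    rw [hTdef, mem_filter] at htT
    rw [hQdef, mem_filter] at htQ
    exact aux_neg_one_ne h2m (htT.2.symm.trans htQ.2)
  have hunion : T ∪ Q = univ.filter (fun t : F => t ≠ 0) := by
    ext t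
    simp only [hTdef, hQdef, mem_union, mem_filter, mem_univ, true_and]
    constructor
    · rintro (h | h)
      · exact aux_ne_zero_of_pow_neg_one h2m h
      · intro h0
        rw [h0, zero_pow hm0] at h
        exact one_ne_zero h.symm
    · intro h
      exact (aux_dich h2m t h).symm
  have hcardU : (univ.filter (fun t : F => t ≠ 0)).card = 2 * m := by
    rw [filter_ne', card_erase_of_mem (mem_univ 0), card_univ]
    omega
  have hcards := Finset.card_union_of_disjoint hdisj
  rw [hunion, hcardU] at hcards
  have hTm : T.card = m := by omega
  refine ⟨hTm, ?_⟩
  have hrc : Multiset.card ((X : F[X]) ^ m + C 1).roots = m := by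
    have h1 := Multiset.card_le_card hTle
    have h2 := ((X : F[X]) ^ m + C 1).card_roots'
    rw [natDegree_X_pow_add_C] at h2
    simp only [Finset.card_val] at h1
    omega
  have heq := prod_multiset_X_sub_C_of_monic_of_roots_card_eq hPm
    (by rw [natDegree_X_pow_add_C]; exact hrc)
  have hcv : Multiset.card T.val = m := hTm
  have hrootsT : ((X : F[X]) ^ m + C 1).roots = T.val :=
    (Multiset.eq_of_le_of_card_le hTle (le_of_eq (hrc.trans hcv.symm))).symm
  rw [← heq, hrootsT]
  exact (Finset.prod_eq_multiset_prod _ _).symm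

lemma aux_eval (h2m : 2 * m + 1 = Fintype.card F) (y : F) :
    y ^ m + 1 = ∏ t ∈ univ.filter (fun t : F => t ^ m = -1), (y - t) := by
  have h := congrArg (eval y) (aux_main_poly h2m).2
  simpa [eval_prod] using h

lemma aux_prod_erase (h2m : 2 * m + 1 = Fintype.card F) (hodd : Odd m) :
    ∏ t ∈ (univ.filter fun t : F => t ^ m = -1).erase (-1), (t + 1) = (m : F) := by
  set T := univ.filter fun t : F => t ^ m = -1 with hTdef
  have hm1T : (-1 : F) ∈ T := by
    rw [hTdef, mem_filter]
    exact ⟨mem_univ _, hodd.neg_one_pow⟩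
  have hfac := (aux_main_poly h2m).2
  have hcardT := (aux_main_poly h2m).1
  have hsplit : (X : F[X]) ^ m + C 1 = (X - C (-1)) * ∏ t ∈ T.erase (-1), (X - C t) := by
    rw [hfac, ← Finset.mul_prod_erase T _ hm1T]
  have hG : (X - C (-1)) * (∑ i ∈ range m, (-X : F[X]) ^ i) = (X : F[X]) ^ m + C 1 := by
    have h := geom_sum_mul (-X : F[X]) m
    rw [hodd.neg_pow] at h
    have hC : (C (-1 : F) : F[X]) = -1 := by simp
    rw [hC]
    have hC1 : (C (1 : F) : F[X]) = 1 := by simp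
    rw [hC1]
    linear_combination -h
  have hXne : (X - C (-1 : F) : F[X]) ≠ 0 := (monic_X_sub_C _).ne_zero
  have hGR : (∑ i ∈ range m, (-X : F[X]) ^ i) = ∏ t ∈ T.erase (-1), (X - C t) :=
    mul_left_cancel₀ hXne (hG.trans hsplit)
  have hev : (m : F) = ∏ t ∈ T.erase (-1), (-1 - t) := by
    have h1 := congrArg (eval (-1)) hGR
    rw [eval_finset_sum, eval_prod] at h1
    simp only [eval_pow, eval_neg, eval_X, eval_sub, eval_C, neg_neg, one_pow] at h1
    rwa [Finset.sum_const, card_range, nsmul_eq_mul, mul_one] at h1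
  have hcarde : (T.erase (-1)).card = m - 1 := by
    rw [card_erase_of_mem hm1T, hcardT]
  have hprodneg : ∏ t ∈ T.erase (-1), (-1 - t) = ∏ t ∈ T.erase (-1), (t + 1) := by
    have hstep : ∏ t ∈ T.erase (-1), (-1 - t)
        = ∏ t ∈ T.erase (-1), (-1 : F) * (t + 1) :=
      Finset.prod_congr rfl fun t _ => by ring
    rw [hstep, Finset.prod_mul_distrib, Finset.prod_const, hcarde]
    have heven : Even (m - 1) := Nat.Odd.sub_odd hodd odd_one
    rw [heven.neg_one_pow, one_mul]
  rw [← hprodneg]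
  exact hev.symm

lemma aux_fiber (h2m : 2 * m + 1 = Fintype.card F) :
    ∏ a ∈ univ.filter (fun a : F => a ^ m = -1 ∧ (4 - a) ^ m = -(-1 : F) ^ m), a
      = ∏ t ∈ (univ.filter fun t : F => t ^ m = -1).erase (-1), (t + 1) := by
  have hm0 := aux_m_ne h2m
  have hneg1 := aux_neg_one_ne h2m
  have h2ne := aux_two_ne h2m
  set T' := (univ.filter fun t : F => t ^ m = -1).erase (-1) with hT'
  set U := univ.filter (fun a : F => a ^ m = -1 ∧ (4 - a) ^ m = -(-1 : F) ^ m) with hU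
  have hT'mem : ∀ t : F, t ∈ T' ↔ (t ^ m = -1 ∧ t ≠ -1) := by
    intro t
    rw [hT', mem_erase, mem_filter]
    simp only [mem_univ, true_and]
    tauto
  have hTfacts : ∀ t : F, t ∈ T' → t ≠ 0 ∧ t ≠ 1 ∧ t ≠ -1 ∧ t ^ m = -1 := by
    intro t ht
    rw [hT'mem] at ht
    refine ⟨aux_ne_zero_of_pow_neg_one h2m ht.1, ?_, ht.2, ht.1⟩
    intro h1
    rw [h1, one_pow] at ht
    exact hneg1 ht.1.symm
  have hmaps : ∀ t ∈ T', t + t⁻¹ + 2 ∈ U := by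
    intro t ht
    obtain ⟨ht0, ht1, htm1, htm⟩ := hTfacts t ht
    have htp1 : t + 1 ≠ 0 := fun h => htm1 (by linear_combination h)
    have htm1' : t - 1 ≠ 0 := fun h => ht1 (by linear_combination h)
    have hkey : t + t⁻¹ + 2 = (t + 1) ^ 2 * t⁻¹ := by
      field_simp
      ring
    have hkey2 : 4 - (t + t⁻¹ + 2) = -((t - 1) ^ 2 * t⁻¹) := by
      field_simp
      ring
    have hsq1 : ((t + 1) ^ m) ^ 2 = 1 := aux_pow_sq h2m _ htp1
    have hsq2 : ((t - 1) ^ m) ^ 2 = 1 := aux_pow_sq h2m _ htm1'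
    rw [hU, mem_filter]
    refine ⟨mem_univ _, ?_, ?_⟩
    · rw [hkey, mul_pow, inv_pow, htm, pow_right_comm, hsq1, inv_neg, inv_one]
      ring
    · rw [hkey2, neg_pow, mul_pow, inv_pow, htm, pow_right_comm, hsq2, inv_neg, inv_one]
      ring
  rw [← Finset.prod_fiberwise_of_maps_to hmaps (fun t => t + 1)]
  refine Finset.prod_congr rfl ?_
  intro a ha
  rw [hU, mem_filter] at ha
  obtain ⟨-, ham, hbm⟩ := ha
  have ha0 : a ≠ 0 := aux_ne_zero_of_pow_neg_one h2m ham
  have hsqneg : ((-1 : F) ^ m) ^ 2 = 1 := aux_pow_sq h2m _ (neg_ne_zero.mpr one_ne_zero)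
  have hdm : ((a - 2) ^ 2 - 4) ^ m = 1 := by
    have hd : (a - 2) ^ 2 - 4 = (-1) * a * (4 - a) := by ring
    rw [hd, mul_pow, mul_pow, ham, hbm]
    linear_combination hsqneg
  have hd0 : (a - 2) ^ 2 - 4 ≠ 0 := by
    intro h
    rw [h, zero_pow hm0] at hdm
    exact one_ne_zero hdm.symm
  have hdsq : IsSquare ((a - 2) ^ 2 - 4) := by
    rw [FiniteField.isSquare_iff (aux_char h2m) hd0]
    have hcard : Fintype.card F / 2 = m := by omega
    rw [hcard]
    exact hdm
  obtain ⟨c, hc⟩ := hdsq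
  set t0 := (a - 2 + c) / 2 with ht0def
  set t1 := (a - 2 - c) / 2 with ht1def
  have hprod : t0 * t1 = 1 := by
    rw [ht0def, ht1def]
    field_simp
    linear_combination hc
  have hsum : t0 + t1 = a - 2 := by
    rw [ht0def, ht1def]
    field_simp
    ring
  have ht0ne : t0 ≠ 0 := left_ne_zero_of_mul_eq_one hprod
  have ht1inv : t0⁻¹ = t1 := inv_eq_of_mul_eq_one_right hprod
  have hga : t0 + t0⁻¹ + 2 = a := by
    rw [ht1inv]
    linear_combination hsum
  have ht0m1 : t0 ≠ -1 := by
    intro h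
    rw [h, inv_neg, inv_one] at hga
    apply ha0
    linear_combination -hga
  have ht0p1 : t0 + 1 ≠ 0 := fun h => ht0m1 (by linear_combination h)
  have ht0m : t0 ^ m = -1 := by
    have hkey : a = (t0 + 1) ^ 2 * t0⁻¹ := by
      rw [← hga]
      field_simp
      ring
    have hsq1 : ((t0 + 1) ^ m) ^ 2 = 1 := aux_pow_sq h2m _ ht0p1
    have h1 : a ^ m = (t0 ^ m)⁻¹ := by
      rw [hkey, mul_pow, inv_pow, pow_right_comm, hsq1, one_mul]
    rw [ham] at h1
    rw [eq_comm, inv_eq_iff_eq_inv, inv_neg, inv_one] at h1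
    exact h1
  have ht0one : t0 ≠ 1 := by
    intro h
    rw [h, one_pow] at ht0m
    exact hneg1 ht0m.symm
  have ht0T : t0 ∈ T' := (hT'mem t0).mpr ⟨ht0m, ht0m1⟩
  have htinvm : (t0⁻¹) ^ m = -1 := by
    rw [inv_pow, ht0m, inv_neg, inv_one]
  have htinvm1 : t0⁻¹ ≠ -1 := by
    intro h
    apply ht0m1
    rw [← inv_inv t0, h, inv_neg, inv_one]
  have htinvT : t0⁻¹ ∈ T' := (hT'mem _).mpr ⟨htinvm, htinvm1⟩
  have ht0inv_ne : t0 ≠ t0⁻¹ := by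
    intro h
    have h1 : t0 * t0 = 1 := by
      nth_rewrite 2 [h]
      exact mul_inv_cancel₀ ht0ne
    rcases mul_self_eq_one_iff.mp h1 with h2 | h2
    · exact ht0one h2
    · exact ht0m1 h2
  have hfiber : T'.filter (fun t => t + t⁻¹ + 2 = a) = {t0, t0⁻¹} := by
    ext t
    simp only [mem_filter, mem_insert, mem_singleton]
    constructor
    · rintro ⟨htT, hgt⟩
      obtain ⟨htne, -, -, -⟩ := hTfacts t htT
      have h5 : t * t + 1 + 2 * t = a * t := by
        rw [← hgt]
        field_simp
        try ring
      have h6 : (t - t0) * (t - t0⁻¹) = 0 := by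
        rw [ht1inv]
        linear_combination h5 - t * hsum + hprod
      rcases mul_eq_zero.mp h6 with h7 | h7
      · left; linear_combination h7
      · right; linear_combination h7
    · rintro (rfl | rfl)
      · exact ⟨ht0T, hga⟩
      · refine ⟨htinvT, ?_⟩
        rw [inv_inv]
        linear_combination hga
  rw [hfiber, Finset.prod_pair ht0inv_ne]
  have hexp : (t0 + 1) * (t0⁻¹ + 1) = t0 + t0⁻¹ + 2 := by
    field_simp
    ring
  rw [hexp, hga]

end Aux

theorem stmt16 (F : Type*) [Field F] [Fintype F] (hq : Odd (Fintype.card F)) :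
    ∏ᶠ a ∈ {a : F | a ≠ 0 ∧ ¬ IsSquare a ∧ ¬ IsSquare (4 - a)}, a = 2 := by
  classical
  obtain ⟨k, hk⟩ := hq
  have h2m : 2 * k + 1 = Fintype.card F := by omega
  have hm0 := aux_m_ne h2m
  have hneg1 := aux_neg_one_ne h2m
  have hsq4 : IsSquare (4 : F) := ⟨2, by norm_num⟩
  have hset : {a : F | a ≠ 0 ∧ ¬ IsSquare a ∧ ¬ IsSquare (4 - a)}
      = ↑(univ.filter fun a : F => a ≠ 0 ∧ ¬ IsSquare a ∧ ¬ IsSquare (4 - a)) := by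
    ext a
    simp
  rw [hset, finprod_mem_coe_finset]
  have hSchar : ∀ a : F, (a ≠ 0 ∧ ¬ IsSquare a ∧ ¬ IsSquare (4 - a)) ↔
      (a ^ k = -1 ∧ (4 - a) ^ k = -1) := by
    intro a
    constructor
    · rintro ⟨h0, hA, hB⟩
      have h4a : (4 : F) - a ≠ 0 := by
        intro h
        apply hA
        have ha4 : a = 4 := by linear_combination -h
        rw [ha4]
        exact hsq4
      exact ⟨(aux_nonsquare_iff h2m h0).1 hA, (aux_nonsquare_iff h2m h4a).1 hB⟩
    · rintro ⟨hA, hB⟩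
      have h0 := aux_ne_zero_of_pow_neg_one h2m hA
      have h4a := aux_ne_zero_of_pow_neg_one h2m hB
      exact ⟨h0, (aux_nonsquare_iff h2m h0).2 hA, (aux_nonsquare_iff h2m h4a).2 hB⟩
  rcases aux_dich h2m (-1) (neg_ne_zero.mpr one_ne_zero) with h1 | h1
  · -- case (-1)^k = 1
    have hfilter : (univ.filter fun a : F => a ≠ 0 ∧ ¬ IsSquare a ∧ ¬ IsSquare (4 - a))
        = univ.filter (fun a : F => a ^ k = -1 ∧ (4 - a) ^ k = -(-1 : F) ^ k) := by
      ext a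
      simp only [mem_filter, mem_univ, true_and]
      rw [hSchar a, h1]
    rw [hfilter, aux_fiber h2m]
    have hnotmem : (-1 : F) ∉ (univ.filter fun t : F => t ^ k = -1) := by
      simp only [mem_filter, mem_univ, true_and]
      rw [h1]
      exact fun h => hneg1 h.symm
    rw [Finset.erase_eq_of_notMem hnotmem]
    have heval := aux_eval h2m (-1 : F)
    rw [h1] at heval
    have hcardT := (aux_main_poly (F := F) h2m).1
    have hstep : ∏ t ∈ univ.filter (fun t : F => t ^ k = -1), (t + 1)
        = ∏ t ∈ univ.filter (fun t : F => t ^ k = -1), (-1 : F) * (-1 - t) :=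
      Finset.prod_congr rfl fun t _ => by ring
    rw [hstep, Finset.prod_mul_distrib, Finset.prod_const, hcardT, h1, one_mul, ← heval]
    norm_num
  · -- case (-1)^k = -1
    have hodd : Odd k := by
      rcases Nat.even_or_odd k with he | ho
      · rw [he.neg_one_pow] at h1
        exact absurd h1.symm hneg1
      · exact ho
    set T := univ.filter fun t : F => t ^ k = -1 with hT
    have hsplit := Finset.prod_filter_mul_prod_filter_not T
      (fun a : F => (4 - a) ^ k = 1) (fun a => a)
    have hUfilter : T.filter (fun a : F => (4 - a) ^ k = 1)
        = univ.filter (fun a : F => a ^ k = -1 ∧ (4 - a) ^ k = -(-1 : F) ^ k) := by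
      rw [hT, filter_filter]
      ext a
      simp only [mem_filter, mem_univ, true_and]
      rw [h1, neg_neg]
    have hSfilter : (univ.filter fun a : F => a ≠ 0 ∧ ¬ IsSquare a ∧ ¬ IsSquare (4 - a))
        = T.filter (fun a : F => ¬ ((4 - a) ^ k = 1)) := by
      rw [hT, filter_filter]
      ext a
      simp only [mem_filter, mem_univ, true_and]
      rw [hSchar a]
      constructor
      · rintro ⟨hA, hB⟩
        refine ⟨hA, ?_⟩
        rw [hB]
        exact fun h => hneg1 h
      · rintro ⟨hA, hB⟩
        refine ⟨hA, ?_⟩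
        have h4a : (4 : F) - a ≠ 0 := by
          intro h
          have ha4 : a = 4 := by linear_combination -h
          rw [ha4, aux_four_pow h2m] at hA
          exact hneg1 hA.symm
        rcases aux_dich h2m _ h4a with hc | hc
        · exact absurd hc hB
        · exact hc
    have hprodT : ∏ t ∈ T, t = -1 := by
      have heval := aux_eval h2m (0 : F)
      rw [zero_pow hm0, zero_add] at heval
      have hstep : ∏ t ∈ T, ((0 : F) - t) = ∏ t ∈ T, (-1 : F) * t :=
        Finset.prod_congr rfl fun t _ => by ring
      rw [hstep, Finset.prod_mul_distrib, Finset.prod_const,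
        (aux_main_poly (F := F) h2m).1, h1] at heval
      linear_combination heval
    have hprodU : ∏ a ∈ T.filter (fun a : F => (4 - a) ^ k = 1), a = (k : F) := by
      rw [hUfilter, aux_fiber h2m, aux_prod_erase h2m hodd]
    rw [hSfilter]
    have hmF : (k : F) ≠ 0 := by
      intro h
      have h2 := aux_two_mul h2m
      rw [h, mul_zero] at h2
      exact neg_ne_zero.mpr one_ne_zero h2.symm
    have h2m' : (k : F) * 2 = -1 := by
      have h2 := aux_two_mul h2m
      linear_combination h2
    rw [hprodU, hprodT] at hsplit
    apply mul_left_cancel₀ hmF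
    rw [hsplit, h2m']
end
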